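/- arXiv:1905.09081 — 6 statements merged into one kernel-verified Lean document; each statement's English description precedes it below -/
import Mathlib

section
/- Let (S, B) be an STS(3w+3) on S = A ∪ B ∪ C ∪ D (disjoint union, |A|=|B|=|C|=w, |D|=3) containing a sub-TD(3, w) with groups A, B, C and block set T. Then B \ T partitions into three sets B_A, B_B, B_C supported on A∪D, B∪D, C∪D respectively; one of them is the block set of an STS(w+3), and each of the other two becomes the block set of an STS(w+3) after adding the triple D. In particular w + 3 ≡ 1 or 3 (mod 6). -/
variable {α : Type*} [DecidableEq α]

/-- `(S, B)` is a Steiner triple system: blocks are 3-subsets of `S`,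
and every pair of distinct points of `S` lies in exactly one block. -/
def IsSTS (S : Finset α) (B : Finset (Finset α)) : Prop :=
  (∀ b ∈ B, b ⊆ S ∧ b.card = 3) ∧
  ∀ p ∈ S, ∀ q ∈ S, p ≠ q → ∃! b, b ∈ B ∧ p ∈ b ∧ q ∈ b

/-- `T` is the block set of a transversal design with the three groups `A`, `B`, `C`:
every block meets every group in exactly one point, and every two points in
different groups meet in exactly one block. -/
def IsTD3 (A B C : Finset α) (T : Finset (Finset α)) : Prop :=
  (∀ b ∈ T, b ⊆ A ∪ B ∪ C ∧ (b ∩ A).card = 1 ∧ (b ∩ B).card = 1 ∧ (b ∩ C).card = 1) ∧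
  ∀ p q : α, ((p ∈ A ∧ q ∈ B) ∨ (p ∈ A ∧ q ∈ C) ∨ (p ∈ B ∧ q ∈ C)) →
    ∃! b, b ∈ T ∧ p ∈ b ∧ q ∈ b

/-- `C` is an almost-sub-STS of the block set `Bl`, with support `S0` and missing
triple `T`: `C ⊆ Bl` and `C = C' \ {T}` for some STS `(S0, C')` with `T ∈ C'`. -/
def IsAlmostSubSTS (Bl : Finset (Finset α)) (S0 : Finset α)
    (C : Finset (Finset α)) (T : Finset α) : Prop :=
  C ⊆ Bl ∧ T ∉ C ∧ IsSTS S0 (insert T C)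

lemma even_count (S : Finset α) (Bl : Finset (Finset α)) (hSTS : IsSTS S Bl)
    (d : α) (hd : d ∈ S) (M : Finset α) (hM : M ⊆ S) (hdM : d ∉ M)
    (hsplit : ∀ b ∈ Bl, d ∈ b → (b.erase d ⊆ M) ∨ (∀ x ∈ b.erase d, x ∉ M)) :
    Even M.card := by
  classical
  obtain ⟨hb, hpair⟩ := hSTS
  set F := Bl.filter (fun b => d ∈ b ∧ ((b.erase d) ∩ M).Nonempty) with hF
  have key : M = F.biUnion (fun b => b.erase d) := by
    ext x
    simp only [Finset.mem_biUnion, hF, Finset.mem_filter]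
    constructor
    · intro hx
      have hxS : x ∈ S := hM hx
      have hxd : x ≠ d := fun h => hdM (h ▸ hx)
      obtain ⟨b, ⟨hbBl, hdb, hxb⟩, -⟩ := hpair d hd x hxS (Ne.symm hxd)
      exact ⟨b, ⟨hbBl, hdb, ⟨x, Finset.mem_inter.2 ⟨Finset.mem_erase.2 ⟨hxd, hxb⟩, hx⟩⟩⟩,
        Finset.mem_erase.2 ⟨hxd, hxb⟩⟩
    · rintro ⟨b, ⟨hbBl, hdb, ⟨y, hy⟩⟩, hxb⟩
      rcases hsplit b hbBl hdb with h | h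
      · exact h hxb
      · obtain ⟨hy1, hy2⟩ := Finset.mem_inter.1 hy
        exact absurd hy2 (h y hy1)
  have hdisj : ∀ x ∈ F, ∀ y ∈ F, x ≠ y → Disjoint (x.erase d) (y.erase d) := by
    intro x hx y hy hxy
    rw [Finset.disjoint_left]
    intro q hqx hqy
    obtain ⟨hxBl, hdx, -⟩ := Finset.mem_filter.1 hx
    obtain ⟨hyBl, hdy, -⟩ := Finset.mem_filter.1 hy
    obtain ⟨hqd, hqxb⟩ := Finset.mem_erase.1 hqx
    obtain ⟨-, hqyb⟩ := Finset.mem_erase.1 hqy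
    have hqS : q ∈ S := (hb x hxBl).1 hqxb
    obtain ⟨u, -, hu⟩ := hpair d hd q hqS (Ne.symm hqd)
    exact hxy ((hu x ⟨hxBl, hdx, hqxb⟩).trans (hu y ⟨hyBl, hdy, hqyb⟩).symm)
  have hcard : M.card = ∑ b ∈ F, (b.erase d).card := by
    rw [key, Finset.card_biUnion hdisj]
  have h2 : ∀ b ∈ F, (b.erase d).card = 2 := by
    intro b hbF
    obtain ⟨hbBl, hdb, -⟩ := Finset.mem_filter.1 hbF
    rw [Finset.card_erase_of_mem hdb, (hb b hbBl).2]
  rw [hcard, Finset.sum_congr rfl h2, Finset.sum_const, smul_eq_mul]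
  exact ⟨F.card, by ring⟩


lemma sts_card_mod (S0 : Finset α) (Bl : Finset (Finset α)) (hSTS : IsSTS S0 Bl)
    (hne : S0.Nonempty) : S0.card % 6 = 1 ∨ S0.card % 6 = 3 := by
  classical
  obtain ⟨hb, hpair⟩ := hSTS
  obtain ⟨p, hp⟩ := hne
  -- odd
  have hodd : S0.card % 2 = 1 := by
    have := even_count S0 Bl ⟨hb, hpair⟩ p hp (S0.erase p) (Finset.erase_subset _ _)
      (Finset.notMem_erase _ _)
      (by
        intro b hbBl hpb
        left
        intro x hx
        obtain ⟨hxp, hxb⟩ := Finset.mem_erase.1 hx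
        exact Finset.mem_erase.2 ⟨hxp, (hb b hbBl).1 hxb⟩)
    rw [Finset.card_erase_of_mem hp] at this
    obtain ⟨k, hk⟩ := this
    have h1 : 1 ≤ S0.card := Finset.card_pos.2 ⟨p, hp⟩
    omega
  -- pair count
  have hpairs : S0.card * (S0.card - 1) = 6 * Bl.card := by
    have key : Finset.powersetCard 2 S0 = Bl.biUnion (fun b => Finset.powersetCard 2 b) := by
      ext s
      simp only [Finset.mem_powersetCard, Finset.mem_biUnion]
      constructor
      · rintro ⟨hsub, hcard⟩
        obtain ⟨x, y, hxy, rfl⟩ := Finset.card_eq_two.1 hcard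
        have hx : x ∈ S0 := hsub (by simp)
        have hy : y ∈ S0 := hsub (by simp)
        obtain ⟨b, ⟨hbBl, hxb, hyb⟩, -⟩ := hpair x hx y hy hxy
        exact ⟨b, hbBl, by intro z hz; simp at hz; rcases hz with rfl | rfl <;> assumption,
          Finset.card_eq_two.2 ⟨x, y, hxy, rfl⟩⟩
      · rintro ⟨b, hbBl, hsub, hcard⟩
        exact ⟨hsub.trans (hb b hbBl).1, hcard⟩
    have hdisj : ∀ x ∈ Bl, ∀ y ∈ Bl, x ≠ y →
        Disjoint (Finset.powersetCard 2 x) (Finset.powersetCard 2 y) := by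
      intro x hx y hy hxy
      rw [Finset.disjoint_left]
      intro s hsx hsy
      obtain ⟨hsx1, hsc⟩ := Finset.mem_powersetCard.1 hsx
      obtain ⟨hsy1, -⟩ := Finset.mem_powersetCard.1 hsy
      obtain ⟨u, v, huv, rfl⟩ := Finset.card_eq_two.1 hsc
      have huS : u ∈ S0 := (hb x hx).1 (hsx1 (by simp))
      have hvS : v ∈ S0 := (hb x hx).1 (hsx1 (by simp))
      obtain ⟨c, -, hc⟩ := hpair u huS v hvS huv
      exact hxy ((hc x ⟨hx, hsx1 (by simp), hsx1 (by simp)⟩).trans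
        (hc y ⟨hy, hsy1 (by simp), hsy1 (by simp)⟩).symm)
    have hcardeq : (Finset.powersetCard 2 S0).card = 3 * Bl.card := by
      rw [key, Finset.card_biUnion hdisj]
      have : ∀ b ∈ Bl, (Finset.powersetCard 2 b).card = 3 := by
        intro b hbBl
        rw [Finset.card_powersetCard, (hb b hbBl).2]; rfl
      rw [Finset.sum_congr rfl this, Finset.sum_const, smul_eq_mul, Nat.mul_comm]
    rw [Finset.card_powersetCard, Nat.choose_two_right] at hcardeq
    have heven : Even (S0.card * (S0.card - 1)) := Nat.even_mul_pred_self _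
    obtain ⟨k, hk⟩ := heven
    omega
  -- conclude
  have hmod : S0.card * (S0.card - 1) % 6 = (S0.card % 6) * ((S0.card - 1) % 6) % 6 :=
    Nat.mul_mod _ _ _
  have h1 : 1 ≤ S0.card := Finset.card_pos.2 ⟨p, hp⟩
  have h5 : S0.card % 6 = 1 ∨ S0.card % 6 = 3 ∨ S0.card % 6 = 5 := by omega
  rcases h5 with h | h | h
  · exact Or.inl h
  · exact Or.inr h
  · exfalso
    have h4 : (S0.card - 1) % 6 = 4 := by omega
    rw [h, h4] at hmod
    omega

lemma classify (S : Finset α) (Bl T : Finset (Finset α)) (A B C D : Finset α)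
    (hS : A ∪ B ∪ C ∪ D = S)
    (hAB : Disjoint A B) (hAC : Disjoint A C) (hBC : Disjoint B C)
    (hSTS : IsSTS S Bl) (hsub : T ⊆ Bl) (hTD : IsTD3 A B C T) :
    ∀ b ∈ Bl, b ∉ T → b ⊆ A ∪ D ∨ b ⊆ B ∪ D ∨ b ⊆ C ∪ D := by
  intro b hb hbT
  have hbS : b ⊆ S := (hSTS.1 b hb).1
  have hmeet : ∀ p q, p ∈ b → q ∈ b →
      ((p ∈ A ∧ q ∈ B) ∨ (p ∈ A ∧ q ∈ C) ∨ (p ∈ B ∧ q ∈ C)) → False := by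
    intro p q hpb hqb hpq
    have hne : p ≠ q := by
      rintro rfl
      rcases hpq with ⟨h1, h2⟩ | ⟨h1, h2⟩ | ⟨h1, h2⟩
      exacts [Finset.disjoint_left.1 hAB h1 h2, Finset.disjoint_left.1 hAC h1 h2,
        Finset.disjoint_left.1 hBC h1 h2]
    obtain ⟨t, ⟨htT, hpt, hqt⟩, -⟩ := hTD.2 p q hpq
    obtain ⟨u, -, hu⟩ := hSTS.2 p (hbS hpb) q (hbS hqb) hne
    have hbt : b = t := (hu b ⟨hb, hpb, hqb⟩).trans (hu t ⟨hsub htT, hpt, hqt⟩).symm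
    exact hbT (hbt ▸ htT)
  by_cases hA : ∀ x ∈ b, x ∉ A
  · by_cases hB2 : ∀ x ∈ b, x ∉ B
    · right; right
      intro x hx
      have hxS := hbS hx; rw [← hS] at hxS
      rcases Finset.mem_union.1 hxS with h | h2
      · rcases Finset.mem_union.1 h with h' | h2
        · rcases Finset.mem_union.1 h' with h'' | h2
          · exact absurd h'' (hA x hx)
          · exact absurd h2 (hB2 x hx)
        · exact Finset.mem_union_left _ h2
      · exact Finset.mem_union_right _ h2
    · push_neg at hB2
      obtain ⟨p, hpb, hpB⟩ := hB2
      right; left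
      intro x hx
      have hxS := hbS hx; rw [← hS] at hxS
      rcases Finset.mem_union.1 hxS with h | h2
      · rcases Finset.mem_union.1 h with h' | h2
        · rcases Finset.mem_union.1 h' with h'' | h2
          · exact absurd h'' (hA x hx)
          · exact Finset.mem_union_left _ h2
        · exact absurd (hmeet p x hpb hx (Or.inr (Or.inr ⟨hpB, h2⟩))) (fun h => h)
      · exact Finset.mem_union_right _ h2
  · push_neg at hA
    obtain ⟨p, hpb, hpA⟩ := hA
    left
    intro x hx
    have hxS := hbS hx; rw [← hS] at hxS
    rcases Finset.mem_union.1 hxS with h | h2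
    · rcases Finset.mem_union.1 h with h' | h2
      · rcases Finset.mem_union.1 h' with h'' | h2
        · exact Finset.mem_union_left _ h''
        · exact absurd (hmeet p x hpb hx (Or.inl ⟨hpA, h2⟩)) (fun h => h)
      · exact absurd (hmeet p x hpb hx (Or.inr (Or.inl ⟨hpA, h2⟩))) (fun h => h)
    · exact Finset.mem_union_right _ h2

lemma parity_contra (S : Finset α) (Bl : Finset (Finset α)) (hSTS : IsSTS S Bl)
    (D G K : Finset α) (w : ℕ) (hG : G.card = w) (hK : K.card = w)
    (hGS : G ⊆ S) (hKS : K ⊆ S) (hDS : D ⊆ S) (hD3 : D.card = 3)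
    (hGD : Disjoint G D) (hKD : Disjoint K D)
    (hclG : ∀ b ∈ Bl, (b ∩ D).Nonempty → (b ∩ G).Nonempty → b ⊆ G ∪ D)
    (hclK : ∀ b ∈ Bl, (b ∩ D).Nonempty → (b ∩ K).Nonempty → b ⊆ K ∪ D)
    (d e f : α) (hdD : d ∈ D) (heD : e ∈ D) (hfD : f ∈ D)
    (hde : d ≠ e) (hdf : d ≠ f) (hef : e ≠ f)
    (be bf : Finset α) (hbeBl : be ∈ Bl) (hbfBl : bf ∈ Bl)
    (hdbe : d ∈ be) (hebe : e ∈ be) (hdbf : d ∈ bf) (hfbf : f ∈ bf)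
    (xe xf : α) (hxebe : xe ∈ be) (hxfbf : xf ∈ bf) (hxeD : xe ∉ D) (hxfD : xf ∉ D)
    (hxeG : xe ∈ G) (hxeK : xe ∉ K) (hxfG : xf ∉ G) (hxfK : xf ∉ K) : False := by
  classical
  have hdS : d ∈ S := hDS hdD
  have huniq : ∀ (p q : α) (b b' : Finset α), b ∈ Bl → b' ∈ Bl → p ≠ q →
      p ∈ b → q ∈ b → p ∈ b' → q ∈ b' → b = b' := by
    intro p q b b' hb hb' hne hpb hqb hpb' hqb'
    obtain ⟨u, -, hu⟩ := hSTS.2 p ((hSTS.1 b hb).1 hpb) q ((hSTS.1 b hb).1 hqb) hne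
    exact (hu b ⟨hb, hpb, hqb⟩).trans (hu b' ⟨hb', hpb', hqb'⟩).symm
  have hDeq : D = {d, e, f} := by
    refine (Finset.eq_of_subset_of_card_le ?_ ?_).symm
    · intro x hx
      simp only [Finset.mem_insert, Finset.mem_singleton] at hx
      rcases hx with rfl | rfl | rfl <;> assumption
    · rw [hD3, Finset.card_eq_three.2 ⟨d, e, f, hde, hdf, hef, rfl⟩]
  have hxed : xe ≠ d := fun h => hxeD (h ▸ hdD)
  have hxee : xe ≠ e := fun h => hxeD (h ▸ heD)
  have hxfd : xf ≠ d := fun h => hxfD (h ▸ hdD)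
  have hxff : xf ≠ f := fun h => hxfD (h ▸ hfD)
  have hbe3 : be = {d, e, xe} := by
    refine (Finset.eq_of_subset_of_card_le ?_ ?_).symm
    · intro x hx
      simp only [Finset.mem_insert, Finset.mem_singleton] at hx
      rcases hx with rfl | rfl | rfl <;> assumption
    · rw [(hSTS.1 be hbeBl).2,
        Finset.card_eq_three.2 ⟨d, e, xe, hde, Ne.symm hxed, Ne.symm hxee, rfl⟩]
  have hbf3 : bf = {d, f, xf} := by
    refine (Finset.eq_of_subset_of_card_le ?_ ?_).symm
    · intro x hx
      simp only [Finset.mem_insert, Finset.mem_singleton] at hx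
      rcases hx with rfl | rfl | rfl <;> assumption
    · rw [(hSTS.1 bf hbfBl).2,
        Finset.card_eq_three.2 ⟨d, f, xf, hdf, Ne.symm hxfd, Ne.symm hxff, rfl⟩]
  have hbfG : ∀ y ∈ bf, y ∉ G := by
    intro y hy hyG
    rw [hbf3] at hy
    simp only [Finset.mem_insert, Finset.mem_singleton] at hy
    rcases hy with rfl | rfl | rfl
    · exact Finset.disjoint_left.1 hGD hyG hdD
    · exact Finset.disjoint_left.1 hGD hyG hfD
    · exact hxfG hyG
  have hbeK : ∀ y ∈ be, y ∉ K := by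
    intro y hy hyK
    rw [hbe3] at hy
    simp only [Finset.mem_insert, Finset.mem_singleton] at hy
    rcases hy with rfl | rfl | rfl
    · exact Finset.disjoint_left.1 hKD hyK hdD
    · exact Finset.disjoint_left.1 hKD hyK heD
    · exact hxeK hyK
  have hbfK : ∀ y ∈ bf, y ∉ K := by
    intro y hy hyK
    rw [hbf3] at hy
    simp only [Finset.mem_insert, Finset.mem_singleton] at hy
    rcases hy with rfl | rfl | rfl
    · exact Finset.disjoint_left.1 hKD hyK hdD
    · exact Finset.disjoint_left.1 hKD hyK hfD
    · exact hxfK hyK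
  have hmemD : ∀ x ∈ D, x = d ∨ x = e ∨ x = f := by
    intro x hx
    rw [hDeq] at hx
    simpa using hx
  -- first even count : M = insert e G
  have heG : e ∉ G := fun h => Finset.disjoint_left.1 hGD h heD
  have h1 : Even (insert e G).card := by
    apply even_count S Bl hSTS d hdS
    · intro x hx
      rcases Finset.mem_insert.1 hx with rfl | hxG
      exacts [hDS heD, hGS hxG]
    · intro h
      rcases Finset.mem_insert.1 h with h' | h'
      exacts [hde h', Finset.disjoint_left.1 hGD h' hdD]
    · intro b hbBl hdb
      by_cases hbG : (b ∩ G).Nonempty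
      · left
        have hbsub := hclG b hbBl ⟨d, Finset.mem_inter.2 ⟨hdb, hdD⟩⟩ hbG
        intro x hx
        obtain ⟨hxd, hxb⟩ := Finset.mem_erase.1 hx
        rcases Finset.mem_union.1 (hbsub hxb) with hxG | hxD
        · exact Finset.mem_insert_of_mem hxG
        · rcases hmemD x hxD with rfl | rfl | rfl
          · exact absurd rfl hxd
          · exact Finset.mem_insert_self _ _
          · exfalso
            have hbbf : b = bf := huniq d x b bf hbBl hbfBl hdf hdb hxb hdbf hfbf
            obtain ⟨y, hy⟩ := hbG
            obtain ⟨hy1, hy2⟩ := Finset.mem_inter.1 hy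
            exact hbfG y (hbbf ▸ hy1) hy2
      · right
        intro x hx hxM
        obtain ⟨hxd, hxb⟩ := Finset.mem_erase.1 hx
        rcases Finset.mem_insert.1 hxM with rfl | hxG
        · have hbbe : b = be := huniq d x b be hbBl hbeBl hde hdb hxb hdbe hebe
          exact hbG ⟨xe, Finset.mem_inter.2 ⟨hbbe ▸ hxebe, hxeG⟩⟩
        · exact hbG ⟨x, Finset.mem_inter.2 ⟨hxb, hxG⟩⟩
  -- second even count : M = K
  have h2 : Even K.card := by
    apply even_count S Bl hSTS d hdS K hKS
    · exact fun h => Finset.disjoint_left.1 hKD h hdD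
    · intro b hbBl hdb
      by_cases hbK : (b ∩ K).Nonempty
      · left
        have hbsub := hclK b hbBl ⟨d, Finset.mem_inter.2 ⟨hdb, hdD⟩⟩ hbK
        intro x hx
        obtain ⟨hxd, hxb⟩ := Finset.mem_erase.1 hx
        rcases Finset.mem_union.1 (hbsub hxb) with hxK | hxD
        · exact hxK
        · exfalso
          rcases hmemD x hxD with rfl | rfl | rfl
          · exact hxd rfl
          · have hbbe : b = be := huniq d x b be hbBl hbeBl hde hdb hxb hdbe hebe
            obtain ⟨y, hy⟩ := hbK
            obtain ⟨hy1, hy2⟩ := Finset.mem_inter.1 hy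
            exact hbeK y (hbbe ▸ hy1) hy2
          · have hbbf : b = bf := huniq d x b bf hbBl hbfBl hdf hdb hxb hdbf hfbf
            obtain ⟨y, hy⟩ := hbK
            obtain ⟨hy1, hy2⟩ := Finset.mem_inter.1 hy
            exact hbfK y (hbbf ▸ hy1) hy2
      · right
        intro x hx hxK
        exact hbK ⟨x, Finset.mem_inter.2 ⟨(Finset.mem_erase.1 hx).2, hxK⟩⟩
  rw [Finset.card_insert_of_notMem heG, hG] at h1
  rw [hK] at h2
  obtain ⟨a, ha⟩ := h1
  obtain ⟨b, hb⟩ := h2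
  omega

theorem sts_3w3_decomposition (S : Finset α) (Bl T : Finset (Finset α))
    (A B C D : Finset α) (w : ℕ)
    (hS : A ∪ B ∪ C ∪ D = S)
    (hA : A.card = w) (hB : B.card = w) (hC : C.card = w) (hD : D.card = 3)
    (hAB : Disjoint A B) (hAC : Disjoint A C) (hAD : Disjoint A D)
    (hBC : Disjoint B C) (hBD : Disjoint B D) (hCD : Disjoint C D)
    (hSTS : IsSTS S Bl) (hsub : T ⊆ Bl) (hTD : IsTD3 A B C T) :
    (∃ BA BB BC : Finset (Finset α),
      Bl = T ∪ BA ∪ BB ∪ BC ∧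
      (∀ b ∈ BA, b ⊆ A ∪ D) ∧ (∀ b ∈ BB, b ⊆ B ∪ D) ∧ (∀ b ∈ BC, b ⊆ C ∪ D) ∧
      ((IsSTS (A ∪ D) BA ∧ IsSTS (B ∪ D) (insert D BB) ∧ IsSTS (C ∪ D) (insert D BC)) ∨
       (IsSTS (B ∪ D) BB ∧ IsSTS (A ∪ D) (insert D BA) ∧ IsSTS (C ∪ D) (insert D BC)) ∨
       (IsSTS (C ∪ D) BC ∧ IsSTS (A ∪ D) (insert D BA) ∧ IsSTS (B ∪ D) (insert D BB)))) ∧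
    ((w + 3) % 6 = 1 ∨ (w + 3) % 6 = 3) := by
  classical
  have hDS : D ⊆ S := by
    rw [← hS]; exact Finset.subset_union_right
  have hgrpS : ∀ G : Finset α, (G = A ∨ G = B ∨ G = C) → G ⊆ S := by
    rintro G (rfl | rfl | rfl) <;> rw [← hS] <;> intro x hx <;>
      simp [Finset.mem_union, hx]
  have hgrpD : ∀ G : Finset α, (G = A ∨ G = B ∨ G = C) → Disjoint G D := by
    rintro G (rfl | rfl | rfl) <;> assumption
  have hgrpcard : ∀ G : Finset α, (G = A ∨ G = B ∨ G = C) → G.card = w := by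
    rintro G (rfl | rfl | rfl) <;> assumption
  have hcl := classify S Bl T A B C D hS hAB hAC hBC hSTS hsub hTD
  have huniq : ∀ (p q : α) (b b' : Finset α), b ∈ Bl → b' ∈ Bl → p ≠ q →
      p ∈ b → q ∈ b → p ∈ b' → q ∈ b' → b = b' := by
    intro p q b b' hb hb' hne hpb hqb hpb' hqb'
    obtain ⟨u, -, hu⟩ := hSTS.2 p ((hSTS.1 b hb).1 hpb) q ((hSTS.1 b hb).1 hqb) hne
    exact (hu b ⟨hb, hpb, hqb⟩).trans (hu b' ⟨hb', hpb', hqb'⟩).symm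
  have hTnoD : ∀ b ∈ T, ∀ x ∈ b, x ∉ D := by
    intro b hb x hxb hxD
    have hx := (hTD.1 b hb).1 hxb
    rcases Finset.mem_union.1 hx with h | h
    · rcases Finset.mem_union.1 h with h' | h'
      · exact Finset.disjoint_left.1 hAD h' hxD
      · exact Finset.disjoint_left.1 hBD h' hxD
    · exact Finset.disjoint_left.1 hCD h hxD
  have hnotT : ∀ G : Finset α, (G = A ∨ G = B ∨ G = C) → ∀ b ∈ T, ∀ p q : α,
      p ∈ b → q ∈ b → p ≠ q → p ∈ G → q ∈ G ∪ D → False := by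
    intro G hG b hb p q hpb hqb hne hpG hq
    rcases Finset.mem_union.1 hq with hqG | hqD
    · have hcard1 : (b ∩ G).card = 1 := by
        rcases hG with rfl | rfl | rfl
        exacts [(hTD.1 b hb).2.1, (hTD.1 b hb).2.2.1, (hTD.1 b hb).2.2.2]
      have hsub2 : ({p, q} : Finset α) ⊆ b ∩ G := by
        intro x hx
        simp only [Finset.mem_insert, Finset.mem_singleton] at hx
        rcases hx with rfl | rfl
        exacts [Finset.mem_inter.2 ⟨hpb, hpG⟩, Finset.mem_inter.2 ⟨hqb, hqG⟩]
      have h2 : 2 ≤ (b ∩ G).card := by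
        rw [← Finset.card_pair hne]
        exact Finset.card_le_card hsub2
      omega
    · exact hTnoD b hb q hqb hqD
  have pin : ∀ G : Finset α, (G = A ∨ G = B ∨ G = C) → ∀ b ∈ Bl, b ∉ T →
      ∀ p, p ∈ b → p ∈ G → b ⊆ G ∪ D := by
    intro G hG b hb hbT p hpb hpG
    rcases hG with rfl | rfl | rfl <;> rcases hcl b hb hbT with h | h | h <;>
      first
        | exact h
        | (exfalso
           rcases Finset.mem_union.1 (h hpb) with h' | h'
           · first
              | exact Finset.disjoint_left.1 hAB hpG h'
              | exact Finset.disjoint_left.1 hAB h' hpG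
              | exact Finset.disjoint_left.1 hAC hpG h'
              | exact Finset.disjoint_left.1 hAC h' hpG
              | exact Finset.disjoint_left.1 hBC hpG h'
              | exact Finset.disjoint_left.1 hBC h' hpG
           · first
              | exact Finset.disjoint_left.1 hAD hpG h'
              | exact Finset.disjoint_left.1 hBD hpG h'
              | exact Finset.disjoint_left.1 hCD hpG h')
  have hclg : ∀ G : Finset α, (G = A ∨ G = B ∨ G = C) → ∀ b ∈ Bl,
      (b ∩ D).Nonempty → (b ∩ G).Nonempty → b ⊆ G ∪ D := by
    intro G hG b hb hbD hbG
    obtain ⟨y, hy⟩ := hbD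
    obtain ⟨hy1, hy2⟩ := Finset.mem_inter.1 hy
    obtain ⟨z, hz⟩ := hbG
    obtain ⟨hz1, hz2⟩ := Finset.mem_inter.1 hz
    have hbT : b ∉ T := fun h => hTnoD b h y hy1 hy2
    exact pin G hG b hb hbT z hz1 hz2
  -- the key covering fact
  have key : ∃ X : Finset α, (X = A ∨ X = B ∨ X = C) ∧
      ∀ p q b, p ∈ D → q ∈ D → p ≠ q → b ∈ Bl → p ∈ b → q ∈ b → b ⊆ X ∪ D := by
    by_cases hDBl : D ∈ Bl
    · refine ⟨A, Or.inl rfl, ?_⟩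
      intro p q b hp hq hne hb hpb hqb
      have hbD : b = D := huniq p q b D hb hDBl hne hpb hqb hp hq
      rw [hbD]
      exact Finset.subset_union_right
    · -- D ∉ Bl : parity argument
      obtain ⟨d1, d2, d3, h12, h13, h23, hDeq⟩ := Finset.card_eq_three.1 hD
      have hd1 : d1 ∈ D := by rw [hDeq]; simp
      have hd2 : d2 ∈ D := by rw [hDeq]; simp
      have hd3 : d3 ∈ D := by rw [hDeq]; simp
      have hmemD : ∀ x ∈ D, x = d1 ∨ x = d2 ∨ x = d3 := by
        intro x hx; rw [hDeq] at hx; simpa using hx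
      have getblock : ∀ p q : α, p ∈ D → q ∈ D → p ≠ q →
          ∃ b ∈ Bl, p ∈ b ∧ q ∈ b := by
        intro p q hp hq hne
        obtain ⟨b, ⟨hb, hpb, hqb⟩, -⟩ := hSTS.2 p (hDS hp) q (hDS hq) hne
        exact ⟨b, hb, hpb, hqb⟩
      have third : ∀ b ∈ Bl, ∃ x ∈ b, x ∉ D := by
        intro b hb
        by_contra h
        push_neg at h
        have hbD : b = D :=
          Finset.eq_of_subset_of_card_le h (by rw [(hSTS.1 b hb).2, hD])
        exact hDBl (hbD ▸ hb)
      have grpof : ∀ b ∈ Bl, ∀ x ∈ b, x ∈ D → x ∉ D → False := fun _ _ _ _ h h' => h' h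
      have grpof2 : ∀ b ∈ Bl, (b ∩ D).Nonempty → ∀ x ∈ b, x ∉ D →
          ∃ G : Finset α, (G = A ∨ G = B ∨ G = C) ∧ x ∈ G ∧ b ⊆ G ∪ D := by
        intro b hb hbD x hxb hxD
        obtain ⟨y, hy⟩ := hbD
        obtain ⟨hy1, hy2⟩ := Finset.mem_inter.1 hy
        have hbT : b ∉ T := fun h => hTnoD b h y hy1 hy2
        rcases hcl b hb hbT with h | h | h
        · refine ⟨A, Or.inl rfl, ?_, h⟩
          rcases Finset.mem_union.1 (h hxb) with h' | h'
          exacts [h', absurd h' hxD]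
        · refine ⟨B, Or.inr (Or.inl rfl), ?_, h⟩
          rcases Finset.mem_union.1 (h hxb) with h' | h'
          exacts [h', absurd h' hxD]
        · refine ⟨C, Or.inr (Or.inr rfl), ?_, h⟩
          rcases Finset.mem_union.1 (h hxb) with h' | h'
          exacts [h', absurd h' hxD]
      obtain ⟨b12, hb12Bl, hd1b12, hd2b12⟩ := getblock d1 d2 hd1 hd2 h12
      obtain ⟨b13, hb13Bl, hd1b13, hd3b13⟩ := getblock d1 d3 hd1 hd3 h13
      obtain ⟨b23, hb23Bl, hd2b23, hd3b23⟩ := getblock d2 d3 hd2 hd3 h23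
      obtain ⟨x12, hx12b, hx12D⟩ := third b12 hb12Bl
      obtain ⟨x13, hx13b, hx13D⟩ := third b13 hb13Bl
      obtain ⟨x23, hx23b, hx23D⟩ := third b23 hb23Bl
      obtain ⟨G12, hG12t, hx12G, hb12sub⟩ :=
        grpof2 b12 hb12Bl ⟨d1, Finset.mem_inter.2 ⟨hd1b12, hd1⟩⟩ x12 hx12b hx12D
      obtain ⟨G13, hG13t, hx13G, hb13sub⟩ :=
        grpof2 b13 hb13Bl ⟨d1, Finset.mem_inter.2 ⟨hd1b13, hd1⟩⟩ x13 hx13b hx13D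
      obtain ⟨G23, hG23t, hx23G, hb23sub⟩ :=
        grpof2 b23 hb23Bl ⟨d2, Finset.mem_inter.2 ⟨hd2b23, hd2⟩⟩ x23 hx23b hx23D
      -- step lemma wrapping parity_contra
      have step : ∀ G K : Finset α, (G = A ∨ G = B ∨ G = C) → (K = A ∨ K = B ∨ K = C) →
          ∀ (d e f : α), d ∈ D → e ∈ D → f ∈ D → d ≠ e → d ≠ f → e ≠ f →
          ∀ (be bf : Finset α), be ∈ Bl → bf ∈ Bl → d ∈ be → e ∈ be → d ∈ bf → f ∈ bf →
          ∀ (xe xf : α), xe ∈ be → xf ∈ bf → xe ∉ D → xf ∉ D →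
          xe ∈ G → xe ∉ K → xf ∉ G → xf ∉ K → False := by
        intro G K hGt hKt d e f hdD heD hfD hde hdf hef be bf hbeBl hbfBl hdbe hebe hdbf
          hfbf xe xf hxebe hxfbf hxeD hxfD hxeG hxeK hxfG hxfK
        exact parity_contra S Bl hSTS D G K w (hgrpcard G hGt) (hgrpcard K hKt)
          (hgrpS G hGt) (hgrpS K hKt) hDS hD (hgrpD G hGt) (hgrpD K hKt)
          (hclg G hGt) (hclg K hKt) d e f hdD heD hfD hde hdf hef be bf hbeBl hbfBl
          hdbe hebe hdbf hfbf xe xf hxebe hxfbf hxeD hxfD hxeG hxeK hxfG hxfK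
      -- same group across two pair-blocks sharing a point of D
      have same : ∀ (G G' : Finset α), (G = A ∨ G = B ∨ G = C) → (G' = A ∨ G' = B ∨ G' = C) →
          ∀ (d e f : α), d ∈ D → e ∈ D → f ∈ D → d ≠ e → d ≠ f → e ≠ f →
          ∀ (be bf : Finset α), be ∈ Bl → bf ∈ Bl → d ∈ be → e ∈ be → d ∈ bf → f ∈ bf →
          ∀ (xe xf : α), xe ∈ be → xf ∈ bf → xe ∉ D → xf ∉ D →
          xe ∈ G → xf ∈ G' → xf ∈ G := by
        intro G G' hGt hG't d e f hdD heD hfD hde hdf hef be bf hbeBl hbfBl hdbe hebe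
          hdbf hfbf xe xf hxebe hxfbf hxeD hxfD hxeG hxfG'
        by_contra hnot
        have hK : ∃ K : Finset α, (K = A ∨ K = B ∨ K = C) ∧ xe ∉ K ∧ xf ∉ K := by
          rcases hGt with rfl | rfl | rfl <;> rcases hG't with rfl | rfl | rfl <;>
            first
              | exact absurd hxfG' hnot
              | (refine ⟨A, Or.inl rfl, ?_, ?_⟩ <;>
                  first
                    | exact fun h => Finset.disjoint_left.1 hAB h hxeG
                    | exact fun h => Finset.disjoint_left.1 hAC h hxeG
                    | exact fun h => Finset.disjoint_left.1 hAB h hxfG'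
                    | exact fun h => Finset.disjoint_left.1 hAC h hxfG')
              | (refine ⟨B, Or.inr (Or.inl rfl), ?_, ?_⟩ <;>
                  first
                    | exact fun h => Finset.disjoint_left.1 hAB hxeG h
                    | exact fun h => Finset.disjoint_left.1 hBC h hxeG
                    | exact fun h => Finset.disjoint_left.1 hAB hxfG' h
                    | exact fun h => Finset.disjoint_left.1 hBC h hxfG')
              | (refine ⟨C, Or.inr (Or.inr rfl), ?_, ?_⟩ <;>
                  first
                    | exact fun h => Finset.disjoint_left.1 hAC hxeG h
                    | exact fun h => Finset.disjoint_left.1 hBC hxeG h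
                    | exact fun h => Finset.disjoint_left.1 hAC hxfG' h
                    | exact fun h => Finset.disjoint_left.1 hBC hxfG' h)
        obtain ⟨K, hKt, hxeK, hxfK⟩ := hK
        exact step G K hGt hKt d e f hdD heD hfD hde hdf hef be bf hbeBl hbfBl hdbe hebe
          hdbf hfbf xe xf hxebe hxfbf hxeD hxfD hxeG hxeK hnot hxfK
      have hx13G12 : x13 ∈ G12 := same G12 G13 hG12t hG13t d1 d2 d3 hd1 hd2 hd3 h12 h13 h23
        b12 b13 hb12Bl hb13Bl hd1b12 hd2b12 hd1b13 hd3b13 x12 x13 hx12b hx13b hx12D hx13D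
        hx12G hx13G
      have hx23G12 : x23 ∈ G12 := same G12 G23 hG12t hG23t d2 d1 d3 hd2 hd1 hd3 (Ne.symm h12)
        h23 h13 b12 b23 hb12Bl hb23Bl hd2b12 hd1b12 hd2b23 hd3b23 x12 x23 hx12b hx23b
        hx12D hx23D hx12G hx23G
      -- G13 = G12 and G23 = G12
      have heqG : ∀ G' : Finset α, (G' = A ∨ G' = B ∨ G' = C) → ∀ x, x ∈ G' → x ∈ G12 →
          G' = G12 := by
        intro G' hG't x hx1 hx2
        rcases hG12t with rfl | rfl | rfl <;> rcases hG't with rfl | rfl | rfl <;>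
          first
            | rfl
            | exact absurd hx2 (fun h => Finset.disjoint_left.1 hAB hx1 h)
            | exact absurd hx2 (fun h => Finset.disjoint_left.1 hAB h hx1)
            | exact absurd hx2 (fun h => Finset.disjoint_left.1 hAC hx1 h)
            | exact absurd hx2 (fun h => Finset.disjoint_left.1 hAC h hx1)
            | exact absurd hx2 (fun h => Finset.disjoint_left.1 hBC hx1 h)
            | exact absurd hx2 (fun h => Finset.disjoint_left.1 hBC h hx1)
      have hb13sub' : b13 ⊆ G12 ∪ D := by
        rw [← heqG G13 hG13t x13 hx13G hx13G12]; exact hb13sub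
      have hb23sub' : b23 ⊆ G12 ∪ D := by
        rw [← heqG G23 hG23t x23 hx23G hx23G12]; exact hb23sub
      refine ⟨G12, hG12t, ?_⟩
      intro p q b hp hq hne hb hpb hqb
      rcases hmemD p hp with rfl | rfl | rfl <;> rcases hmemD q hq with rfl | rfl | rfl
      · exact absurd rfl hne
      · rw [huniq p q b b12 hb hb12Bl hne hpb hqb hd1b12 hd2b12]; exact hb12sub
      · rw [huniq p q b b13 hb hb13Bl hne hpb hqb hd1b13 hd3b13]; exact hb13sub'
      · rw [huniq q p b b12 hb hb12Bl (Ne.symm hne) hqb hpb hd1b12 hd2b12]; exact hb12sub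
      · exact absurd rfl hne
      · rw [huniq p q b b23 hb hb23Bl hne hpb hqb hd2b23 hd3b23]; exact hb23sub'
      · rw [huniq q p b b13 hb hb13Bl (Ne.symm hne) hqb hpb hd1b13 hd3b13]; exact hb13sub'
      · rw [huniq q p b b23 hb hb23Bl (Ne.symm hne) hqb hpb hd2b23 hd3b23]; exact hb23sub'
      · exact absurd rfl hne
  obtain ⟨X, hXt, hcov⟩ := key
  -- two-in-D blocks inside another group's part must be D
  have htwoY : ∀ Y : Finset α, (Y = A ∨ Y = B ∨ Y = C) → Disjoint X Y →
      ∀ b ∈ Bl, b ⊆ Y ∪ D → 2 ≤ (b ∩ D).card → b = D := by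
    intro Y hYt hXY b hb hbsub hc
    obtain ⟨p, hp, q, hq, hne⟩ := Finset.one_lt_card.1 (show 1 < (b ∩ D).card by omega)
    obtain ⟨hpb, hpD⟩ := Finset.mem_inter.1 hp
    obtain ⟨hqb, hqD⟩ := Finset.mem_inter.1 hq
    have hbX := hcov p q b hpD hqD hne hb hpb hqb
    have hbD : b ⊆ D := by
      intro x hx
      rcases Finset.mem_union.1 (hbsub hx) with hxY | hxD
      · rcases Finset.mem_union.1 (hbX hx) with hxX | hxD
        · exact absurd hxY (Finset.disjoint_left.1 hXY hxX)
        · exact hxD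
      · exact hxD
    exact Finset.eq_of_subset_of_card_le hbD (by rw [hD, (hSTS.1 b hb).2])
  -- the STS on the X part
  have kindsts : ∀ G : Finset α, (G = A ∨ G = B ∨ G = C) →
      (∀ p q b, p ∈ D → q ∈ D → p ≠ q → b ∈ Bl → p ∈ b → q ∈ b → b ⊆ G ∪ D) →
      IsSTS (G ∪ D) (Bl.filter fun b => b ∉ T ∧ b ⊆ G ∪ D) := by
    intro G hG hcovG
    constructor
    · intro b hb
      obtain ⟨hbBl, -, hbsub⟩ := Finset.mem_filter.1 hb
      exact ⟨hbsub, (hSTS.1 b hbBl).2⟩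
    · have main : ∀ p q : α, p ∈ G → q ∈ G ∪ D → p ≠ q →
          ∃! b, b ∈ (Bl.filter fun b => b ∉ T ∧ b ⊆ G ∪ D) ∧ p ∈ b ∧ q ∈ b := by
        intro p q hpG hq hne
        have hqS : q ∈ S := by
          rcases Finset.mem_union.1 hq with h | h
          exacts [hgrpS G hG h, hDS h]
        obtain ⟨b, ⟨hbBl, hpb, hqb⟩, hbu⟩ := hSTS.2 p (hgrpS G hG hpG) q hqS hne
        have hbT : b ∉ T := fun h => hnotT G hG b h p q hpb hqb hne hpG hq
        refine ⟨b, ⟨Finset.mem_filter.2 ⟨hbBl, hbT, pin G hG b hbBl hbT p hpb hpG⟩,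
          hpb, hqb⟩, ?_⟩
        rintro b' ⟨hb', hpb', hqb'⟩
        exact hbu b' ⟨(Finset.mem_filter.1 hb').1, hpb', hqb'⟩
      intro p hp q hq hne
      rcases Finset.mem_union.1 hp with hpG | hpD
      · exact main p q hpG hq hne
      · rcases Finset.mem_union.1 hq with hqG | hqD
        · obtain ⟨b, ⟨h1, h2, h3⟩, hu⟩ :=
            main q p hqG (Finset.mem_union_right _ hpD) (Ne.symm hne)
          exact ⟨b, ⟨h1, h3, h2⟩, fun y hy => hu y ⟨hy.1, hy.2.2, hy.2.1⟩⟩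
        · obtain ⟨b, ⟨hbBl, hpb, hqb⟩, hbu⟩ := hSTS.2 p (hDS hpD) q (hDS hqD) hne
          have hbT : b ∉ T := fun h => hTnoD b h p hpb hpD
          refine ⟨b, ⟨Finset.mem_filter.2 ⟨hbBl, hbT,
            hcovG p q b hpD hqD hne hbBl hpb hqb⟩, hpb, hqb⟩, ?_⟩
          rintro b' ⟨hb', hpb', hqb'⟩
          exact hbu b' ⟨(Finset.mem_filter.1 hb').1, hpb', hqb'⟩
  have kindins : ∀ G : Finset α, (G = A ∨ G = B ∨ G = C) →
      (∀ b ∈ Bl, b ⊆ G ∪ D → 2 ≤ (b ∩ D).card → b = D) →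
      IsSTS (G ∪ D) (insert D (Bl.filter fun b => b ∉ T ∧ b ⊆ G ∪ D)) := by
    intro G hG htwo
    constructor
    · intro b hb
      rcases Finset.mem_insert.1 hb with rfl | hb'
      · exact ⟨Finset.subset_union_right, hD⟩
      · obtain ⟨hbBl, -, hbsub⟩ := Finset.mem_filter.1 hb'
        exact ⟨hbsub, (hSTS.1 b hbBl).2⟩
    · have main : ∀ p q : α, p ∈ G → q ∈ G ∪ D → p ≠ q →
          ∃! b, b ∈ insert D (Bl.filter fun b => b ∉ T ∧ b ⊆ G ∪ D) ∧ p ∈ b ∧ q ∈ b := by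
        intro p q hpG hq hne
        have hqS : q ∈ S := by
          rcases Finset.mem_union.1 hq with h | h
          exacts [hgrpS G hG h, hDS h]
        obtain ⟨b, ⟨hbBl, hpb, hqb⟩, hbu⟩ := hSTS.2 p (hgrpS G hG hpG) q hqS hne
        have hbT : b ∉ T := fun h => hnotT G hG b h p q hpb hqb hne hpG hq
        refine ⟨b, ⟨Finset.mem_insert_of_mem (Finset.mem_filter.2
          ⟨hbBl, hbT, pin G hG b hbBl hbT p hpb hpG⟩), hpb, hqb⟩, ?_⟩
        rintro b' ⟨hb', hpb', hqb'⟩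
        rcases Finset.mem_insert.1 hb' with rfl | hb''
        · exact absurd hpb' (fun h => Finset.disjoint_left.1 (hgrpD G hG) hpG h)
        · exact hbu b' ⟨(Finset.mem_filter.1 hb'').1, hpb', hqb'⟩
      intro p hp q hq hne
      rcases Finset.mem_union.1 hp with hpG | hpD
      · exact main p q hpG hq hne
      · rcases Finset.mem_union.1 hq with hqG | hqD
        · obtain ⟨b, ⟨h1, h2, h3⟩, hu⟩ :=
            main q p hqG (Finset.mem_union_right _ hpD) (Ne.symm hne)
          exact ⟨b, ⟨h1, h3, h2⟩, fun y hy => hu y ⟨hy.1, hy.2.2, hy.2.1⟩⟩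
        · refine ⟨D, ⟨Finset.mem_insert_self _ _, hpD, hqD⟩, ?_⟩
          rintro b' ⟨hb', hpb', hqb'⟩
          rcases Finset.mem_insert.1 hb' with rfl | hb''
          · rfl
          · obtain ⟨hbBl, -, hbsub⟩ := Finset.mem_filter.1 hb''
            apply htwo b' hbBl hbsub
            have hsub2 : ({p, q} : Finset α) ⊆ b' ∩ D := by
              intro x hx
              simp only [Finset.mem_insert, Finset.mem_singleton] at hx
              rcases hx with rfl | rfl
              exacts [Finset.mem_inter.2 ⟨hpb', hpD⟩, Finset.mem_inter.2 ⟨hqb', hqD⟩]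
            rw [← Finset.card_pair hne]
            exact Finset.card_le_card hsub2
  -- union decomposition
  have hunion : Bl = T ∪ (Bl.filter fun b => b ∉ T ∧ b ⊆ A ∪ D)
      ∪ (Bl.filter fun b => b ∉ T ∧ b ⊆ B ∪ D)
      ∪ (Bl.filter fun b => b ∉ T ∧ b ⊆ C ∪ D) := by
    ext b
    simp only [Finset.mem_union, Finset.mem_filter]
    constructor
    · intro hb
      by_cases hbT : b ∈ T
      · tauto
      · rcases hcl b hb hbT with h | h | h <;> tauto
    · rintro (((h | h) | h) | h)
      exacts [hsub h, h.1, h.1, h.1]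
  -- modularity
  have hstsX : IsSTS (X ∪ D) (Bl.filter fun b => b ∉ T ∧ b ⊆ X ∪ D) :=
    kindsts X hXt hcov
  have hXD : Disjoint X D := hgrpD X hXt
  have hmod : (w + 3) % 6 = 1 ∨ (w + 3) % 6 = 3 := by
    obtain ⟨d0, hd0⟩ : D.Nonempty := Finset.card_pos.1 (by omega)
    have := sts_card_mod (X ∪ D) _ hstsX ⟨d0, Finset.mem_union_right _ hd0⟩
    rwa [Finset.card_union_of_disjoint hXD, hgrpcard X hXt, hD] at this
  refine ⟨⟨Bl.filter fun b => b ∉ T ∧ b ⊆ A ∪ D,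
    Bl.filter fun b => b ∉ T ∧ b ⊆ B ∪ D,
    Bl.filter fun b => b ∉ T ∧ b ⊆ C ∪ D, hunion,
    fun b hb => (Finset.mem_filter.1 hb).2.2,
    fun b hb => (Finset.mem_filter.1 hb).2.2,
    fun b hb => (Finset.mem_filter.1 hb).2.2, ?_⟩, hmod⟩
  rcases hXt with rfl | rfl | rfl
  · exact Or.inl ⟨hstsX,
      kindins B (Or.inr (Or.inl rfl)) (htwoY B (Or.inr (Or.inl rfl)) hAB),
      kindins C (Or.inr (Or.inr rfl)) (htwoY C (Or.inr (Or.inr rfl)) hAC)⟩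
  · exact Or.inr (Or.inl ⟨hstsX,
      kindins A (Or.inl rfl) (htwoY A (Or.inl rfl) (Disjoint.symm hAB)),
      kindins C (Or.inr (Or.inr rfl)) (htwoY C (Or.inr (Or.inr rfl)) hBC)⟩)
  · exact Or.inr (Or.inr ⟨hstsX,
      kindins A (Or.inl rfl) (htwoY A (Or.inl rfl) (Disjoint.symm hAC)),
      kindins B (Or.inr (Or.inl rfl)) (htwoY B (Or.inr (Or.inl rfl)) (Disjoint.symm hBC))⟩)
end

section
/- Within the proof of the decomposition of STS(3w+3): with notation as in the setup, the set B_A of blocks entirely contained in A ∪ D covers at least w²/2 + 5w/2 pairs of points and at most w²/2 + 5w/2 + 3 pairs, and the number of pairs it covers is divisible by 3. -/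
variable {α : Type*} [DecidableEq α]

/-!
A pair `{u, v}` of `A ∪ D` with `u ∈ A` lies in a block of the STS. That block is not in `T`
(a block of `T` meets `A` once and misses `D`), and it contains no point `r` of `B ∪ C`, since
it would then be the block of `T` through `u` and `r`. So `B_A` covers every pair of `A ∪ D`
except possibly the three pairs inside `D`: between `C(w+3, 2) - 3` and `C(w+3, 2)` pairs.
Distinct blocks of an STS share no pair, so the number of covered pairs is `3 |B_A|`.
-/

open Finset

namespace Finset

theorem filter_powersetCard_exists_subset_eq_biUnion {U : Finset α} {F : Finset (Finset α)}
    (hF : ∀ b ∈ F, b ⊆ U) (k : ℕ) :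
    (U.powersetCard k).filter (fun p => ∃ b ∈ F, p ⊆ b) = F.biUnion (·.powersetCard k) := by
  ext p
  simp only [mem_filter, mem_biUnion, mem_powersetCard]
  constructor
  · rintro ⟨⟨-, hcard⟩, b, hb, hpb⟩
    exact ⟨b, hb, hpb, hcard⟩
  · rintro ⟨b, hb, hpb, hcard⟩
    exact ⟨⟨hpb.trans (hF b hb), hcard⟩, b, hb, hpb⟩

theorem card_biUnion_powersetCard_two {F : Finset (Finset α)}
    (hF : (F : Set (Finset α)).Pairwise fun b₁ b₂ => #(b₁ ∩ b₂) ≤ 1) :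
    #(F.biUnion (·.powersetCard 2)) = ∑ b ∈ F, (#b).choose 2 := by
  rw [card_biUnion]
  · simp only [card_powersetCard]
  · intro b₁ hb₁ b₂ hb₂ hne
    rw [Function.onFun, disjoint_left]
    intro p hp₁ hp₂
    rw [mem_powersetCard] at hp₁ hp₂
    have : #p ≤ #(b₁ ∩ b₂) := card_le_card (subset_inter hp₁.1 hp₂.1)
    have := hF hb₁ hb₂ hne
    omega

end Finset

theorem IsSTS.eq_of_mem_inter {S : Finset α} {Bl : Finset (Finset α)} (h : IsSTS S Bl)
    {b₁ b₂ : Finset α} (hb₁ : b₁ ∈ Bl) (hb₂ : b₂ ∈ Bl) {x y : α} (hxy : x ≠ y)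
    (hx : x ∈ b₁ ∩ b₂) (hy : y ∈ b₁ ∩ b₂) : b₁ = b₂ := by
  rw [mem_inter] at hx hy
  have hb₁S := (h.1 b₁ hb₁).1
  exact (h.2 x (hb₁S hx.1) y (hb₁S hy.1) hxy).unique
    ⟨hb₁, hx.1, hy.1⟩ ⟨hb₂, hx.2, hy.2⟩

theorem IsSTS.card_inter_le_one {S : Finset α} {Bl : Finset (Finset α)} (h : IsSTS S Bl) :
    (Bl : Set (Finset α)).Pairwise fun b₁ b₂ => #(b₁ ∩ b₂) ≤ 1 := by
  intro b₁ hb₁ b₂ hb₂ hne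
  by_contra! hlt
  obtain ⟨x, hx, y, hy, hxy⟩ := one_lt_card.1 hlt
  exact hne (h.eq_of_mem_inter hb₁ hb₂ hxy hx hy)

theorem IsTD3.exists_mem_of_mem_left {A B C : Finset α} {T : Finset (Finset α)}
    (h : IsTD3 A B C T) {u r : α} (hu : u ∈ A) (hr : r ∈ B ∪ C) :
    ∃ t ∈ T, u ∈ t ∧ r ∈ t := by
  rcases mem_union.1 hr with hr | hr
  · obtain ⟨t, ⟨ht, hut, hrt⟩, -⟩ := h.2 u r (Or.inl ⟨hu, hr⟩)
    exact ⟨t, ht, hut, hrt⟩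
  · obtain ⟨t, ⟨ht, hut, hrt⟩, -⟩ := h.2 u r (Or.inr (Or.inl ⟨hu, hr⟩))
    exact ⟨t, ht, hut, hrt⟩

theorem IsTD3.notMem_of_mem_left {A B C D : Finset α} {T : Finset (Finset α)}
    (h : IsTD3 A B C T) (hAD : Disjoint A D) (hBD : Disjoint B D) (hCD : Disjoint C D)
    {b : Finset α} {u v : α} (hu : u ∈ A) (hv : v ∈ A ∪ D) (huv : u ≠ v)
    (hub : u ∈ b) (hvb : v ∈ b) : b ∉ T := by
  intro hb
  obtain ⟨hbABC, hbA, -, -⟩ := h.1 b hb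
  rcases mem_union.1 hv with hv | hv
  · have : 1 < #(b ∩ A) :=
      one_lt_card.2 ⟨u, mem_inter.2 ⟨hub, hu⟩, v, mem_inter.2 ⟨hvb, hv⟩, huv⟩
    omega
  · have hvABC : v ∉ A ∪ B ∪ C := by
      simp only [mem_union, not_or]
      exact ⟨⟨disjoint_right.1 hAD hv, disjoint_right.1 hBD hv⟩, disjoint_right.1 hCD hv⟩
    exact hvABC (hbABC hvb)

theorem exists_block_sdiff_subset_of_mem_left {S : Finset α} {Bl T : Finset (Finset α)}
    {A B C D : Finset α} (hS : A ∪ B ∪ C ∪ D = S)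
    (hAB : Disjoint A B) (hAC : Disjoint A C) (hAD : Disjoint A D)
    (hBD : Disjoint B D) (hCD : Disjoint C D)
    (hSTS : IsSTS S Bl) (hsub : T ⊆ Bl) (hTD : IsTD3 A B C T)
    {u v : α} (hu : u ∈ A) (hv : v ∈ A ∪ D) (huv : u ≠ v) :
    ∃ b ∈ Bl \ T, b ⊆ A ∪ D ∧ u ∈ b ∧ v ∈ b := by
  have hAS : A ⊆ S := hS ▸ fun x hx => by simp [hx]
  have hDS : D ⊆ S := hS ▸ fun x hx => by simp [hx]
  obtain ⟨b, ⟨hb, hub, hvb⟩, -⟩ :=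
    hSTS.2 u (hAS hu) v (union_subset hAS hDS hv) huv
  have hbT : b ∉ T := hTD.notMem_of_mem_left hAD hBD hCD hu hv huv hub hvb
  refine ⟨b, mem_sdiff.2 ⟨hb, hbT⟩, fun r hr => ?_, hub, hvb⟩
  have hrS : r ∈ A ∪ (B ∪ C) ∪ D := by
    rw [← union_assoc, hS]; exact (hSTS.1 b hb).1 hr
  rcases mem_union.1 hrS with hr' | hrD
  · rcases mem_union.1 hr' with hrA | hrBC
    · exact mem_union_left _ hrA
    · exfalso
      have hur : u ≠ r := by
        rintro rfl
        exact disjoint_left.1 (disjoint_union_right.2 ⟨hAB, hAC⟩) hu hrBC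
      obtain ⟨t, ht, hut, hrt⟩ := hTD.exists_mem_of_mem_left hu hrBC
      exact hbT (hSTS.eq_of_mem_inter hb (hsub ht) hur (mem_inter.2 ⟨hub, hut⟩)
        (mem_inter.2 ⟨hr, hrt⟩) ▸ ht)
  · exact mem_union_right _ hrD

theorem exists_block_sdiff_subset_of_not_subset {S : Finset α} {Bl T : Finset (Finset α)}
    {A B C D : Finset α} (hS : A ∪ B ∪ C ∪ D = S)
    (hAB : Disjoint A B) (hAC : Disjoint A C) (hAD : Disjoint A D)
    (hBD : Disjoint B D) (hCD : Disjoint C D)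
    (hSTS : IsSTS S Bl) (hsub : T ⊆ Bl) (hTD : IsTD3 A B C T)
    {p : Finset α} (hp : p ∈ (A ∪ D).powersetCard 2) (hpD : ¬ p ⊆ D) :
    ∃ b ∈ Bl \ T, b ⊆ A ∪ D ∧ p ⊆ b := by
  obtain ⟨hpAD, hp2⟩ := mem_powersetCard.1 hp
  obtain ⟨x, hx, hxD⟩ := not_subset.1 hpD
  have hxA : x ∈ A := (mem_union.1 (hpAD hx)).resolve_right hxD
  obtain ⟨y, hy, hyx⟩ := exists_mem_ne (s := p) (by omega) x
  obtain ⟨b, hb, hbAD, hxb, hyb⟩ := exists_block_sdiff_subset_of_mem_left hS hAB hAC hAD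
    hBD hCD hSTS hsub hTD hxA (hpAD hy) hyx.symm
  have hp_eq : {x, y} = p :=
    eq_of_subset_of_card_le (insert_subset hx (singleton_subset_iff.2 hy))
      (by rw [card_pair hyx.symm, hp2])
  exact ⟨b, hb, hbAD, hp_eq ▸ insert_subset hxb (singleton_subset_iff.2 hyb)⟩

theorem two_mul_choose_two_add_three (w : ℕ) : 2 * (w + 3).choose 2 = w ^ 2 + 5 * w + 6 := by
  have h := Nat.add_one_mul_choose_eq (w + 2) 1
  simp only [Nat.choose_one_right] at h
  rw [mul_comm]
  linarith

theorem sts_3w3_pair_count_general (S : Finset α) (Bl T : Finset (Finset α))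
    (A B C D : Finset α) (w : ℕ)
    (hS : A ∪ B ∪ C ∪ D = S)
    (hA : A.card = w) (hD : D.card = 3)
    (hAB : Disjoint A B) (hAC : Disjoint A C) (hAD : Disjoint A D)
    (hBD : Disjoint B D) (hCD : Disjoint C D)
    (hSTS : IsSTS S Bl) (hsub : T ⊆ Bl) (hTD : IsTD3 A B C T) :
    let BA := (Bl \ T).filter (fun b => b ⊆ A ∪ D)
    let n := (((A ∪ D).powersetCard 2).filter (fun p => ∃ b ∈ BA, p ⊆ b)).card
    w ^ 2 + 5 * w ≤ 2 * n ∧ 2 * n ≤ w ^ 2 + 5 * w + 6 ∧ 3 ∣ n := by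
  intro BA n
  have hBA : BA ⊆ Bl := fun b hb => (mem_sdiff.1 (mem_filter.1 hb).1).1
  have hn : n = 3 * #BA :=
    calc n = #(BA.biUnion (·.powersetCard 2)) :=
          congrArg card (filter_powersetCard_exists_subset_eq_biUnion
            (fun b hb => (mem_filter.1 hb).2) 2)
      _ = ∑ b ∈ BA, (#b).choose 2 :=
          card_biUnion_powersetCard_two (hSTS.card_inter_le_one.mono (coe_subset.2 hBA))
      _ = 3 * #BA := by
          rw [sum_congr rfl fun b hb => by rw [(hSTS.1 b (hBA hb)).2]]
          simp [mul_comm]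
  have hP : 2 * #((A ∪ D).powersetCard 2) = w ^ 2 + 5 * w + 6 := by
    rw [card_powersetCard, card_union_of_disjoint hAD, hA, hD, two_mul_choose_two_add_three]
  have hupper : n ≤ #((A ∪ D).powersetCard 2) := card_filter_le _ _
  have huncovered : ((A ∪ D).powersetCard 2).filter (fun p => ¬ ∃ b ∈ BA, p ⊆ b) ⊆
      D.powersetCard 2 := by
    intro p hp
    rw [mem_filter] at hp
    refine mem_powersetCard.2 ⟨?_, (mem_powersetCard.1 hp.1).2⟩
    by_contra hpD
    obtain ⟨b, hb, hbAD, hpb⟩ := exists_block_sdiff_subset_of_not_subset hS hAB hAC hAD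
      hBD hCD hSTS hsub hTD hp.1 hpD
    exact hp.2 ⟨b, mem_filter.2 ⟨hb, hbAD⟩, hpb⟩
  have hlower : #((A ∪ D).powersetCard 2) ≤ n + 3 := by
    rw [← card_filter_add_card_filter_not (fun p => ∃ b ∈ BA, p ⊆ b)]
    exact Nat.add_le_add_left ((card_le_card huncovered).trans_eq
      (by rw [card_powersetCard, hD]; rfl)) n
  exact ⟨by omega, by omega, ⟨#BA, hn⟩⟩

theorem sts_3w3_pair_count (S : Finset α) (Bl T : Finset (Finset α))
    (A B C D : Finset α) (w : ℕ)
    (hS : A ∪ B ∪ C ∪ D = S)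
    (hA : A.card = w) (hB : B.card = w) (hC : C.card = w) (hD : D.card = 3)
    (hAB : Disjoint A B) (hAC : Disjoint A C) (hAD : Disjoint A D)
    (hBC : Disjoint B C) (hBD : Disjoint B D) (hCD : Disjoint C D)
    (hSTS : IsSTS S Bl) (hsub : T ⊆ Bl) (hTD : IsTD3 A B C T)
    (hDnotblock : D ∉ Bl) :
    let BA := (Bl \ T).filter (fun b => b ⊆ A ∪ D)
    let n := (((A ∪ D).powersetCard 2).filter (fun p => ∃ b ∈ BA, p ⊆ b)).card
    w ^ 2 + 5 * w ≤ 2 * n ∧ 2 * n ≤ w ^ 2 + 5 * w + 6 ∧ 3 ∣ n :=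
  sts_3w3_pair_count_general S Bl T A B C D w hS hA hD hAB hAC hAD hBD hCD hSTS hsub hTD
end

section
/- An STS(7) and an STS(9) cannot have 5 or more blocks in common. That is, if (S₁, B₁) is a Steiner triple system of order 7 and (S₂, B₂) one of order 9, then |B₁ ∩ B₂| ≤ 4. -/
variable {α : Type*} [DecidableEq α]

lemma sts_block_unique {S : Finset α} {B : Finset (Finset α)} (h : IsSTS S B)
    {b b' : Finset α} (hb : b ∈ B) (hb' : b' ∈ B) {p q : α} (hpq : p ≠ q)
    (hp : p ∈ b) (hq : q ∈ b) (hp' : p ∈ b') (hq' : q ∈ b') : b = b' := by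
  have hpS : p ∈ S := (h.1 b hb).1 hp
  have hqS : q ∈ S := (h.1 b hb).1 hq
  obtain ⟨c, -, hu⟩ := h.2 p hpS q hqS hpq
  exact (hu b ⟨hb, hp, hq⟩).trans (hu b' ⟨hb', hp', hq'⟩).symm

lemma sts_degree {S : Finset α} {B : Finset (Finset α)} (h : IsSTS S B)
    {p : α} (hp : p ∈ S) : S.card = 2 * (B.filter (fun b => p ∈ b)).card + 1 := by
  have key : S.erase p = (B.filter (fun b => p ∈ b)).biUnion (fun b => b.erase p) := by
    ext q
    simp only [Finset.mem_erase, Finset.mem_biUnion, Finset.mem_filter]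
    constructor
    · rintro ⟨hqp, hqS⟩
      obtain ⟨b, ⟨hbB, hpb, hqb⟩, -⟩ := h.2 p hp q hqS (Ne.symm hqp)
      exact ⟨b, ⟨hbB, hpb⟩, hqp, hqb⟩
    · rintro ⟨b, ⟨hbB, hpb⟩, hqp, hqb⟩
      exact ⟨hqp, (h.1 b hbB).1 hqb⟩
  have hdisj : ∀ x ∈ B.filter (fun b => p ∈ b), ∀ y ∈ B.filter (fun b => p ∈ b),
      x ≠ y → Disjoint (x.erase p) (y.erase p) := by
    intro x hx y hy hxy
    rw [Finset.mem_filter] at hx hy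
    refine Finset.disjoint_left.mpr fun q hqx hqy => ?_
    rw [Finset.mem_erase] at hqx hqy
    exact hxy (sts_block_unique h hx.1 hy.1 (Ne.symm hqx.1) hx.2 hqx.2 hy.2 hqy.2)
  have hcard := Finset.card_biUnion hdisj
  rw [← key] at hcard
  have hsum : ∑ b ∈ B.filter (fun b => p ∈ b), (b.erase p).card
      = ∑ b ∈ B.filter (fun b => p ∈ b), 2 := by
    apply Finset.sum_congr rfl
    intro b hb
    rw [Finset.mem_filter] at hb
    rw [Finset.card_erase_of_mem hb.2, (h.1 b hb.1).2]
  rw [hsum, Finset.sum_const, smul_eq_mul] at hcard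
  have h1 : (S.erase p).card = S.card - 1 := Finset.card_erase_of_mem hp
  have h2 : 1 ≤ S.card := Finset.card_pos.mpr ⟨p, hp⟩
  omega

lemma sts_sum_deg {S : Finset α} (C : Finset (Finset α))
    (hC : ∀ b ∈ C, b ⊆ S ∧ b.card = 3) :
    ∑ p ∈ S, (C.filter (fun b => p ∈ b)).card = 3 * C.card := by
  have h1 : ∀ p, (C.filter (fun b => p ∈ b)).card = ∑ b ∈ C, if p ∈ b then 1 else 0 :=
    fun p => Finset.card_filter _ _
  simp only [h1]
  rw [Finset.sum_comm]
  have h2 : ∀ b ∈ C, (∑ p ∈ S, if p ∈ b then 1 else 0) = 3 := by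
    intro b hb
    rw [← Finset.card_filter]
    rw [Finset.filter_mem_eq_inter, Finset.inter_eq_right.mpr (hC b hb).1, (hC b hb).2]
  rw [Finset.sum_congr rfl h2, Finset.sum_const, smul_eq_mul, mul_comm]

lemma sts7_card_blocks {S : Finset α} {B : Finset (Finset α)} (h : IsSTS S B)
    (hc : S.card = 7) : B.card = 7 := by
  have hsum := sts_sum_deg B h.1
  have h3 : ∀ p ∈ S, (B.filter (fun b => p ∈ b)).card = 3 := by
    intro p hp; have := sts_degree h hp; omega
  rw [Finset.sum_congr rfl h3, Finset.sum_const, smul_eq_mul, hc] at hsum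
  omega

theorem sts7_sts9_common_blocks (S₁ S₂ : Finset α) (B₁ B₂ : Finset (Finset α))
    (h₁ : IsSTS S₁ B₁) (hc₁ : S₁.card = 7)
    (h₂ : IsSTS S₂ B₂) (hc₂ : S₂.card = 9) :
    (B₁ ∩ B₂).card ≤ 4 := by
  by_contra hcon
  push_neg at hcon
  set C := B₁ ∩ B₂ with hCdef
  have hCB₁ : C ⊆ B₁ := Finset.inter_subset_left
  have hCB₂ : C ⊆ B₂ := Finset.inter_subset_right
  have hB₁7 : B₁.card = 7 := sts7_card_blocks h₁ hc₁
  have hdegB₁ : ∀ p ∈ S₁, (B₁.filter (fun b => p ∈ b)).card = 3 := by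
    intro p hp; have := sts_degree h₁ hp; omega
  have hCblocks : ∀ b ∈ C, b ⊆ S₁ ∧ b.card = 3 := fun b hb => h₁.1 b (hCB₁ hb)
  have hCfilter_sub : ∀ p : α, C.filter (fun b => p ∈ b) ⊆ B₁.filter (fun b => p ∈ b) := by
    intro p b hb
    rw [Finset.mem_filter] at hb ⊢
    exact ⟨hCB₁ hb.1, hb.2⟩
  have hdegC3 : ∀ p ∈ S₁, (C.filter (fun b => p ∈ b)).card ≤ 3 := fun p hp =>
    (hdegB₁ p hp) ▸ Finset.card_le_card (hCfilter_sub p)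
  -- Step 1 : S₁ ⊆ S₂
  have hS₁S₂ : S₁ ⊆ S₂ := by
    intro s hs
    by_contra hsn
    have hsub : C ⊆ B₁.filter (fun b => s ∉ b) := by
      intro b hb
      rw [Finset.mem_filter]
      exact ⟨hCB₁ hb, fun hsb => hsn ((h₂.1 b (hCB₂ hb)).1 hsb)⟩
    have hsplit := Finset.card_filter_add_card_filter_not (s := B₁)
      (p := fun b => s ∈ b)
    have h3 := hdegB₁ s hs
    have h4 := Finset.card_le_card hsub
    omega
  have hDcard : (S₂ \ S₁).card = 2 := by
    rw [Finset.card_sdiff_of_subset hS₁S₂, hc₁, hc₂]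
  obtain ⟨u, v, huv, hD⟩ := Finset.card_eq_two.mp hDcard
  have huD : u ∈ S₂ \ S₁ := by rw [hD]; simp
  have hvD : v ∈ S₂ \ S₁ := by rw [hD]; simp
  -- Claim A : a point of full common degree forces the block {p} ∪ (S₂ \ S₁) ∈ B₂
  have claimA : ∀ p ∈ S₁, (C.filter (fun b => p ∈ b)).card = 3 →
      insert p (S₂ \ S₁) ∈ B₂ := by
    intro p hp hdeg3
    have hfull : B₁.filter (fun b => p ∈ b) = C.filter (fun b => p ∈ b) :=
      (Finset.eq_of_subset_of_card_le (hCfilter_sub p)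
        (by rw [hdeg3, hdegB₁ p hp])).symm
    have hall : ∀ d ∈ B₁, p ∈ d → d ∈ C := by
      intro d hd hpd
      have hmem : d ∈ C.filter (fun b => p ∈ b) := by
        rw [← hfull, Finset.mem_filter]; exact ⟨hd, hpd⟩
      exact (Finset.mem_filter.mp hmem).1
    have hpS₂ : p ∈ S₂ := hS₁S₂ hp
    have hpu : p ≠ u := fun h => (Finset.mem_sdiff.mp huD).2 (h ▸ hp)
    obtain ⟨g, ⟨hgB₂, hpg, hug⟩, -⟩ := h₂.2 p hpS₂ u (Finset.mem_sdiff.mp huD).1 hpu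
    have hg3 : g.card = 3 := (h₂.1 g hgB₂).2
    have hgS₂ : g ⊆ S₂ := (h₂.1 g hgB₂).1
    have hgS₁ : g ∩ S₁ = {p} := by
      apply Finset.Subset.antisymm
      · intro w hw
        rw [Finset.mem_inter] at hw
        rw [Finset.mem_singleton]
        by_contra hwp
        obtain ⟨d, ⟨hdB₁, hpd, hwd⟩, -⟩ := h₁.2 p hp w hw.2 (fun h => hwp h.symm)
        have hdC := hall d hdB₁ hpd
        have hdg : d = g := sts_block_unique h₂ (hCB₂ hdC) hgB₂
          (show p ≠ w from fun h => hwp h.symm) hpd hwd hpg hw.1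
        have hud : u ∈ d := by rw [hdg]; exact hug
        exact (Finset.mem_sdiff.mp huD).2 ((h₁.1 d hdB₁).1 hud)
      · intro w hw
        rw [Finset.mem_singleton] at hw
        subst hw
        exact Finset.mem_inter.mpr ⟨hpg, hp⟩
    have hsd : (g \ S₁).card = 2 := by
      have h1 : g \ S₁ = g \ (g ∩ S₁) := by
        ext z; simp only [Finset.mem_sdiff, Finset.mem_inter]; tauto
      rw [h1, Finset.card_sdiff_of_subset Finset.inter_subset_left, hgS₁,
        Finset.card_singleton, hg3]
    have hgDsub : g \ S₁ ⊆ S₂ \ S₁ := fun z hz =>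
      Finset.mem_sdiff.mpr ⟨hgS₂ (Finset.mem_sdiff.mp hz).1, (Finset.mem_sdiff.mp hz).2⟩
    have hgD : g \ S₁ = S₂ \ S₁ :=
      Finset.eq_of_subset_of_card_le hgDsub (by rw [hsd, hDcard])
    have hge : g = insert p (S₂ \ S₁) := by
      ext z
      simp only [Finset.mem_insert]
      constructor
      · intro hz
        by_cases hzS₁ : z ∈ S₁
        · left
          have hzp : z ∈ g ∩ S₁ := Finset.mem_inter.mpr ⟨hz, hzS₁⟩
          rw [hgS₁, Finset.mem_singleton] at hzp; exact hzp
        · right; rw [← hgD]; exact Finset.mem_sdiff.mpr ⟨hz, hzS₁⟩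
      · rintro (rfl | hz)
        · exact hpg
        · rw [← hgD] at hz; exact (Finset.mem_sdiff.mp hz).1
    rw [← hge]; exact hgB₂
  -- Claim B : at most one point of full common degree
  have claimB : ∀ p ∈ S₁, ∀ q ∈ S₁, (C.filter (fun b => p ∈ b)).card = 3 →
      (C.filter (fun b => q ∈ b)).card = 3 → p = q := by
    intro p hp q hq h3p h3q
    have hb1 := claimA p hp h3p
    have hb2 := claimA q hq h3q
    have heq : insert p (S₂ \ S₁) = insert q (S₂ \ S₁) :=
      sts_block_unique h₂ hb1 hb2 huv (Finset.mem_insert_of_mem huD)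
        (Finset.mem_insert_of_mem hvD) (Finset.mem_insert_of_mem huD)
        (Finset.mem_insert_of_mem hvD)
    have hpmem : p ∈ insert q (S₂ \ S₁) := heq ▸ Finset.mem_insert_self p _
    rcases Finset.mem_insert.mp hpmem with h | h
    · exact h
    · exact absurd hp (Finset.mem_sdiff.mp h).2
  -- degree counting
  have hsumC : ∑ p ∈ S₁, (C.filter (fun b => p ∈ b)).card = 3 * C.card :=
    sts_sum_deg C hCblocks
  have h15 : 15 ≤ ∑ p ∈ S₁, (C.filter (fun b => p ∈ b)).card := by
    rw [hsumC]; omega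
  obtain ⟨p0, hp0S, hp0deg⟩ : ∃ p0 ∈ S₁, (C.filter (fun b => p0 ∈ b)).card = 3 := by
    by_contra hno
    push_neg at hno
    have hb : ∀ p ∈ S₁, (C.filter (fun b => p ∈ b)).card ≤ 2 := by
      intro p hp
      have h3 := hdegC3 p hp
      have h4 := hno p hp
      omega
    have hle := Finset.sum_le_sum hb
    rw [Finset.sum_const, hc₁, smul_eq_mul] at hle
    omega
  have hdeg2 : ∀ x ∈ S₁, x ≠ p0 → (C.filter (fun b => x ∈ b)).card = 2 := by
    have hle2 : ∀ x ∈ S₁, x ≠ p0 → (C.filter (fun b => x ∈ b)).card ≤ 2 := by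
      intro x hx hxne
      have h3 := hdegC3 x hx
      by_contra hgt
      have h3' : (C.filter (fun b => x ∈ b)).card = 3 := by omega
      exact hxne (claimB x hx p0 hp0S h3' hp0deg)
    intro x hx hxne
    by_contra hne2
    have hxlt : (C.filter (fun b => x ∈ b)).card < 2 :=
      lt_of_le_of_ne (hle2 x hx hxne) hne2
    have hsplit : (C.filter (fun b => p0 ∈ b)).card +
        ∑ p ∈ S₁.erase p0, (C.filter (fun b => p ∈ b)).card =
        ∑ p ∈ S₁, (C.filter (fun b => p ∈ b)).card :=
      Finset.add_sum_erase S₁ (fun p => (C.filter (fun b => p ∈ b)).card) hp0S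
    have hxe : x ∈ S₁.erase p0 := Finset.mem_erase.mpr ⟨hxne, hx⟩
    have hlt : ∑ p ∈ S₁.erase p0, (C.filter (fun b => p ∈ b)).card <
        ∑ _p ∈ S₁.erase p0, 2 :=
      Finset.sum_lt_sum
        (fun i hi => hle2 i (Finset.mem_of_mem_erase hi) (Finset.ne_of_mem_erase hi))
        ⟨x, hxe, hxlt⟩
    rw [Finset.sum_const, Finset.card_erase_of_mem hp0S, hc₁, smul_eq_mul] at hlt
    omega
  -- pick a point a ≠ p0 and the (unique) non-common block e through it
  obtain ⟨a, haE⟩ : (S₁.erase p0).Nonempty := by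
    rw [← Finset.card_pos, Finset.card_erase_of_mem hp0S, hc₁]; omega
  have haS₁ : a ∈ S₁ := Finset.mem_of_mem_erase haE
  have hap0 : a ≠ p0 := Finset.ne_of_mem_erase haE
  have hdega := hdeg2 a haS₁ hap0
  have hssub : C.filter (fun b => a ∈ b) ⊂ B₁.filter (fun b => a ∈ b) := by
    refine Finset.ssubset_iff_subset_ne.mpr ⟨hCfilter_sub a, ?_⟩
    intro h
    rw [h, hdegB₁ a haS₁] at hdega
    omega
  obtain ⟨e, heF, heCf⟩ := Finset.exists_of_ssubset hssub
  have heB₁ : e ∈ B₁ := (Finset.mem_filter.mp heF).1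
  have hae : a ∈ e := (Finset.mem_filter.mp heF).2
  have heC : e ∉ C := fun h => heCf (Finset.mem_filter.mpr ⟨h, hae⟩)
  have heS₁ : e ⊆ S₁ := (h₁.1 e heB₁).1
  have he3 : e.card = 3 := (h₁.1 e heB₁).2
  have hp0e : p0 ∉ e := by
    intro hp0e
    have hfull : B₁.filter (fun b => p0 ∈ b) = C.filter (fun b => p0 ∈ b) :=
      (Finset.eq_of_subset_of_card_le (hCfilter_sub p0)
        (by rw [hp0deg, hdegB₁ p0 hp0S])).symm
    have hmem : e ∈ C.filter (fun b => p0 ∈ b) := by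
      rw [← hfull, Finset.mem_filter]; exact ⟨heB₁, hp0e⟩
    exact heC (Finset.mem_filter.mp hmem).1
  -- the other two points of e
  have hea2 : (e.erase a).card = 2 := by
    rw [Finset.card_erase_of_mem hae, he3]
  obtain ⟨b, c, hbc, hbce⟩ := Finset.card_eq_two.mp hea2
  have hbE : b ∈ e.erase a := by rw [hbce]; simp
  have hcE : c ∈ e.erase a := by rw [hbce]; simp
  have hbe : b ∈ e := Finset.mem_of_mem_erase hbE
  have hce : c ∈ e := Finset.mem_of_mem_erase hcE
  have hba : b ≠ a := Finset.ne_of_mem_erase hbE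
  have hca : c ≠ a := Finset.ne_of_mem_erase hcE
  have hbS₁ : b ∈ S₁ := heS₁ hbe
  have hcS₁ : c ∈ S₁ := heS₁ hce
  -- every other B₁-block through a point of e is common
  have keyx : ∀ x ∈ e, ∀ d ∈ B₁, x ∈ d → d ≠ e → d ∈ C := by
    intro x hxe d hdB₁ hxd hde
    have hxS₁ : x ∈ S₁ := heS₁ hxe
    have hxp0 : x ≠ p0 := fun h => hp0e (h ▸ hxe)
    have hdeg2x := hdeg2 x hxS₁ hxp0
    have hnotmem : e ∉ C.filter (fun b => x ∈ b) :=
      fun h => heC (Finset.mem_filter.mp h).1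
    have hsub : insert e (C.filter (fun b => x ∈ b)) ⊆ B₁.filter (fun b => x ∈ b) := by
      intro d' hd'
      rcases Finset.mem_insert.mp hd' with rfl | hd'
      · exact Finset.mem_filter.mpr ⟨heB₁, hxe⟩
      · exact hCfilter_sub x hd'
    have hcards : (insert e (C.filter (fun b => x ∈ b))).card = 3 := by
      rw [Finset.card_insert_of_notMem hnotmem, hdeg2x]
    have heqf := Finset.eq_of_subset_of_card_le hsub
      (by rw [hdegB₁ x hxS₁, hcards])
    have hmem : d ∈ insert e (C.filter (fun b => x ∈ b)) := by
      rw [heqf]; exact Finset.mem_filter.mpr ⟨hdB₁, hxd⟩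
    rcases Finset.mem_insert.mp hmem with h | h
    · exact absurd h hde
    · exact (Finset.mem_filter.mp h).1
  -- the B₂ block on a pair of e has its third point outside S₁
  have lemW : ∀ x ∈ e, ∀ y ∈ e, x ≠ y →
      ∃ w ∈ S₂ \ S₁, ({x, y, w} : Finset α) ∈ B₂ := by
    intro x hxe y hye hxy
    have hxS₁ : x ∈ S₁ := heS₁ hxe
    have hyS₁ : y ∈ S₁ := heS₁ hye
    obtain ⟨g, ⟨hgB₂, hxg, hyg⟩, -⟩ := h₂.2 x (hS₁S₂ hxS₁) y (hS₁S₂ hyS₁) hxy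
    have hg3 : g.card = 3 := (h₂.1 g hgB₂).2
    have hgS₂ : g ⊆ S₂ := (h₂.1 g hgB₂).1
    have hxysub : ({x, y} : Finset α) ⊆ g := by
      intro z hz
      rcases Finset.mem_insert.mp hz with rfl | hz
      · exact hxg
      · rw [Finset.mem_singleton] at hz; subst hz; exact hyg
    have hcardxy : ({x, y} : Finset α).card = 2 := Finset.card_pair hxy
    have h1 : (g \ {x, y}).card = 1 := by
      rw [Finset.card_sdiff_of_subset hxysub, hg3, hcardxy]
    obtain ⟨w, hw⟩ := Finset.card_eq_one.mp h1
    have hwg : w ∈ g ∧ w ∉ ({x, y} : Finset α) := by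
      have hmem : w ∈ g \ {x, y} := by rw [hw]; simp
      exact Finset.mem_sdiff.mp hmem
    have hwx : w ≠ x := fun h => hwg.2 (by simp [h])
    have hwy : w ≠ y := fun h => hwg.2 (by simp [h])
    have hgeq : g = {x, y, w} := by
      apply Finset.Subset.antisymm
      · intro z hz
        by_cases hzxy : z ∈ ({x, y} : Finset α)
        · simp only [Finset.mem_insert, Finset.mem_singleton] at hzxy ⊢; tauto
        · have hmem : z ∈ g \ {x, y} := Finset.mem_sdiff.mpr ⟨hz, hzxy⟩
          rw [hw, Finset.mem_singleton] at hmem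
          simp [hmem]
      · intro z hz
        simp only [Finset.mem_insert, Finset.mem_singleton] at hz
        rcases hz with rfl | rfl | rfl
        · exact hxg
        · exact hyg
        · exact hwg.1
    have hwS₁ : w ∉ S₁ := by
      intro hwS₁
      by_cases hwe : w ∈ e
      · have hge : g ⊆ e := by
          rw [hgeq]
          intro z hz
          simp only [Finset.mem_insert, Finset.mem_singleton] at hz
          rcases hz with rfl | rfl | rfl
          exacts [hxe, hye, hwe]
        have hgee : g = e := Finset.eq_of_subset_of_card_le hge (by rw [hg3, he3])
        exact heC (by rw [hCdef]; exact Finset.mem_inter.mpr ⟨heB₁, hgee ▸ hgB₂⟩)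
      · obtain ⟨d, ⟨hdB₁, hxd, hwd⟩, -⟩ := h₁.2 x hxS₁ w hwS₁ (fun h => hwx h.symm)
        have hde : d ≠ e := fun h => hwe (h ▸ hwd)
        have hdC := keyx x hxe d hdB₁ hxd hde
        have hyd : y ∉ d := by
          intro hyd
          exact hde (sts_block_unique h₁ hdB₁ heB₁ hxy hxd hyd hxe hye)
        have hdg : d = g := sts_block_unique h₂ (hCB₂ hdC) hgB₂
          (show x ≠ w from fun h => hwx h.symm) hxd hwd hxg hwg.1
        exact hyd (hdg ▸ hyg)
    exact ⟨w, Finset.mem_sdiff.mpr ⟨hgS₂ hwg.1, hwS₁⟩, hgeq ▸ hgB₂⟩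
  -- two B₂ blocks sharing a pair {x, w} are equal
  have pairContra : ∀ g1 ∈ B₂, ∀ g2 ∈ B₂, ∀ x w y : α, x ∈ S₁ → w ∉ S₁ →
      x ∈ g1 → w ∈ g1 → x ∈ g2 → w ∈ g2 → y ∈ g1 → y ∉ g2 → False := by
    intro g1 hg1 g2 hg2 x w y hx hw hx1 hw1 hx2 hw2 hy1 hy2
    have hxw : x ≠ w := fun h => hw (h ▸ hx)
    have heq := sts_block_unique h₂ hg1 hg2 hxw hx1 hw1 hx2 hw2
    exact hy2 (heq ▸ hy1)
  -- the three colors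
  have hab : a ≠ b := fun h => hba h.symm
  have hac : a ≠ c := fun h => hca h.symm
  obtain ⟨w1, hw1D, hg1⟩ := lemW a hae b hbe hab
  obtain ⟨w2, hw2D, hg2⟩ := lemW a hae c hce hac
  obtain ⟨w3, hw3D, hg3'⟩ := lemW b hbe c hce hbc
  have hw1n : w1 ∉ S₁ := (Finset.mem_sdiff.mp hw1D).2
  have hw2n : w2 ∉ S₁ := (Finset.mem_sdiff.mp hw2D).2
  have hw3n : w3 ∉ S₁ := (Finset.mem_sdiff.mp hw3D).2
  have hne12 : w1 ≠ w2 := by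
    intro h
    refine pairContra _ hg1 _ hg2 a w1 b haS₁ hw1n (by simp) (by simp) (by simp)
      (by rw [h]; simp) (by simp) ?_
    simp only [Finset.mem_insert, Finset.mem_singleton]
    push_neg
    exact ⟨hba, hbc, fun hh => hw2n (hh ▸ hbS₁)⟩
  have hne13 : w1 ≠ w3 := by
    intro h
    refine pairContra _ hg1 _ hg3' b w1 a hbS₁ hw1n (by simp) (by simp) (by simp)
      (by rw [h]; simp) (by simp) ?_
    simp only [Finset.mem_insert, Finset.mem_singleton]
    push_neg
    exact ⟨hab, hac, fun hh => hw3n (hh ▸ haS₁)⟩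
  have hne23 : w2 ≠ w3 := by
    intro h
    refine pairContra _ hg2 _ hg3' c w2 a hcS₁ hw2n (by simp) (by simp) (by simp)
      (by rw [h]; simp) (by simp) ?_
    simp only [Finset.mem_insert, Finset.mem_singleton]
    push_neg
    exact ⟨hab, hac, fun hh => hw3n (hh ▸ haS₁)⟩
  rw [hD] at hw1D hw2D hw3D
  simp only [Finset.mem_insert, Finset.mem_singleton] at hw1D hw2D hw3D
  rcases hw1D with rfl | rfl <;> rcases hw2D with rfl | rfl <;>
    rcases hw3D with rfl | rfl <;>
    first
      | exact hne12 rfl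
      | exact hne13 rfl
      | exact hne23 rfl
end

section
/- The supports of any two distinct almost-sub-STS(9)'s of the same Steiner triple system intersect in at most 3 points. -/
variable {α : Type*} [DecidableEq α]

set_option linter.unusedSectionVars false

section AuxLemmas

/-- uniqueness of the block through a pair -/
lemma sts_unique {S : Finset α} {B : Finset (Finset α)} (hS : IsSTS S B)
    {b c : Finset α} {p q : α} (hb : b ∈ B) (hc : c ∈ B)
    (hpb : p ∈ b) (hqb : q ∈ b) (hpc : p ∈ c) (hqc : q ∈ c) (hpq : p ≠ q) : b = c := by
  have hpS : p ∈ S := (hS.1 b hb).1 hpb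
  have hqS : q ∈ S := (hS.1 b hb).1 hqb
  obtain ⟨u, -, hu⟩ := hS.2 p hpS q hqS hpq
  rw [hu b ⟨hb, hpb, hqb⟩, hu c ⟨hc, hpc, hqc⟩]

lemma sts_exists {S : Finset α} {B : Finset (Finset α)} (hS : IsSTS S B)
    {p q : α} (hp : p ∈ S) (hq : q ∈ S) (hpq : p ≠ q) :
    ∃ b, b ∈ B ∧ p ∈ b ∧ q ∈ b := by
  obtain ⟨u, hu, -⟩ := hS.2 p hp q hq hpq
  exact ⟨u, hu⟩

lemma third_point {b : Finset α} (hb : b.card = 3) {p q : α}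
    (hp : p ∈ b) (hq : q ∈ b) (hpq : p ≠ q) :
    ∃ z, z ∈ b ∧ z ≠ p ∧ z ≠ q ∧ b = {p, q, z} := by
  obtain ⟨x, y, z, hxy, hxz, hyz, rfl⟩ := Finset.card_eq_three.mp hb
  simp only [Finset.mem_insert, Finset.mem_singleton] at hp hq
  rcases hp with rfl | rfl | rfl <;> rcases hq with rfl | rfl | rfl <;>
    first
      | exact absurd rfl hpq
      | (refine ⟨x, by simp, ?_, ?_, ?_⟩ <;> first | tauto | (ext a; simp; tauto))
      | (refine ⟨y, by simp, ?_, ?_, ?_⟩ <;> first | tauto | (ext a; simp; tauto))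
      | (refine ⟨z, by simp, ?_, ?_, ?_⟩ <;> first | tauto | (ext a; simp; tauto))

set_option linter.unusedSectionVars false

/-- blocks of the small STS are blocks of it -/
lemma asub_block {Bl : Finset (Finset α)} {S1 : Finset α} {B1 : Finset (Finset α)} {T1 : Finset α}
    (h1 : IsAlmostSubSTS Bl S1 B1 T1) {b : Finset α} (hb : b ∈ B1) :
    b ∈ insert T1 B1 := Finset.mem_insert_of_mem hb

/-- no two points of T1 lie in a block of B1 -/
lemma no_pair_in_T {Bl : Finset (Finset α)} {S1 : Finset α} {B1 : Finset (Finset α)} {T1 : Finset α}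
    (h1 : IsAlmostSubSTS Bl S1 B1 T1) {b : Finset α} (hb : b ∈ B1) {p q : α}
    (hpb : p ∈ b) (hqb : q ∈ b) (hpq : p ≠ q) (hpT : p ∈ T1) (hqT : q ∈ T1) : False := by
  have := sts_unique h1.2.2 (asub_block h1 hb) (Finset.mem_insert_self T1 B1)
    hpb hqb hpT hqT hpq
  exact h1.2.1 (this ▸ hb)

/-- a pair of the intersection not inside T1 nor T2 has a common block -/
lemma good_block {S S1 S2 : Finset α} {Bl B1 B2 : Finset (Finset α)} {T1 T2 : Finset α}
    (hSTS : IsSTS S Bl) (hS1 : S1 ⊆ S)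
    (h1 : IsAlmostSubSTS Bl S1 B1 T1) (h2 : IsAlmostSubSTS Bl S2 B2 T2)
    {p q : α} (hp : p ∈ S1 ∩ S2) (hq : q ∈ S1 ∩ S2) (hpq : p ≠ q)
    (e1 : ¬(p ∈ T1 ∧ q ∈ T1)) (e2 : ¬(p ∈ T2 ∧ q ∈ T2)) :
    ∃ m, m ∈ B1 ∧ m ∈ B2 ∧ p ∈ m ∧ q ∈ m := by
  simp only [Finset.mem_inter] at hp hq
  obtain ⟨b1, hb1, hpb1, hqb1⟩ := sts_exists h1.2.2 hp.1 hq.1 hpq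
  obtain ⟨b2, hb2, hpb2, hqb2⟩ := sts_exists h2.2.2 hp.2 hq.2 hpq
  have hb1' : b1 ∈ B1 := by
    rcases Finset.mem_insert.mp hb1 with rfl | h
    · exact absurd ⟨hpb1, hqb1⟩ e1
    · exact h
  have hb2' : b2 ∈ B2 := by
    rcases Finset.mem_insert.mp hb2 with rfl | h
    · exact absurd ⟨hpb2, hqb2⟩ e2
    · exact h
  have : b1 = b2 := sts_unique hSTS (h1.1 hb1') (h2.1 hb2') hpb1 hqb1 hpb2 hqb2 hpq
  exact ⟨b1, hb1', this ▸ hb2', hpb1, hqb1⟩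

/-- a common block lies inside the intersection and has 3 points -/
lemma common_sub {S1 S2 : Finset α} {Bl B1 B2 : Finset (Finset α)} {T1 T2 : Finset α}
    (h1 : IsAlmostSubSTS Bl S1 B1 T1) (h2 : IsAlmostSubSTS Bl S2 B2 T2)
    {m : Finset α} (hm1 : m ∈ B1) (hm2 : m ∈ B2) :
    m ⊆ S1 ∩ S2 ∧ m.card = 3 := by
  have a := h1.2.2.1 m (asub_block h1 hm1)
  have b := h2.2.2.1 m (asub_block h2 hm2)
  exact ⟨Finset.subset_inter a.1 b.1, a.2⟩

/-- parity: for a suitable point p of the intersection, the rest of the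
intersection is partitioned into pairs by blocks. -/
lemma parity_lemma {S S1 S2 : Finset α} {Bl B1 B2 : Finset (Finset α)} {T1 T2 : Finset α}
    (hSTS : IsSTS S Bl) (hS1 : S1 ⊆ S)
    (h1 : IsAlmostSubSTS Bl S1 B1 T1) (h2 : IsAlmostSubSTS Bl S2 B2 T2)
    {p : α} (hp : p ∈ S1 ∩ S2) (hp2 : p ∉ T2) (hp1 : p ∉ T1 ∨ T1 ⊆ S1 ∩ S2) :
    2 ∣ ((S1 ∩ S2).erase p).card := by
  set I := S1 ∩ S2 with hI
  set X := I.erase p with hX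
  set F := (insert T1 B1).filter (fun b => p ∈ b) with hF
  have hpS1 : p ∈ S1 := (Finset.mem_inter.mp hp).1
  -- key: any block through p and a point of X lies in I (or is T1 ⊆ I)
  have key : ∀ b ∈ F, ∀ y ∈ b ∩ X, b ⊆ I := by
    intro b hb y hy
    rw [hF, Finset.mem_filter] at hb
    rw [Finset.mem_inter, hX, Finset.mem_erase] at hy
    have hyI : y ∈ I := hy.2.2
    have hyp : y ≠ p := hy.2.1
    by_cases hT : p ∈ T1 ∧ y ∈ T1
    · -- then b = T1 and T1 ⊆ I
      have hTI : T1 ⊆ I := hp1.resolve_left (fun h => h hT.1)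
      have : b = T1 := sts_unique h1.2.2 hb.1 (Finset.mem_insert_self T1 B1)
        hb.2 hy.1 hT.1 hT.2 (fun h => hyp h.symm)
      exact this ▸ hTI
    · have e2 : ¬(p ∈ T2 ∧ y ∈ T2) := fun h => hp2 h.1
      obtain ⟨m, hm1, hm2, hpm, hym⟩ := good_block hSTS hS1 h1 h2 hp hyI
        (fun h => hyp h.symm) hT e2
      have : b = m := sts_unique h1.2.2 hb.1 (asub_block h1 hm1)
        hb.2 hy.1 hpm hym (fun h => hyp h.symm)
      exact this ▸ (common_sub h1 h2 hm1 hm2).1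
  have hcover : X = F.biUnion (fun b => b ∩ X) := by
    apply Finset.Subset.antisymm
    · intro y hy
      have hy' := hy
      rw [hX, Finset.mem_erase, hI, Finset.mem_inter] at hy'
      obtain ⟨b, hb, hpb, hyb⟩ := sts_exists h1.2.2 hpS1 hy'.2.1 (fun h => hy'.1 h.symm)
      rw [Finset.mem_biUnion]
      exact ⟨b, by rw [hF, Finset.mem_filter]; exact ⟨hb, hpb⟩,
        Finset.mem_inter.mpr ⟨hyb, hy⟩⟩
    · intro y hy
      rw [Finset.mem_biUnion] at hy
      obtain ⟨b, -, hb⟩ := hy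
      exact (Finset.mem_inter.mp hb).2
  have hdisj : ∀ x ∈ F, ∀ y ∈ F, x ≠ y → Disjoint (x ∩ X) (y ∩ X) := by
    intro b hb c hc hbc
    rw [Finset.disjoint_left]
    intro y hyb hyc
    rw [hF, Finset.mem_filter] at hb hc
    rw [Finset.mem_inter] at hyb hyc
    have hyp : y ≠ p := by
      rw [hX, Finset.mem_erase] at hyb; exact hyb.2.1
      
    exact hbc (sts_unique h1.2.2 hb.1 hc.1 hb.2 hyb.1 hc.2 hyc.1 (fun h => hyp h.symm))
  rw [hcover, Finset.card_biUnion hdisj]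
  apply Finset.dvd_sum
  intro b hb
  rcases Finset.eq_empty_or_nonempty (b ∩ X) with he | ⟨y, hy⟩
  · rw [he]; simp
  · -- card = 2
    have hbI := key b hb y hy
    have hbF := hb
    rw [hF, Finset.mem_filter] at hbF
    have hbcard : b.card = 3 := (h1.2.2.1 b hbF.1).2
    have hy' := hy
    rw [Finset.mem_inter, hX, Finset.mem_erase] at hy'
    obtain ⟨z, hzb, hzp, hzy, hbeq⟩ := third_point hbcard hbF.2 hy'.1
      (fun h => hy'.2.1 h.symm)
    have hzX : z ∈ X := by
      rw [hX, Finset.mem_erase]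
      exact ⟨hzp, hbI hzb⟩
    have : b ∩ X = {y, z} := by
      apply Finset.Subset.antisymm
      · intro w hw
        rw [Finset.mem_inter] at hw
        have := hw.1
        rw [hbeq] at this
        simp only [Finset.mem_insert, Finset.mem_singleton] at this
        rcases this with rfl | rfl | rfl
        · exact absurd (Finset.mem_erase.mp hw.2).1 (by simp)
        · simp
        · simp
      · intro w hw
        simp only [Finset.mem_insert, Finset.mem_singleton] at hw
        rcases hw with rfl | rfl
        · exact hy
        · exact Finset.mem_inter.mpr ⟨hzb, hzX⟩
    rw [this, Finset.card_insert_of_notMem (by simp [Ne.symm hzy]), Finset.card_singleton]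

lemma k7_case {S S1 S2 : Finset α} {Bl B1 B2 : Finset (Finset α)} {T1 T2 : Finset α}
    (hSTS : IsSTS S Bl) (hS1 : S1 ⊆ S)
    (h1 : IsAlmostSubSTS Bl S1 B1 T1) (h2 : IsAlmostSubSTS Bl S2 B2 T2)
    (hc1 : S1.card = 9) (hI7 : (S1 ∩ S2).card = 7) : False := by
  set I := S1 ∩ S2 with hI
  have hIS1 : I ⊆ S1 := Finset.inter_subset_left
  have hsd : (S1 \ I).card = 2 := by
    rw [Finset.card_sdiff_of_subset hIS1, hc1, hI7]
  obtain ⟨u, v, huv, hUV⟩ := Finset.card_eq_two.mp hsd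
  have hu : u ∈ S1 \ I := by rw [hUV]; simp
  have hv : v ∈ S1 \ I := by rw [hUV]; simp
  rw [Finset.mem_sdiff] at hu hv
  obtain ⟨c, hc, huc, hvc⟩ := sts_exists h1.2.2 hu.1 hv.1 huv
  have hccard : c.card = 3 := (h1.2.2.1 c hc).2
  -- qualifying points lie in c
  have Q : ∀ p ∈ I, p ∉ T2 → (p ∉ T1 ∨ T1 ⊆ I) → p ∈ c := by
    intro p hpI hp2 hp1
    have hpS1 : p ∈ S1 := hIS1 hpI
    have hpu : p ≠ u := fun h => hu.2 (h ▸ hpI)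
    obtain ⟨b, hb, hpb, hub⟩ := sts_exists h1.2.2 hpS1 hu.1 hpu
    have hbcard : b.card = 3 := (h1.2.2.1 b hb).2
    have hbS1 : b ⊆ S1 := (h1.2.2.1 b hb).1
    obtain ⟨z, hzb, hzp, hzu, hbeq⟩ := third_point hbcard hpb hub hpu
    have hzI : z ∉ I := by
      intro hzI
      by_cases hT : p ∈ T1 ∧ z ∈ T1
      · have hTI : T1 ⊆ I := hp1.resolve_left (fun h => h hT.1)
        have : b = T1 := sts_unique h1.2.2 hb (Finset.mem_insert_self T1 B1)
          hpb hzb hT.1 hT.2 (Ne.symm hzp)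
        exact hu.2 (hTI (this ▸ hub))
      · obtain ⟨m, hm1, hm2, hpm, hzm⟩ := good_block hSTS hS1 h1 h2 hpI hzI
          (Ne.symm hzp) hT (fun h => hp2 h.1)
        have : b = m := sts_unique h1.2.2 hb (asub_block h1 hm1)
          hpb hzb hpm hzm (Ne.symm hzp)
        exact hu.2 ((common_sub h1 h2 hm1 hm2).1 (this ▸ hub))
    have hzsd : z ∈ S1 \ I := Finset.mem_sdiff.mpr ⟨hbS1 hzb, hzI⟩
    rw [hUV] at hzsd
    simp only [Finset.mem_insert, Finset.mem_singleton] at hzsd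
    rcases hzsd with rfl | rfl
    · exact absurd rfl hzu
    · -- b contains u and v, so b = c and p ∈ c
      have : b = c := sts_unique h1.2.2 hb hc hub hzb huc hvc huv
      exact this ▸ hpb
  -- c ∩ I has at most one element
  obtain ⟨t, htc, htu, htv, hceq⟩ := third_point hccard huc hvc huv
  have hcI : c ∩ I ⊆ {t} := by
    intro w hw
    rw [Finset.mem_inter] at hw
    have := hw.1
    rw [hceq] at this
    simp only [Finset.mem_insert, Finset.mem_singleton] at this ⊢
    rcases this with rfl | rfl | rfl
    · exact absurd hw.2 hu.2
    · exact absurd hw.2 hv.2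
    · rfl
  -- hence I \ (T1 ∪ T2) has at most one element
  have hsub : I \ (T1 ∪ T2) ⊆ c ∩ I := by
    intro p hp
    rw [Finset.mem_sdiff, Finset.mem_union] at hp
    push_neg at hp
    exact Finset.mem_inter.mpr ⟨Q p hp.1 hp.2.2 (Or.inl hp.2.1), hp.1⟩
  have h1le : (I \ (T1 ∪ T2)).card ≤ 1 := le_trans (Finset.card_le_card hsub)
    (le_trans (Finset.card_le_card hcI) (by simp))
  -- so T1 ∩ I and T2 ∩ I both have 3 elements and are disjoint
  have hT1card : T1.card = 3 := (h1.2.2.1 T1 (Finset.mem_insert_self T1 B1)).2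
  have hT2card : T2.card = 3 := (h2.2.2.1 T2 (Finset.mem_insert_self T2 B2)).2
  have hint : (I ∩ (T1 ∪ T2)).card + (I \ (T1 ∪ T2)).card = 7 := by
    rw [Finset.card_inter_add_card_sdiff, hI7]
  have hsplit : (I ∩ (T1 ∪ T2)) = (I ∩ T1) ∪ (I ∩ T2) := Finset.inter_union_distrib_left ..
  have hle1 : (I ∩ T1).card ≤ 3 := hT1card ▸ Finset.card_le_card Finset.inter_subset_right
  have hle2 : (I ∩ T2).card ≤ 3 := hT2card ▸ Finset.card_le_card Finset.inter_subset_right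
  have hunion : (I ∩ (T1 ∪ T2)).card = ((I ∩ T1) ∪ (I ∩ T2)).card := by rw [hsplit]
  have hcard1 : (I ∩ T1).card = 3 ∧ (I ∩ T2).card = 3 ∧
      ((I ∩ T1) ∩ (I ∩ T2)).card = 0 := by
    have := Finset.card_union_add_card_inter (I ∩ T1) (I ∩ T2)
    omega
  have hT1I : T1 ⊆ I := by
    have : I ∩ T1 = T1 := Finset.eq_of_subset_of_card_le Finset.inter_subset_right
      (by omega)
    exact fun x hx => Finset.mem_of_mem_inter_left (this.symm ▸ hx : x ∈ I ∩ T1)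
  -- every point of T1 is in c ∩ I : contradiction with card
  have hT1c : T1 ⊆ c ∩ I := by
    intro p hpT1
    have hpI : p ∈ I := hT1I hpT1
    have hp2 : p ∉ T2 := by
      intro hp2
      have : p ∈ (I ∩ T1) ∩ (I ∩ T2) := by
        simp [Finset.mem_inter]; tauto
      rw [Finset.card_eq_zero.mp hcard1.2.2] at this
      exact absurd this (Finset.notMem_empty p)
    exact Finset.mem_inter.mpr ⟨Q p hpI hp2 (Or.inr hT1I), hpI⟩
  have : (3:ℕ) ≤ 1 := by
    calc (3:ℕ) = T1.card := hT1card.symm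
    _ ≤ (c ∩ I).card := Finset.card_le_card hT1c
    _ ≤ 1 := le_trans (Finset.card_le_card hcI) (by simp)
  omega

/-- at most one point in common for two distinct blocks -/
lemma blocks_inter {S1 : Finset α} {B1 : Finset (Finset α)}
    (hS : IsSTS S1 B1) {b c : Finset α} (hb : b ∈ B1) (hc : c ∈ B1)
    (hbc : b ≠ c) : (b ∩ c).card ≤ 1 := by
  by_contra h
  push_neg at h
  obtain ⟨x, hx, y, hy, hxy⟩ := Finset.one_lt_card.mp h
  rw [Finset.mem_inter] at hx hy
  exact hbc (sts_unique hS hb hc hx.1 hy.1 hx.2 hy.2 hxy)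

lemma k5_caseA {S S1 S2 : Finset α} {Bl B1 B2 : Finset (Finset α)} {T1 T2 : Finset α}
    (hSTS : IsSTS S Bl) (hS1 : S1 ⊆ S)
    (h1 : IsAlmostSubSTS Bl S1 B1 T1) (h2 : IsAlmostSubSTS Bl S2 B2 T2)
    (hI5 : (S1 ∩ S2).card = 5) {p : α} (hpI : p ∈ S1 ∩ S2)
    (hp1 : p ∉ T1) (hp2 : p ∉ T2) : False := by
  have hT1card : T1.card = 3 := (h1.2.2.1 T1 (Finset.mem_insert_self T1 B1)).2
  have hT2card : T2.card = 3 := (h2.2.2.1 T2 (Finset.mem_insert_self T2 B2)).2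
  -- first block through p
  have hy1 : ((S1 ∩ S2).erase p).Nonempty := by
    apply Finset.card_pos.mp
    rw [Finset.card_erase_of_mem hpI, hI5]
    omega
  obtain ⟨y1, hy1⟩ := hy1
  rw [Finset.mem_erase] at hy1
  obtain ⟨m1, hm1B1, hm1B2, hpm1, hy1m1⟩ := good_block hSTS hS1 h1 h2 hpI hy1.2
    (Ne.symm hy1.1) (fun h => hp1 h.1) (fun h => hp2 h.1)
  obtain ⟨hm1I, hm1card⟩ := common_sub h1 h2 hm1B1 hm1B2
  obtain ⟨z1, hz1m1, hz1p, hz1y1, hm1eq⟩ := third_point hm1card hpm1 hy1m1 (Ne.symm hy1.1)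
  -- second block through p
  have hy2 : ((S1 ∩ S2) \ m1).Nonempty := by
    apply Finset.card_pos.mp
    have := Finset.card_sdiff_of_subset hm1I
    omega
  obtain ⟨y2, hy2⟩ := hy2
  rw [Finset.mem_sdiff] at hy2
  have hy2p : y2 ≠ p := fun h => hy2.2 (h ▸ hpm1)
  obtain ⟨m2, hm2B1, hm2B2, hpm2, hy2m2⟩ := good_block hSTS hS1 h1 h2 hpI hy2.1
    (Ne.symm hy2p) (fun h => hp1 h.1) (fun h => hp2 h.1)
  obtain ⟨hm2I, hm2card⟩ := common_sub h1 h2 hm2B1 hm2B2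
  obtain ⟨z2, hz2m2, hz2p, hz2y2, hm2eq⟩ := third_point hm2card hpm2 hy2m2 (Ne.symm hy2p)
  have hm12 : m1 ≠ m2 := fun h => hy2.2 (h ▸ hy2m2)
  -- m1 ∩ m2 = {p}
  have hinter : m1 ∩ m2 = {p} := by
    apply Finset.Subset.antisymm
    · intro w hw
      rw [Finset.mem_inter] at hw
      rw [Finset.mem_singleton]
      by_contra hwp
      exact hm12 (sts_unique h1.2.2 (asub_block h1 hm1B1) (asub_block h1 hm2B1)
        hpm1 hw.1 hpm2 hw.2 (fun h => hwp h.symm))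
    · simp [hpm1, hpm2]
  -- m1 ∪ m2 = I
  have hunion : m1 ∪ m2 = S1 ∩ S2 := by
    apply Finset.eq_of_subset_of_card_le (Finset.union_subset hm1I hm2I)
    have h5 := Finset.card_union_add_card_inter m1 m2
    rw [hinter] at h5
    simp only [Finset.card_singleton] at h5
    omega
  have hm2notm1 : ∀ w ∈ m2, w ≠ p → w ∉ m1 := by
    intro w hw hwp hwm1
    have : w ∈ m1 ∩ m2 := Finset.mem_inter.mpr ⟨hwm1, hw⟩
    rw [hinter, Finset.mem_singleton] at this
    exact hwp this
  -- crossing pairs are not good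
  have cross : ∀ a ∈ m1, a ≠ p → ∀ b ∈ m2, b ≠ p →
      (a ∈ T1 ∧ b ∈ T1) ∨ (a ∈ T2 ∧ b ∈ T2) := by
    intro a ha hap b hb hbp
    by_contra hcon
    push_neg at hcon
    have hab : a ≠ b := fun h => (hm2notm1 b hb hbp) (h ▸ ha)
    obtain ⟨m3, hm3B1, hm3B2, ham3, hbm3⟩ := good_block hSTS hS1 h1 h2 (hm1I ha)
      (hm2I hb) hab (fun h => hcon.1 h.1 h.2) (fun h => hcon.2 h.1 h.2)
    obtain ⟨hm3I, hm3card⟩ := common_sub h1 h2 hm3B1 hm3B2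
    have hm31 : m3 ≠ m1 := fun h => (hm2notm1 b hb hbp) (h ▸ hbm3)
    have hm32 : m3 ≠ m2 := by
      intro h
      have : a ∈ m1 ∩ m2 := Finset.mem_inter.mpr ⟨ha, h ▸ ham3⟩
      rw [hinter, Finset.mem_singleton] at this
      exact hap this
    have h31 := blocks_inter h1.2.2 (asub_block h1 hm3B1) (asub_block h1 hm1B1) hm31
    have h32 := blocks_inter h1.2.2 (asub_block h1 hm3B1) (asub_block h1 hm2B1) hm32
    have heq : m3 = (m3 ∩ m1) ∪ (m3 ∩ m2) := by
      rw [← Finset.inter_union_distrib_left, hunion]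
      exact (Finset.inter_eq_left.mpr hm3I).symm
    have hle : m3.card ≤ (m3 ∩ m1).card + (m3 ∩ m2).card := by
      conv_lhs => rw [heq]
      exact Finset.card_union_le _ _
    omega
  -- apply to the three pairs
  have P1 := cross y1 hy1m1 hy1.1 y2 hy2m2 hy2p
  have P2 := cross z1 hz1m1 hz1p z2 hz2m2 hz2p
  have P3 := cross y1 hy1m1 hy1.1 z2 hz2m2 hz2p
  -- distinctness for the 4-element sets
  have hy1y2 : y1 ≠ y2 := fun h => hy2.2 (h ▸ hy1m1)
  have hy1z2 : y1 ≠ z2 := fun h => (hm2notm1 z2 hz2m2 hz2p) (h ▸ hy1m1)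
  have hz1y2 : z1 ≠ y2 := fun h => hy2.2 (h ▸ hz1m1)
  have hz1z2 : z1 ≠ z2 := fun h => (hm2notm1 z2 hz2m2 hz2p) (h ▸ hz1m1)
  have card4 : ∀ T : Finset α, T.card = 3 → y1 ∈ T → z1 ∈ T → y2 ∈ T → z2 ∈ T → False := by
    intro T hT ha hb hc hd
    have hsub : ({y1, z1, y2, z2} : Finset α) ⊆ T := by
      intro w hw
      simp only [Finset.mem_insert, Finset.mem_singleton] at hw
      rcases hw with rfl | rfl | rfl | rfl <;> assumption
    have hcard : ({y1, z1, y2, z2} : Finset α).card = 4 := by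
      rw [Finset.card_insert_of_notMem (by simp [Ne.symm hz1y1, hy1y2, hy1z2]),
        Finset.card_insert_of_notMem (by simp [hz1y2, hz1z2]),
        Finset.card_insert_of_notMem (by simp [Ne.symm hz2y2]),
        Finset.card_singleton]
    have := Finset.card_le_card hsub
    omega
  rcases P1 with ⟨hA1, hA2⟩ | ⟨hA1, hA2⟩ <;> rcases P2 with ⟨hB1, hB2⟩ | ⟨hB1, hB2⟩ <;>
    rcases P3 with ⟨hC1, hC2⟩ | ⟨hC1, hC2⟩
  · exact card4 T1 hT1card hA1 hB1 hA2 hB2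
  · exact card4 T1 hT1card hA1 hB1 hA2 hB2
  · exact no_pair_in_T h1 hm2B1 hy2m2 hz2m2 (Ne.symm hz2y2) hA2 hC2
  · exact no_pair_in_T h2 hm1B2 hy1m1 hz1m1 (Ne.symm hz1y1) hC1 hB1
  · exact no_pair_in_T h1 hm1B1 hy1m1 hz1m1 (Ne.symm hz1y1) hC1 hB1
  · exact no_pair_in_T h2 hm2B2 hy2m2 hz2m2 (Ne.symm hz2y2) hA2 hC2
  · exact card4 T2 hT2card hA1 hB1 hA2 hB2
  · exact card4 T2 hT2card hA1 hB1 hA2 hB2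

lemma k5_caseB {S S1 S2 : Finset α} {Bl B1 B2 : Finset (Finset α)} {T1 T2 : Finset α}
    (hSTS : IsSTS S Bl) (hS1 : S1 ⊆ S)
    (h1 : IsAlmostSubSTS Bl S1 B1 T1) (h2 : IsAlmostSubSTS Bl S2 B2 T2)
    (hI5 : (S1 ∩ S2).card = 5)
    (hcov : ∀ x ∈ S1 ∩ S2, x ∈ T1 ∨ x ∈ T2)
    (hT1I : T1 ⊆ S1 ∩ S2) : False := by
  have hT1card : T1.card = 3 := (h1.2.2.1 T1 (Finset.mem_insert_self T1 B1)).2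
  have hT2card : T2.card = 3 := (h2.2.2.1 T2 (Finset.mem_insert_self T2 B2)).2
  -- the two points outside T1
  have hw : ((S1 ∩ S2) \ T1).card = 2 := by
    rw [Finset.card_sdiff_of_subset hT1I, hI5, hT1card]
  obtain ⟨w1, w2, hw12, hWeq⟩ := Finset.card_eq_two.mp hw
  have hw1 : w1 ∈ (S1 ∩ S2) \ T1 := by rw [hWeq]; simp
  have hw2 : w2 ∈ (S1 ∩ S2) \ T1 := by rw [hWeq]; simp
  rw [Finset.mem_sdiff] at hw1 hw2
  -- find two suitable points p1 ≠ p2 of T1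
  have hpts : ∃ p1 p2, p1 ∈ T1 ∧ p2 ∈ T1 ∧ p1 ≠ p2 ∧
      (¬(p1 ∈ T2 ∧ w1 ∈ T2)) ∧ (¬(p2 ∈ T2 ∧ w1 ∈ T2)) := by
    by_cases hwT2 : w1 ∈ T2
    · -- then T1 ∩ T2 has at most one point, pick p1 p2 in T1 \ T2
      have hsmall : ∀ q1 ∈ T1, ∀ q2 ∈ T1, q1 ∈ T2 → q2 ∈ T2 → q1 = q2 := by
        intro q1 hq1 q2 hq2 hq1T2 hq2T2
        by_contra hq12
        -- T2 = {q1, q2, w1}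
        have hsub : ({q1, q2, w1} : Finset α) ⊆ T2 := by
          intro x hx
          simp only [Finset.mem_insert, Finset.mem_singleton] at hx
          rcases hx with rfl | rfl | rfl <;> assumption
        have hq1w : q1 ≠ w1 := fun h => hw1.2 (h ▸ hq1)
        have hq2w : q2 ≠ w1 := fun h => hw1.2 (h ▸ hq2)
        have hc3 : ({q1, q2, w1} : Finset α).card = 3 := by
          rw [Finset.card_insert_of_notMem (by simp [hq12, hq1w]),
            Finset.card_insert_of_notMem (by simp [hq2w]), Finset.card_singleton]
        have hT2eq : T2 = {q1, q2, w1} :=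
          (Finset.eq_of_subset_of_card_le hsub (by omega)).symm
        -- then S1 ∩ S2 ⊆ T1 ∪ {w1}, contradiction with card 5
        have hsub2 : S1 ∩ S2 ⊆ insert w1 T1 := by
          intro x hx
          rcases hcov x hx with hxT1 | hxT2
          · exact Finset.mem_insert_of_mem hxT1
          · rw [hT2eq] at hxT2
            simp only [Finset.mem_insert, Finset.mem_singleton] at hxT2 ⊢
            rcases hxT2 with rfl | rfl | rfl
            · exact Or.inr hq1
            · exact Or.inr hq2
            · exact Or.inl rfl
        have := Finset.card_le_card hsub2
        have := Finset.card_insert_le w1 T1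
        omega
      -- T1 \ T2 has at least two points
      have h2pts : 1 < (T1 \ T2).card := by
        by_contra hle
        push_neg at hle
        have : T1.card ≤ (T1 \ T2).card + (T1 ∩ T2).card := by
          have := Finset.card_sdiff_add_card_inter T1 T2
          omega
        have hint1 : (T1 ∩ T2).card ≤ 1 := by
          by_contra hgt
          push_neg at hgt
          obtain ⟨a, ha, b, hb, hab⟩ := Finset.one_lt_card.mp hgt
          rw [Finset.mem_inter] at ha hb
          exact hab (hsmall a ha.1 b hb.1 ha.2 hb.2)
        omega
      obtain ⟨p1, hp1, p2, hp2, hp12⟩ := Finset.one_lt_card.mp h2pts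
      rw [Finset.mem_sdiff] at hp1 hp2
      exact ⟨p1, p2, hp1.1, hp2.1, hp12, fun h => hp1.2 h.1, fun h => hp2.2 h.1⟩
    · -- w1 ∉ T2, any two points of T1 work
      obtain ⟨p1, hp1, p2, hp2, hp12⟩ := Finset.one_lt_card.mp
        (show 1 < T1.card by omega)
      exact ⟨p1, p2, hp1, hp2, hp12, fun h => hwT2 h.2, fun h => hwT2 h.2⟩
  obtain ⟨p1, p2, hp1T1, hp2T1, hp12, he1, he2⟩ := hpts
  -- for each pi, get the common block through pi and w1; it must be {pi, w1, w2}
  have key : ∀ p, p ∈ T1 → ¬(p ∈ T2 ∧ w1 ∈ T2) →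
      ∃ m, m ∈ B1 ∧ m ∈ B2 ∧ p ∈ m ∧ w1 ∈ m ∧ w2 ∈ m := by
    intro p hpT1 hpe
    have hpI : p ∈ S1 ∩ S2 := hT1I hpT1
    have hpw1 : p ≠ w1 := fun h => hw1.2 (h ▸ hpT1)
    obtain ⟨m, hmB1, hmB2, hpm, hw1m⟩ := good_block hSTS hS1 h1 h2 hpI hw1.1
      hpw1 (fun h => hw1.2 h.2) hpe
    obtain ⟨hmI, hmcard⟩ := common_sub h1 h2 hmB1 hmB2
    obtain ⟨z, hzm, hzp, hzw1, hmeq⟩ := third_point hmcard hpm hw1m hpw1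
    have hzT1 : z ∉ T1 := fun hzT1 =>
      no_pair_in_T h1 hmB1 hpm hzm (Ne.symm hzp) hpT1 hzT1
    have : z ∈ (S1 ∩ S2) \ T1 := Finset.mem_sdiff.mpr ⟨hmI hzm, hzT1⟩
    rw [hWeq] at this
    simp only [Finset.mem_insert, Finset.mem_singleton] at this
    rcases this with rfl | rfl
    · exact absurd rfl hzw1
    · exact ⟨m, hmB1, hmB2, hpm, hw1m, hzm⟩
  obtain ⟨m1, hm1B1, -, hp1m1, hw1m1, hw2m1⟩ := key p1 hp1T1 he1
  obtain ⟨m2, hm2B1, -, hp2m2, hw1m2, hw2m2⟩ := key p2 hp2T1 he2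
  have : m1 = m2 := sts_unique h1.2.2 (asub_block h1 hm1B1) (asub_block h1 hm2B1)
    hw1m1 hw2m1 hw1m2 hw2m2 hw12
  -- then p1, p2 ∈ m1 with p1 ≠ p2 and both in T1 : contradiction
  exact no_pair_in_T h1 hm1B1 hp1m1 (this ▸ hp2m2) hp12 hp1T1 hp2T1

lemma k4_caseB {S S1 S2 : Finset α} {Bl B1 B2 : Finset (Finset α)} {T1 T2 : Finset α}
    (hSTS : IsSTS S Bl) (hS1 : S1 ⊆ S)
    (h1 : IsAlmostSubSTS Bl S1 B1 T1) (h2 : IsAlmostSubSTS Bl S2 B2 T2)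
    (hI4 : (S1 ∩ S2).card = 4)
    (hT1I : T1 ⊆ S1 ∩ S2) : False := by
  have hT1card : T1.card = 3 := (h1.2.2.1 T1 (Finset.mem_insert_self T1 B1)).2
  have hT2card : T2.card = 3 := (h2.2.2.1 T2 (Finset.mem_insert_self T2 B2)).2
  have hx : ((S1 ∩ S2) \ T1).card = 1 := by
    rw [Finset.card_sdiff_of_subset hT1I, hI4, hT1card]
  obtain ⟨x, hXeq⟩ := Finset.card_eq_one.mp hx
  have hxmem : x ∈ (S1 ∩ S2) \ T1 := by rw [hXeq]; simp
  rw [Finset.mem_sdiff] at hxmem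
  -- every p in T1 pairs with x inside T2
  have key : ∀ p ∈ T1, p ∈ T2 ∧ x ∈ T2 := by
    intro p hpT1
    by_contra hpe
    have hpI : p ∈ S1 ∩ S2 := hT1I hpT1
    have hxp : x ≠ p := fun h => hxmem.2 (h ▸ hpT1)
    obtain ⟨m, hmB1, hmB2, hxm, hpm⟩ := good_block hSTS hS1 h1 h2 hxmem.1 hpI
      hxp (fun h => hxmem.2 h.1) (fun h => hpe ⟨h.2, h.1⟩)
    obtain ⟨hmI, hmcard⟩ := common_sub h1 h2 hmB1 hmB2
    obtain ⟨z, hzm, hzx, hzp, hmeq⟩ := third_point hmcard hxm hpm hxp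
    have hzT1 : z ∈ T1 := by
      by_contra hzT1
      have : z ∈ (S1 ∩ S2) \ T1 := Finset.mem_sdiff.mpr ⟨hmI hzm, hzT1⟩
      rw [hXeq, Finset.mem_singleton] at this
      exact hzx this
    exact no_pair_in_T h1 hmB1 hpm hzm (Ne.symm hzp) hpT1 hzT1
  -- then T2 contains T1 and x : four points
  have hsub : insert x T1 ⊆ T2 := by
    intro w hw
    rw [Finset.mem_insert] at hw
    rcases hw with rfl | hw
    · obtain ⟨q, hq⟩ := Finset.card_pos.mp (show 0 < T1.card by omega)
      exact (key q hq).2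
    · exact (key w hw).1
  have : (insert x T1).card = 4 := by
    rw [Finset.card_insert_of_notMem hxmem.2, hT1card]
  have := Finset.card_le_card hsub
  omega

end AuxLemmas

theorem almostSubSTS9_supports_inter_le_three (S S' S'' : Finset α)
    (Bl B' B'' : Finset (Finset α)) (T' T'' : Finset α)
    (hSTS : IsSTS S Bl)
    (hS' : S' ⊆ S) (hS'' : S'' ⊆ S)
    (hc' : S'.card = 9) (hc'' : S''.card = 9)
    (h' : IsAlmostSubSTS Bl S' B' T') (h'' : IsAlmostSubSTS Bl S'' B'' T'')
    (hne : S' ≠ S'') :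
    (S' ∩ S'').card ≤ 3 := by
  by_contra hcon
  push_neg at hcon
  have hsub1 : S' ∩ S'' ⊆ S' := Finset.inter_subset_left
  have hsub2 : S' ∩ S'' ⊆ S'' := Finset.inter_subset_right
  have h9 : (S' ∩ S'').card ≤ 9 := hc' ▸ Finset.card_le_card hsub1
  have hT1card : T'.card = 3 := (h'.2.2.1 T' (Finset.mem_insert_self T' B')).2
  have hT2card : T''.card = 3 := (h''.2.2.1 T'' (Finset.mem_insert_self T'' B'')).2
  have hIc : (S'' ∩ S').card = (S' ∩ S'').card := by rw [Finset.inter_comm]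
  have inter3 : ∀ T : Finset α, T.card = 3 → 3 ≤ ((S' ∩ S'') ∩ T).card →
      T ⊆ S' ∩ S'' := by
    intro T h3 hge
    have heq : (S' ∩ S'') ∩ T = T :=
      Finset.eq_of_subset_of_card_le Finset.inter_subset_right (by omega)
    intro x hx
    have : x ∈ (S' ∩ S'') ∩ T := heq.symm ▸ hx
    exact (Finset.mem_inter.mp this).1
  -- cover cardinality bound, used in several cases
  have covbound : (∀ x ∈ S' ∩ S'', x ∈ T' ∨ x ∈ T'') →
      (S' ∩ S'').card + (((S' ∩ S'') ∩ T') ∩ ((S' ∩ S'') ∩ T'')).card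
        = ((S' ∩ S'') ∩ T').card + ((S' ∩ S'') ∩ T'').card := by
    intro hcov
    have hcover : S' ∩ S'' = ((S' ∩ S'') ∩ T') ∪ ((S' ∩ S'') ∩ T'') := by
      rw [← Finset.inter_union_distrib_left]
      apply Finset.Subset.antisymm
      · intro x hx
        rw [Finset.mem_inter, Finset.mem_union]
        exact ⟨hx, hcov x hx⟩
      · exact Finset.inter_subset_left
    have := Finset.card_union_add_card_inter ((S' ∩ S'') ∩ T') ((S' ∩ S'') ∩ T'')
    rw [← hcover] at this
    omega
  have ha1le : ((S' ∩ S'') ∩ T').card ≤ 3 :=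
    hT1card ▸ Finset.card_le_card Finset.inter_subset_right
  have ha2le : ((S' ∩ S'') ∩ T'').card ≤ 3 :=
    hT2card ▸ Finset.card_le_card Finset.inter_subset_right
  have hk : (S' ∩ S'').card = 4 ∨ (S' ∩ S'').card = 5 ∨ (S' ∩ S'').card = 6 ∨
      (S' ∩ S'').card = 7 ∨ (S' ∩ S'').card = 8 ∨ (S' ∩ S'').card = 9 := by omega
  rcases hk with hk | hk | hk | hk | hk | hk
  · -- card 4
    by_cases hex : ∃ p ∈ S' ∩ S'', p ∉ T' ∧ p ∉ T''
    · obtain ⟨p, hpI, hp1, hp2⟩ := hex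
      have := parity_lemma hSTS hS' h' h'' hpI hp2 (Or.inl hp1)
      rw [Finset.card_erase_of_mem hpI, hk] at this
      omega
    · by_cases hT1I : T' ⊆ S' ∩ S''
      · exact absurd (k4_caseB hSTS hS' h' h'' hk hT1I) not_false
      by_cases hT2I : T'' ⊆ S' ∩ S''
      · exact absurd (k4_caseB hSTS hS'' h'' h' (by rw [hIc]; exact hk)
          (by rw [Finset.inter_comm]; exact hT2I)) not_false
      push_neg at hex
      have hcov : ∀ x ∈ S' ∩ S'', x ∈ T' ∨ x ∈ T'' := by
        intro x hx
        by_cases hxT : x ∈ T'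
        · exact Or.inl hxT
        · exact Or.inr (hex x hx hxT)
      have hcb := covbound hcov
      have ha1 : ((S' ∩ S'') ∩ T').card ≤ 2 := by
        by_contra hgt
        push_neg at hgt
        exact hT1I (inter3 T' hT1card (by omega))
      have ha2 : ((S' ∩ S'') ∩ T'').card ≤ 2 := by
        by_contra hgt
        push_neg at hgt
        exact hT2I (inter3 T'' hT2card (by omega))
      have hdisj : (((S' ∩ S'') ∩ T') ∩ ((S' ∩ S'') ∩ T'')).card = 0 := by omega
      have ha1' : ((S' ∩ S'') ∩ T').card = 2 := by omega
      have ha2' : ((S' ∩ S'') ∩ T'').card = 2 := by omega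
      obtain ⟨p, q, hpq, hXeq⟩ := Finset.card_eq_two.mp ha1'
      obtain ⟨r, s, hrs, hYeq⟩ := Finset.card_eq_two.mp ha2'
      rw [Finset.card_eq_zero] at hdisj
      have hp : p ∈ (S' ∩ S'') ∩ T' := by rw [hXeq]; simp
      have hq : q ∈ (S' ∩ S'') ∩ T' := by rw [hXeq]; simp
      have hr : r ∈ (S' ∩ S'') ∩ T'' := by rw [hYeq]; simp
      have hs : s ∈ (S' ∩ S'') ∩ T'' := by rw [hYeq]; simp
      rw [Finset.mem_inter] at hp hq hr hs
      have hnotboth : ∀ x, x ∈ (S' ∩ S'') ∩ T' → x ∈ (S' ∩ S'') ∩ T'' → False := by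
        intro x h1x h2x
        have : x ∈ ((S' ∩ S'') ∩ T') ∩ ((S' ∩ S'') ∩ T'') :=
          Finset.mem_inter.mpr ⟨h1x, h2x⟩
        rw [hdisj] at this
        exact Finset.notMem_empty x this
      have hpr : p ≠ r := by
        rintro rfl
        exact hnotboth p (Finset.mem_inter.mpr ⟨hp.1, hp.2⟩) (Finset.mem_inter.mpr ⟨hr.1, hr.2⟩)
      obtain ⟨m, hmB1, hmB2, hpm, hrm⟩ := good_block hSTS hS' h' h'' hp.1 hr.1 hpr
        (fun hh => hnotboth r (Finset.mem_inter.mpr ⟨hr.1, hh.2⟩)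
          (Finset.mem_inter.mpr ⟨hr.1, hr.2⟩))
        (fun hh => hnotboth p (Finset.mem_inter.mpr ⟨hp.1, hp.2⟩)
          (Finset.mem_inter.mpr ⟨hp.1, hh.1⟩))
      obtain ⟨hmI, hmcard⟩ := common_sub h' h'' hmB1 hmB2
      obtain ⟨z, hzm, hzp, hzr, hmeq⟩ := third_point hmcard hpm hrm hpr
      have hzI : z ∈ S' ∩ S'' := hmI hzm
      rcases hcov z hzI with hzT | hzT
      · -- z ∈ T' so z ∈ X = {p, q}, z ≠ p hence z = q
        have : z ∈ (S' ∩ S'') ∩ T' := Finset.mem_inter.mpr ⟨hzI, hzT⟩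
        rw [hXeq] at this
        simp only [Finset.mem_insert, Finset.mem_singleton] at this
        rcases this with rfl | rfl
        · exact absurd rfl hzp
        · exact no_pair_in_T h' hmB1 hpm hzm (Ne.symm hzp) hp.2 hzT
      · have : z ∈ (S' ∩ S'') ∩ T'' := Finset.mem_inter.mpr ⟨hzI, hzT⟩
        rw [hYeq] at this
        simp only [Finset.mem_insert, Finset.mem_singleton] at this
        rcases this with rfl | rfl
        · exact absurd rfl hzr
        · exact no_pair_in_T h'' hmB2 hrm hzm (Ne.symm hzr) hr.2 hzT
  · -- card 5
    by_cases hex : ∃ p ∈ S' ∩ S'', p ∉ T' ∧ p ∉ T''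
    · obtain ⟨p, hpI, hp1, hp2⟩ := hex
      exact absurd (k5_caseA hSTS hS' h' h'' hk hpI hp1 hp2) not_false
    · push_neg at hex
      have hcov : ∀ x ∈ S' ∩ S'', x ∈ T' ∨ x ∈ T'' := by
        intro x hx
        by_cases hxT : x ∈ T'
        · exact Or.inl hxT
        · exact Or.inr (hex x hx hxT)
      have hcb := covbound hcov
      by_cases h3 : 3 ≤ ((S' ∩ S'') ∩ T').card
      · exact absurd (k5_caseB hSTS hS' h' h'' hk hcov (inter3 T' hT1card h3)) not_false
      · have h3' : 3 ≤ ((S' ∩ S'') ∩ T'').card := by omega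
        have hT2I : T'' ⊆ S' ∩ S'' := inter3 T'' hT2card h3'
        exact absurd (k5_caseB hSTS hS'' h'' h' (by rw [hIc]; exact hk)
          (by intro x hx; rw [Finset.inter_comm] at hx; exact (hcov x hx).symm)
          (by rw [Finset.inter_comm]; exact hT2I)) not_false
  · -- card 6
    by_cases hex : ∃ p ∈ S' ∩ S'', p ∉ T' ∧ p ∉ T''
    · obtain ⟨p, hpI, hp1, hp2⟩ := hex
      have := parity_lemma hSTS hS' h' h'' hpI hp2 (Or.inl hp1)
      rw [Finset.card_erase_of_mem hpI, hk] at this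
      omega
    · push_neg at hex
      have hcov : ∀ x ∈ S' ∩ S'', x ∈ T' ∨ x ∈ T'' := by
        intro x hx
        by_cases hxT : x ∈ T'
        · exact Or.inl hxT
        · exact Or.inr (hex x hx hxT)
      have hcb := covbound hcov
      have hT1I : T' ⊆ S' ∩ S'' := inter3 T' hT1card (by omega)
      obtain ⟨p, hpT1⟩ := Finset.card_pos.mp (show 0 < T'.card by omega)
      have hpI : p ∈ S' ∩ S'' := hT1I hpT1
      have hp2 : p ∉ T'' := by
        intro hp2
        have hmem : p ∈ ((S' ∩ S'') ∩ T') ∩ ((S' ∩ S'') ∩ T'') :=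
          Finset.mem_inter.mpr ⟨Finset.mem_inter.mpr ⟨hpI, hpT1⟩,
            Finset.mem_inter.mpr ⟨hpI, hp2⟩⟩
        have : 0 < (((S' ∩ S'') ∩ T') ∩ ((S' ∩ S'') ∩ T'')).card :=
          Finset.card_pos.mpr ⟨p, hmem⟩
        omega
      have := parity_lemma hSTS hS' h' h'' hpI hp2 (Or.inr hT1I)
      rw [Finset.card_erase_of_mem hpI, hk] at this
      omega
  · -- card 7
    exact absurd (k7_case hSTS hS' h' h'' hc' hk) not_false
  · -- card 8
    have hint : ((S' ∩ S'') ∩ (T' ∪ T'')).card ≤ 6 := by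
      have h1 : ((S' ∩ S'') ∩ (T' ∪ T'')).card ≤ (T' ∪ T'').card :=
        Finset.card_le_card Finset.inter_subset_right
      have h2 := Finset.card_union_le T' T''
      omega
    have hpex : ((S' ∩ S'') \ (T' ∪ T'')).Nonempty := by
      apply Finset.card_pos.mp
      have := Finset.card_inter_add_card_sdiff (S' ∩ S'') (T' ∪ T'')
      omega
    obtain ⟨p, hp⟩ := hpex
    rw [Finset.mem_sdiff, Finset.mem_union] at hp
    push_neg at hp
    have := parity_lemma hSTS hS' h' h'' hp.1 hp.2.2 (Or.inl hp.2.1)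
    rw [Finset.card_erase_of_mem hp.1, hk] at this
    omega
  · -- card 9 : S' = S''
    have hA : S' ∩ S'' = S' := Finset.eq_of_subset_of_card_le hsub1 (by omega)
    have hB : S' ∩ S'' = S'' := Finset.eq_of_subset_of_card_le hsub2 (by omega)
    exact hne (hA.symm.trans hB)
end

section
/- In a Steiner triple system of order 21, the supports of any two distinct almost-sub-STS(9)'s intersect in exactly 3 points, and these 3 points form either a common block of the two almost-sub-STS(9)'s or the missing triple of at least one of them. -/
variable {α : Type*} [DecidableEq α]

/-! Write `I = S1 ∩ S2`. A block of the STS(21) through two points of `S1` not both in `T1` is a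
block of the almost-sub-STS on `S1`, hence lies inside `S1`: blocks leave `S1` only through pairs
of `T1`. Counting the blocks through a point of `S2 \ S1` that avoids `T2` and the three blocks
through pairs of `T1` gives `#I ≥ 3`. Counting, from both sides, the blocks of the two STS(9)s
that meet `I` in exactly two points rules out `5 ≤ #I ≤ 8`. Finally, a pair of `I` lying in
neither missing triple spans a common block inside `I`; this settles `#I = 4` and `#I = 3`. -/

open Finset

theorem Finset.subset_or_subset_of_forall_pair {β : Type*} {s A B : Finset β} (hs : 1 < #s)
    (h : ∀ p ∈ s, ∀ q ∈ s, p ≠ q → (p ∈ A ∧ q ∈ A) ∨ (p ∈ B ∧ q ∈ B)) : s ⊆ A ∨ s ⊆ B := by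
  by_contra! hAB
  obtain ⟨u, hu, huA⟩ := not_subset.1 hAB.1
  obtain ⟨v, hv, hvB⟩ := not_subset.1 hAB.2
  obtain ⟨w, hw, hwu⟩ := exists_mem_ne hs u
  rcases eq_or_ne u v with rfl | huv
  · rcases h u hu w hw hwu.symm with h' | h'
    exacts [huA h'.1, hvB h'.1]
  · rcases h u hu v hv huv with h' | h'
    exacts [huA h'.1, hvB h'.2]

theorem IsSTS.eq_of_mem_of_mem {β : Type*} {S : Finset β} {B : Finset (Finset β)}
    (h : IsSTS S B) {b c : Finset β} (hb : b ∈ B) (hc : c ∈ B) {p q : β} (hpq : p ≠ q)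
    (hpb : p ∈ b) (hqb : q ∈ b) (hpc : p ∈ c) (hqc : q ∈ c) : b = c := by
  obtain ⟨d, -, hd⟩ := h.2 p ((h.1 b hb).1 hpb) q ((h.1 b hb).1 hqb) hpq
  rw [hd b ⟨hb, hpb, hqb⟩, hd c ⟨hc, hpc, hqc⟩]

namespace IsSTS

variable {S : Finset α} {B : Finset (Finset α)}

theorem card_inter_le_one_s12 (h : IsSTS S B) {b c : Finset α} (hb : b ∈ B) (hc : c ∈ B)
    (hbc : b ≠ c) : #(b ∩ c) ≤ 1 := by
  refine card_le_one.2 fun p hp q hq => ?_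
  by_contra hpq
  rw [mem_inter] at hp hq
  exact hbc (h.eq_of_mem_of_mem hb hc hpq hp.1 hq.1 hp.2 hq.2)

theorem card_inter_le_two (h : IsSTS S B) {b X : Finset α} (hb : b ∈ B) {x : α} (hxb : x ∈ b)
    (hxX : x ∉ X) : #(b ∩ X) ≤ 2 := by
  have hsub : b ∩ X ⊆ b.erase x := fun y hy =>
    mem_erase.2 ⟨ne_of_mem_of_not_mem (mem_inter.1 hy).2 hxX, mem_of_mem_inter_left hy⟩
  simpa [card_erase_of_mem hxb, (h.1 b hb).2] using card_le_card hsub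

theorem sum_card_inter_of_notMem (h : IsSTS S B) {X : Finset α} (hX : X ⊆ S) {p : α}
    (hp : p ∈ S) (hpX : p ∉ X) : ∑ b ∈ B with p ∈ b, #(b ∩ X) = #X := by
  rw [← card_biUnion]
  · congr 1
    ext y
    simp only [mem_biUnion, mem_filter, mem_inter]
    refine ⟨fun ⟨_, _, _, hy⟩ => hy, fun hy => ?_⟩
    obtain ⟨b, ⟨hb, hpb, hyb⟩, -⟩ := h.2 p hp y (hX hy) (ne_of_mem_of_not_mem hy hpX).symm
    exact ⟨b, ⟨hb, hpb⟩, hyb, hy⟩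
  · intro b hb c hc hbc
    rw [mem_coe, mem_filter] at hb hc
    refine disjoint_left.2 fun y hyb hyc => hbc ?_
    rw [mem_inter] at hyb hyc
    exact h.eq_of_mem_of_mem hb.1 hc.1 (ne_of_mem_of_not_mem hyb.2 hpX).symm hb.2 hyb.1 hc.2
      hyc.1

theorem two_mul_card_filter_mem (h : IsSTS S B) {p : α} (hp : p ∈ S) :
    2 * #{b ∈ B | p ∈ b} = #S - 1 := by
  rw [← card_erase_of_mem hp, ← h.sum_card_inter_of_notMem (erase_subset p S) hp
    (notMem_erase p S), mul_comm, ← smul_eq_mul, ← sum_const]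
  refine sum_congr rfl fun b hb => ?_
  rw [mem_filter] at hb
  rw [inter_erase, inter_eq_left.2 (h.1 b hb.1).1, card_erase_of_mem hb.2, (h.1 b hb.1).2]

theorem card_filter_card_inter_eq_two_le (h : IsSTS S B) (X : Finset α) :
    #{b ∈ B | #(b ∩ X) = 2} ≤ (#X).choose 2 := by
  rw [← card_powersetCard]
  refine card_le_card_of_injOn (· ∩ X) (fun b hb => ?_)
    fun b hb c hc (hbc : b ∩ X = c ∩ X) => ?_
  · rw [mem_coe, mem_filter] at hb
    exact mem_powersetCard.2 ⟨inter_subset_right, hb.2⟩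
  · rw [mem_coe, mem_filter] at hb hc
    by_contra hne
    have hsub : b ∩ X ⊆ b ∩ c := fun y hy =>
      mem_inter.2 ⟨mem_of_mem_inter_left hy, mem_of_mem_inter_left (hbc ▸ hy)⟩
    have := card_le_card hsub
    have := h.card_inter_le_one_s12 hb.1 hc.1 hne
    omega

/-- The `(#S - 1) / 2` blocks through `x ∉ I` cut `I` into pieces of size at most two. -/
theorem sub_le_card_filter_mem (h : IsSTS S B) {I : Finset α} (hI : I ⊆ S) {x : α}
    (hx : x ∈ S) (hxI : x ∉ I) : #I - (#S - 1) / 2 ≤ #{b ∈ B | #(b ∩ I) = 2 ∧ x ∈ b} := by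
  have hsum : #I ≤ ∑ b ∈ B with x ∈ b, (1 + if #(b ∩ I) = 2 then 1 else 0) := by
    rw [← h.sum_card_inter_of_notMem hI hx hxI]
    refine sum_le_sum fun b hb => ?_
    have := h.card_inter_le_two (mem_filter.1 hb).1 (mem_filter.1 hb).2 hxI
    split_ifs <;> omega
  rw [sum_add_distrib, ← card_eq_sum_ones, ← card_filter, filter_filter] at hsum
  have := h.two_mul_card_filter_mem hx
  simp only [and_comm (a := x ∈ _)] at hsum
  omega

theorem card_sdiff_mul_le_card_filter (h : IsSTS S B) {I : Finset α} (hI : I ⊆ S) :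
    #(S \ I) * (#I - (#S - 1) / 2) ≤ #{b ∈ B | #(b ∩ I) = 2} := by
  calc #(S \ I) * (#I - (#S - 1) / 2)
      ≤ ∑ b ∈ B with #(b ∩ I) = 2, #((S \ I) ∩ b) := le_sum_card_inter fun x hx => by
        rw [filter_filter]
        exact h.sub_le_card_filter_mem hI (mem_sdiff.1 hx).1 (mem_sdiff.1 hx).2
    _ = ∑ b ∈ B with #(b ∩ I) = 2, 1 := sum_congr rfl fun b hb => by
        rw [mem_filter] at hb
        rw [sdiff_inter_right_comm, inter_eq_right.2 (h.1 b hb.1).1, card_sdiff, inter_comm,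
          hb.2, (h.1 b hb.1).2]
    _ = #{b ∈ B | #(b ∩ I) = 2} := (card_eq_sum_ones _).symm

end IsSTS

namespace IsAlmostSubSTS

variable {S S0 T b : Finset α} {Bl C : Finset (Finset α)}

theorem missing_subset (h : IsAlmostSubSTS Bl S0 C T) : T ⊆ S0 :=
  (h.2.2.1 T (mem_insert_self T C)).1

theorem card_missing (h : IsAlmostSubSTS Bl S0 C T) : #T = 3 :=
  (h.2.2.1 T (mem_insert_self T C)).2

theorem subset_of_mem (h : IsAlmostSubSTS Bl S0 C T) (hb : b ∈ C) : b ⊆ S0 :=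
  (h.2.2.1 b (mem_insert_of_mem hb)).1

theorem card_missing_inter_le_one (h : IsAlmostSubSTS Bl S0 C T) (hb : b ∈ C) :
    #(T ∩ b) ≤ 1 :=
  h.2.2.card_inter_le_one_s12 (mem_insert_self T C) (mem_insert_of_mem hb)
    fun hTb => h.2.1 (hTb ▸ hb)

theorem mem_of_mem_of_mem (hSTS : IsSTS S Bl) (h : IsAlmostSubSTS Bl S0 C T) (hb : b ∈ Bl)
    {p q : α} (hpq : p ≠ q) (hp : p ∈ S0) (hq : q ∈ S0) (hpb : p ∈ b) (hqb : q ∈ b)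
    (hT : ¬(p ∈ T ∧ q ∈ T)) : b ∈ C := by
  obtain ⟨c, ⟨hc, hpc, hqc⟩, -⟩ := h.2.2.2 p hp q hq hpq
  rcases mem_insert.1 hc with rfl | hcC
  · exact absurd ⟨hpc, hqc⟩ hT
  · rwa [hSTS.eq_of_mem_of_mem hb (h.1 hcC) hpq hpb hqb hpc hqc]

theorem mem_missing_of_not_subset (hSTS : IsSTS S Bl) (h : IsAlmostSubSTS Bl S0 C T)
    (hb : b ∈ Bl) (hbS : ¬b ⊆ S0) {p q : α} (hpq : p ≠ q) (hp : p ∈ S0) (hq : q ∈ S0)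
    (hpb : p ∈ b) (hqb : q ∈ b) : p ∈ T ∧ q ∈ T := by
  by_contra hT
  exact hbS (h.subset_of_mem (h.mem_of_mem_of_mem hSTS hb hpq hp hq hpb hqb hT))

theorem inter_subset_missing (hSTS : IsSTS S Bl) (h : IsAlmostSubSTS Bl S0 C T)
    (hb : b ∈ Bl) (hbS : ¬b ⊆ S0) (hcard : 1 < #(b ∩ S0)) : b ∩ S0 ⊆ T := by
  intro p hp
  obtain ⟨q, hq, hqp⟩ := exists_mem_ne hcard p
  rw [mem_inter] at hp hq
  exact (h.mem_missing_of_not_subset hSTS hb hbS hqp.symm hp.2 hq.2 hp.1 hq.1).1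

theorem card_filter_card_inter_eq_two_le (hSTS : IsSTS S Bl) (h : IsAlmostSubSTS Bl S0 C T) :
    #{b ∈ Bl | #(b ∩ S0) = 2} ≤ 3 := by
  calc #{b ∈ Bl | #(b ∩ S0) = 2} ≤ #{b ∈ Bl | #(b ∩ T) = 2} := by
        refine card_le_card (monotone_filter_right _ fun b hb h2 => ?_)
        have hbS : ¬b ⊆ S0 := fun hbS => by
          rw [inter_eq_left.2 hbS, (hSTS.1 b hb).2] at h2
          omega
        have hbT := h.inter_subset_missing hSTS hb hbS (by omega)
        rwa [subset_antisymm (inter_subset_inter_left h.missing_subset)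
          (subset_inter inter_subset_left hbT)]
    _ ≤ (#T).choose 2 := hSTS.card_filter_card_inter_eq_two_le T
    _ = 3 := by rw [h.card_missing]; rfl

end IsAlmostSubSTS

section TwoSupports

variable {S S1 S2 T1 T2 : Finset α} {Bl B1 B2 : Finset (Finset α)}

/-- The `(#S - 1) / 2` blocks through `x` cover `S1`, one point each; among them are the
`(#S2 - 1) / 2` blocks of the STS on `S2` through `x`, which meet `S1` only in `S1 ∩ S2`. -/
theorem two_mul_card_add_card_le (hSTS : IsSTS S Bl) (hS1 : S1 ⊆ S) (hS2 : S2 ⊆ S)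
    (h2 : IsAlmostSubSTS Bl S2 B2 T2) {x : α} (hx2 : x ∈ S2) (hxT2 : x ∉ T2) (hx1 : x ∉ S1)
    (hxS1 : ∀ b ∈ Bl, x ∈ b → #(b ∩ S1) ≤ 1) :
    2 * #S1 + #S2 ≤ 2 * #(S1 ∩ S2) + #S := by
  set Bx := {b ∈ Bl | x ∈ b}
  set Cx := {c ∈ insert T2 B2 | x ∈ c}
  have hCB : Cx ⊆ Bx := by
    intro c hc
    rw [mem_filter] at hc ⊢
    rcases mem_insert.1 hc.1 with rfl | hcB
    · exact absurd hc.2 hxT2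
    · exact ⟨h2.1 hcB, hc.2⟩
  have hB := hSTS.sum_card_inter_of_notMem hS1 (hS2 hx2) hx1
  have hC : ∑ c ∈ Cx, #(c ∩ S1) = #(S1 ∩ S2) := by
    rw [← h2.2.2.sum_card_inter_of_notMem inter_subset_right hx2
      fun h => hx1 (mem_of_mem_inter_left h)]
    refine sum_congr rfl fun c hc => ?_
    rw [← inter_assoc,
      inter_eq_left.2 (inter_subset_left.trans (h2.2.2.1 c (mem_filter.1 hc).1).1)]
  have hrest : ∑ b ∈ Bx \ Cx, #(b ∩ S1) ≤ #(Bx \ Cx) :=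
    card_eq_sum_ones (Bx \ Cx) ▸ sum_le_sum fun b hb =>
      hxS1 b (mem_filter.1 (mem_sdiff.1 hb).1).1 (mem_filter.1 (mem_sdiff.1 hb).1).2
  rw [← sum_sdiff hCB, hC] at hB
  rw [card_sdiff_of_subset hCB] at hrest
  have hBx : 2 * #Bx = #S - 1 := hSTS.two_mul_card_filter_mem (hS2 hx2)
  have hCx : 2 * #Cx = #S2 - 1 := h2.2.2.two_mul_card_filter_mem hx2
  have := card_le_card hCB
  have := card_pos.2 ⟨x, hx2⟩
  have := card_pos.2 ⟨x, hS2 hx2⟩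
  omega

theorem three_le_card_inter (hSTS : IsSTS S Bl) (hS21 : #S = 21) (hS1 : S1 ⊆ S)
    (hS2 : S2 ⊆ S) (hc1 : #S1 = 9) (hc2 : #S2 = 9) (h1 : IsAlmostSubSTS Bl S1 B1 T1)
    (h2 : IsAlmostSubSTS Bl S2 B2 T2) : 3 ≤ #(S1 ∩ S2) := by
  by_contra! hk
  set W := {b ∈ Bl | #(b ∩ S1) = 2}.biUnion (· \ S1)
  have hW : #W ≤ 3 := calc
    #W ≤ ∑ b ∈ Bl with #(b ∩ S1) = 2, #(b \ S1) := card_biUnion_le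
    _ = ∑ b ∈ Bl with #(b ∩ S1) = 2, 1 := sum_congr rfl fun b hb => by
      rw [mem_filter] at hb
      rw [card_sdiff, inter_comm, hb.2, (hSTS.1 b hb.1).2]
    _ ≤ 3 := (card_eq_sum_ones _).symm ▸ h1.card_filter_card_inter_eq_two_le hSTS
  obtain ⟨x, hx⟩ : ((S2 \ S1) \ (T2 ∪ W)).Nonempty := by
    rw [← card_pos]
    have := le_card_sdiff (T2 ∪ W) (S2 \ S1)
    have := card_union_le T2 W
    have : #(S2 \ S1) = #S2 - #(S1 ∩ S2) := card_sdiff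
    have := h2.card_missing
    omega
  simp only [mem_sdiff, mem_union, not_or] at hx
  obtain ⟨⟨hx2, hx1⟩, hxT2, hxW⟩ := hx
  have hxS1 : ∀ b ∈ Bl, x ∈ b → #(b ∩ S1) ≤ 1 := by
    intro b hb hxb
    have hne : #(b ∩ S1) ≠ 2 := fun h2 =>
      hxW (mem_biUnion.2 ⟨b, mem_filter.2 ⟨hb, h2⟩, mem_sdiff.2 ⟨hxb, hx1⟩⟩)
    have := hSTS.card_inter_le_two hb hxb hx1
    omega
  have := two_mul_card_add_card_le hSTS hS1 hS2 h2 hx2 hxT2 hx1 hxS1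
  omega

/-- Apart from `T1`, a block of the STS on `S1` meeting `S1 ∩ S2` in two points leaves `S2`, so
those two points lie in `T2`. -/
theorem card_filter_card_inter_inter_eq_two_le (hSTS : IsSTS S Bl)
    (h1 : IsAlmostSubSTS Bl S1 B1 T1) (h2 : IsAlmostSubSTS Bl S2 B2 T2) :
    #{c ∈ insert T1 B1 | #(c ∩ (S1 ∩ S2)) = 2} ≤
      (if #(T1 ∩ (S1 ∩ S2)) = 2 then 1 else 0) + (#(T2 ∩ (S1 ∩ S2))).choose 2 := by
  set Q := {c ∈ insert T1 B1 | #(c ∩ (S1 ∩ S2)) = 2}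
  have hQ : Q.erase T1 ⊆ {b ∈ Bl | #(b ∩ (T2 ∩ (S1 ∩ S2))) = 2} := by
    intro c hc
    obtain ⟨hcT1, hc⟩ := mem_erase.1 hc
    obtain ⟨hc, hcI⟩ := mem_filter.1 hc
    have hcB1 : c ∈ B1 := (mem_insert.1 hc).resolve_left hcT1
    have hcS2 : ¬c ⊆ S2 := fun hcS2 => by
      rw [inter_eq_left.2 (subset_inter (h1.subset_of_mem hcB1) hcS2),
        (hSTS.1 c (h1.1 hcB1)).2] at hcI
      omega
    have hcI2 : c ∩ (S1 ∩ S2) ⊆ c ∩ S2 := inter_subset_inter_left inter_subset_right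
    have hcT2 := h2.inter_subset_missing hSTS (h1.1 hcB1) hcS2
      (by have := card_le_card hcI2; omega)
    refine mem_filter.2 ⟨h1.1 hcB1, ?_⟩
    rwa [inter_left_comm, inter_eq_right.2 (hcI2.trans hcT2)]
  calc #Q ≤ (if #(T1 ∩ (S1 ∩ S2)) = 2 then 1 else 0) + #(Q.erase T1) := by
        by_cases hT1 : T1 ∈ Q
        · rw [if_pos (mem_filter.1 hT1).2, add_comm, card_erase_add_one hT1]
        · rw [erase_eq_of_notMem hT1]
          omega
    _ ≤ _ := Nat.add_le_add_left ((card_le_card hQ).trans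
        (hSTS.card_filter_card_inter_eq_two_le _)) _

theorem card_inter_le_four (hSTS : IsSTS S Bl) (hc1 : #S1 = 9) (hc2 : #S2 = 9)
    (h1 : IsAlmostSubSTS Bl S1 B1 T1) (h2 : IsAlmostSubSTS Bl S2 B2 T2) (hne : S1 ≠ S2) :
    #(S1 ∩ S2) ≤ 4 := by
  have hk : #(S1 ∩ S2) < 9 := by
    refine lt_of_le_of_ne (hc1 ▸ card_le_card inter_subset_left) fun hk => hne ?_
    rw [← eq_of_subset_of_card_le inter_subset_left (by omega : #S1 ≤ #(S1 ∩ S2)),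
      eq_of_subset_of_card_le inter_subset_right (by omega : #S2 ≤ #(S1 ∩ S2))]
  have e1 := h1.2.2.card_sdiff_mul_le_card_filter (inter_subset_left : S1 ∩ S2 ⊆ S1)
  have e2 := h2.2.2.card_sdiff_mul_le_card_filter (inter_subset_left : S2 ∩ S1 ⊆ S2)
  rw [card_sdiff_of_subset inter_subset_left, hc1] at e1
  rw [card_sdiff_of_subset inter_subset_left, hc2, inter_comm S2 S1] at e2
  have q1 := card_filter_card_inter_inter_eq_two_le hSTS h1 h2
  have q2 := card_filter_card_inter_inter_eq_two_le hSTS h2 h1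
  rw [inter_comm S2 S1] at q2
  have ha := card_le_card (inter_subset_left : T1 ∩ (S1 ∩ S2) ⊆ T1)
  have hb := card_le_card (inter_subset_left : T2 ∩ (S1 ∩ S2) ⊆ T2)
  rw [h1.card_missing] at ha
  rw [h2.card_missing] at hb
  by_contra! h5
  have key : ∀ k < 9, ∀ a < 4, ∀ b < 4, 4 < k →
      (9 - k) * (k - 4) ≤ (if a = 2 then 1 else 0) + b.choose 2 →
      (if b = 2 then 1 else 0) + a.choose 2 < (9 - k) * (k - 4) := by
    decide
  exact (key _ hk _ (by omega) _ (by omega) h5 (e1.trans q1)).not_ge (e2.trans q2)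

theorem exists_common_block_or_subset_missing (hSTS : IsSTS S Bl) (hS1 : S1 ⊆ S)
    (h1 : IsAlmostSubSTS Bl S1 B1 T1) (h2 : IsAlmostSubSTS Bl S2 B2 T2)
    (hk : 1 < #(S1 ∩ S2)) :
    (∃ b ∈ B1, b ∈ B2 ∧ b ⊆ S1 ∩ S2) ∨ S1 ∩ S2 ⊆ T1 ∨ S1 ∩ S2 ⊆ T2 := by
  by_cases hpairs :
      ∀ p ∈ S1 ∩ S2, ∀ q ∈ S1 ∩ S2, p ≠ q → (p ∈ T1 ∧ q ∈ T1) ∨ (p ∈ T2 ∧ q ∈ T2)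
  · exact Or.inr (subset_or_subset_of_forall_pair hk hpairs)
  simp only [not_forall, not_or] at hpairs
  obtain ⟨p, hp, q, hq, hpq, hT1, hT2⟩ := hpairs
  rw [mem_inter] at hp hq
  obtain ⟨b, ⟨hb, hpb, hqb⟩, -⟩ := hSTS.2 p (hS1 hp.1) q (hS1 hq.1) hpq
  have hb1 := h1.mem_of_mem_of_mem hSTS hb hpq hp.1 hq.1 hpb hqb hT1
  have hb2 := h2.mem_of_mem_of_mem hSTS hb hpq hp.2 hq.2 hpb hqb hT2
  exact Or.inl ⟨b, hb1, hb2, subset_inter (h1.subset_of_mem hb1) (h2.subset_of_mem hb2)⟩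

/-- If `S1 ∩ S2` were a common block `b` plus a point `r`, the block through `r` and any
`t ∈ b` would leave `S1` or `S2`, putting `t` in `T1` or `T2`; but each `Ti` meets `b` at most
once. -/
theorem card_inter_ne_four (hSTS : IsSTS S Bl) (hS1 : S1 ⊆ S)
    (h1 : IsAlmostSubSTS Bl S1 B1 T1) (h2 : IsAlmostSubSTS Bl S2 B2 T2) :
    #(S1 ∩ S2) ≠ 4 := by
  intro hk
  rcases exists_common_block_or_subset_missing hSTS hS1 h1 h2 (by omega) with
    ⟨b, hb1, hb2, hbI⟩ | hT | hT
  · have hb3 : #b = 3 := (hSTS.1 b (h1.1 hb1)).2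
    obtain ⟨r, hrI, hrb⟩ := not_subset.1 fun hIb : S1 ∩ S2 ⊆ b => by
      have := card_le_card hIb
      omega
    have hIeq : S1 ∩ S2 = insert r b := (eq_of_subset_of_card_le (insert_subset hrI hbI)
      (by rw [card_insert_of_notMem hrb]; omega)).symm
    have hcover : b ⊆ (T1 ∩ b) ∪ (T2 ∩ b) := by
      intro t ht
      have hrt : r ≠ t := (ne_of_mem_of_not_mem ht hrb).symm
      have htI := hbI ht
      rw [mem_inter] at hrI htI
      obtain ⟨d, ⟨hd, hrd, htd⟩, -⟩ := hSTS.2 r (hS1 hrI.1) t (hS1 htI.1) hrt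
      have hdI : ¬d ⊆ S1 ∩ S2 := fun hdI => by
        have hdb : d.erase r ⊆ d ∩ b := fun y hy => by
          have := hdI (mem_of_mem_erase hy)
          rw [hIeq, mem_insert] at this
          exact mem_inter.2 ⟨mem_of_mem_erase hy, this.resolve_left (ne_of_mem_erase hy)⟩
        have h2 := card_le_card hdb
        rw [card_erase_of_mem hrd, (hSTS.1 d hd).2] at h2
        have := hSTS.card_inter_le_one_s12 hd (h1.1 hb1) fun hdb => hrb (hdb ▸ hrd)
        omega
      rw [subset_inter_iff, not_and_or] at hdI
      rw [mem_union, mem_inter, mem_inter]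
      rcases hdI with hdS | hdS
      · exact Or.inl ⟨(h1.mem_missing_of_not_subset hSTS hd hdS hrt hrI.1 htI.1 hrd htd).2, ht⟩
      · exact Or.inr ⟨(h2.mem_missing_of_not_subset hSTS hd hdS hrt hrI.2 htI.2 hrd htd).2, ht⟩
    have := (card_le_card hcover).trans (card_union_le _ _)
    have := h1.card_missing_inter_le_one hb1
    have := h2.card_missing_inter_le_one hb2
    omega
  · have := card_le_card hT
    rw [h1.card_missing] at this
    omega
  · have := card_le_card hT
    rw [h2.card_missing] at this
    omega

end TwoSupports

theorem almostSubSTS9_supports_inter_sts21 (S S' S'' : Finset α)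
    (Bl B' B'' : Finset (Finset α)) (T' T'' : Finset α)
    (hSTS : IsSTS S Bl) (hS21 : S.card = 21)
    (hS' : S' ⊆ S) (hS'' : S'' ⊆ S)
    (hc' : S'.card = 9) (hc'' : S''.card = 9)
    (h' : IsAlmostSubSTS Bl S' B' T') (h'' : IsAlmostSubSTS Bl S'' B'' T'')
    (hne : S' ≠ S'') :
    (S' ∩ S'').card = 3 ∧
    ((S' ∩ S'' ∈ B' ∧ S' ∩ S'' ∈ B'') ∨ S' ∩ S'' = T' ∨ S' ∩ S'' = T'') := by
  have hk : #(S' ∩ S'') = 3 := by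
    have := three_le_card_inter hSTS hS21 hS' hS'' hc' hc'' h' h''
    have := card_inter_le_four hSTS hc' hc'' h' h'' hne
    have := card_inter_ne_four hSTS hS' h' h''
    omega
  refine ⟨hk, ?_⟩
  rcases exists_common_block_or_subset_missing hSTS hS' h' h'' (by omega) with
    ⟨b, hb', hb'', hbI⟩ | hT | hT
  · obtain rfl : b = S' ∩ S'' :=
      eq_of_subset_of_card_le hbI (by rw [hk, (hSTS.1 b (h'.1 hb')).2])
    exact Or.inl ⟨hb', hb''⟩
  · exact Or.inr (Or.inl (eq_of_subset_of_card_le hT (by rw [h'.card_missing, hk])))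
  · exact Or.inr (Or.inr (eq_of_subset_of_card_le hT (by rw [h''.card_missing, hk])))
end

section
/- An STS(21) (S, B) has a flower {A, B, C, D} with stem D if and only if it has a sub-TD(3, 6) with groups A, B, C. -/
variable {α : Type*} [DecidableEq α]

/-- The three petal conditions of a flower with stem `D`: a sub-STS(9) with support
`X ∪ D` and two almost-sub-STS(9)'s with supports `Y ∪ D`, `Z ∪ D` and missing triple `D`. -/
def FlowerPetals (Bl : Finset (Finset α)) (D X Y Z : Finset α) : Prop :=
  (∃ C0, C0 ⊆ Bl ∧ IsSTS (X ∪ D) C0) ∧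
  (∃ C1, IsAlmostSubSTS Bl (Y ∪ D) C1 D) ∧
  (∃ C2, IsAlmostSubSTS Bl (Z ∪ D) C2 D)

/-- A flower of an STS(21) `(S, Bl)` with petals `A`, `B`, `C` (size 6) and stem `D`
(size 3): a partition of `S` such that `Bl` has a sub-STS(9) and two
almost-sub-STS(9)'s with supports `A ∪ D`, `B ∪ D`, `C ∪ D` (in some order),
the missing triple of each almost-sub-STS being `D`. -/
def IsFlower (S : Finset α) (Bl : Finset (Finset α)) (A B C D : Finset α) : Prop :=
  A ∪ B ∪ C ∪ D = S ∧ A.card = 6 ∧ B.card = 6 ∧ C.card = 6 ∧ D.card = 3 ∧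
  Disjoint A B ∧ Disjoint A C ∧ Disjoint A D ∧
  Disjoint B C ∧ Disjoint B D ∧ Disjoint C D ∧
  (FlowerPetals Bl D A B C ∨ FlowerPetals Bl D B A C ∨ FlowerPetals Bl D C A B)

open Finset

/-- Any block of `Bl` containing two points of `X ∪ D`, at least one of which is in `X`,
is contained in `X ∪ D`. -/
def STSInside (Bl : Finset (Finset α)) (X D : Finset α) : Prop :=
  ∀ b ∈ Bl, ∀ p q : α, p ∈ b → q ∈ b → p ≠ q → p ∈ X → q ∈ X ∪ D → b ⊆ X ∪ D

lemma inside_of_full {S : Finset α} {Bl C0 : Finset (Finset α)} {X D : Finset α}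
    (hSTS : IsSTS S Bl) (hsub : X ∪ D ⊆ S) (hC0 : C0 ⊆ Bl) (h0 : IsSTS (X ∪ D) C0) :
    STSInside Bl X D := by
  intro b hb p q hpb hqb hpq hpX hq
  have hp' : p ∈ X ∪ D := mem_union_left _ hpX
  obtain ⟨b', ⟨hb'C, hpb', hqb'⟩, -⟩ := h0.2 p hp' q hq hpq
  have heq := (hSTS.2 p (hsub hp') q (hsub hq) hpq).unique ⟨hb, hpb, hqb⟩ ⟨hC0 hb'C, hpb', hqb'⟩
  rw [heq]; exact (h0.1 b' hb'C).1

lemma inside_of_almost {S : Finset α} {Bl C1 : Finset (Finset α)} {Y D : Finset α}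
    (hSTS : IsSTS S Bl) (hsub : Y ∪ D ⊆ S) (hYD : Disjoint Y D)
    (h1 : IsAlmostSubSTS Bl (Y ∪ D) C1 D) : STSInside Bl Y D := by
  obtain ⟨hC1, hD1, h0⟩ := h1
  intro b hb p q hpb hqb hpq hpY hq
  have hp' : p ∈ Y ∪ D := mem_union_left _ hpY
  obtain ⟨b', ⟨hb'C, hpb', hqb'⟩, -⟩ := h0.2 p hp' q hq hpq
  have hb'ne : b' ≠ D := by
    rintro rfl; exact disjoint_left.mp hYD hpY hpb'
  have hb'C1 : b' ∈ C1 := (Finset.mem_insert.mp hb'C).resolve_left hb'ne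
  have heq := (hSTS.2 p (hsub hp') q (hsub hq) hpq).unique ⟨hb, hpb, hqb⟩ ⟨hC1 hb'C1, hpb', hqb'⟩
  rw [heq]; exact (h0.1 b' hb'C).1

lemma third_nonempty {Bl : Finset (Finset α)} {X Y Z D : Finset α} {b : Finset α} {p q : α}
    (hb : b ∈ Bl) (hcard : b.card = 3)
    (hbS : ∀ x ∈ b, x ∈ X ∨ x ∈ Y ∨ x ∈ Z ∨ x ∈ D)
    (iX : STSInside Bl X D) (iY : STSInside Bl Y D)
    (hXY : Disjoint X Y) (hXD : Disjoint X D) (hYD : Disjoint Y D)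
    (hpb : p ∈ b) (hpX : p ∈ X) (hqb : q ∈ b) (hqY : q ∈ Y) :
    (b ∩ Z).Nonempty := by
  by_contra h
  rw [Finset.not_nonempty_iff_eq_empty] at h
  have hZ : ∀ x ∈ b, x ∉ Z := fun x hx hxZ =>
    (Finset.eq_empty_iff_forall_notMem.mp h x) (Finset.mem_inter.mpr ⟨hx, hxZ⟩)
  have hbst : b = (b ∩ (X ∪ D)) ∪ (b ∩ Y) := by
    ext x
    simp only [Finset.mem_union, Finset.mem_inter]
    constructor
    · intro hx
      rcases hbS x hx with h1 | h1 | h1 | h1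
      exacts [Or.inl ⟨hx, Or.inl h1⟩, Or.inr ⟨hx, h1⟩, absurd h1 (hZ x hx),
        Or.inl ⟨hx, Or.inr h1⟩]
    · rintro (⟨h1, -⟩ | ⟨h1, -⟩) <;> exact h1
  have hdisj : Disjoint (b ∩ (X ∪ D)) (b ∩ Y) := by
    refine Finset.disjoint_left.mpr fun x hxs hxt => ?_
    have hxY := (Finset.mem_inter.mp hxt).2
    rcases Finset.mem_union.mp (Finset.mem_inter.mp hxs).2 with h1 | h1
    exacts [disjoint_left.mp hXY h1 hxY, disjoint_left.mp hYD hxY h1]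
  have hsum : (b ∩ (X ∪ D)).card + (b ∩ Y).card = 3 := by
    rw [← Finset.card_union_of_disjoint hdisj, ← hbst, hcard]
  have hps : p ∈ b ∩ (X ∪ D) := mem_inter.mpr ⟨hpb, mem_union_left _ hpX⟩
  have hqt : q ∈ b ∩ Y := mem_inter.mpr ⟨hqb, hqY⟩
  have h1 : 1 ≤ (b ∩ (X ∪ D)).card := Finset.card_pos.mpr ⟨p, hps⟩
  have h2 : 1 ≤ (b ∩ Y).card := Finset.card_pos.mpr ⟨q, hqt⟩
  rcases (by omega : 2 ≤ (b ∩ (X ∪ D)).card ∨ 2 ≤ (b ∩ Y).card) with hg | hg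
  · obtain ⟨p', hp's, hp'ne⟩ := Finset.exists_mem_ne hg p
    have hsub := iX b hb p p' hpb (mem_inter.mp hp's).1 hp'ne.symm hpX (mem_inter.mp hp's).2
    rcases mem_union.mp (hsub hqb) with h1 | h1
    exacts [disjoint_left.mp hXY h1 hqY, disjoint_left.mp hYD hqY h1]
  · obtain ⟨q', hq't, hq'ne⟩ := Finset.exists_mem_ne hg q
    have hsub := iY b hb q q' hqb (mem_inter.mp hq't).1 hq'ne.symm hqY
      (mem_union_left _ (mem_inter.mp hq't).2)
    rcases mem_union.mp (hsub hpb) with h1 | h1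
    exacts [disjoint_left.mp hXY hpX h1, disjoint_left.mp hXD hpX h1]

lemma exists_TD {S : Finset α} {Bl : Finset (Finset α)} {A B C D : Finset α}
    (hSTS : IsSTS S Bl) (hS : A ∪ B ∪ C ∪ D = S)
    (hAB : Disjoint A B) (hAC : Disjoint A C) (hAD : Disjoint A D)
    (hBC : Disjoint B C) (hBD : Disjoint B D) (hCD : Disjoint C D)
    (iA : STSInside Bl A D) (iB : STSInside Bl B D) (iC : STSInside Bl C D) :
    ∃ T, T ⊆ Bl ∧ IsTD3 A B C T := by
  classical
  have hmem : ∀ b ∈ Bl, ∀ x ∈ b, x ∈ A ∨ x ∈ B ∨ x ∈ C ∨ x ∈ D := by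
    intro b hb x hx
    have hxS : x ∈ S := (hSTS.1 b hb).1 hx
    rw [← hS] at hxS
    simpa [Finset.mem_union, or_assoc] using hxS
  have hAS : A ⊆ S := by rw [← hS]; intro x hx; simp [hx]
  have hBS : B ⊆ S := by rw [← hS]; intro x hx; simp [hx]
  have hCS : C ⊆ S := by rw [← hS]; intro x hx; simp [hx]
  refine ⟨Bl.filter (fun b => (b ∩ A).Nonempty ∧ (b ∩ B).Nonempty ∧ (b ∩ C).Nonempty),
    Finset.filter_subset _ _, ?_, ?_⟩
  · intro b hb
    rw [Finset.mem_filter] at hb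
    obtain ⟨hbBl, nA, nB, nC⟩ := hb
    have hcard := (hSTS.1 b hbBl).2
    have dAB : Disjoint (b ∩ A) (b ∩ B) := hAB.mono inter_subset_right inter_subset_right
    have dAC : Disjoint (b ∩ A) (b ∩ C) := hAC.mono inter_subset_right inter_subset_right
    have dBC : Disjoint (b ∩ B) (b ∩ C) := hBC.mono inter_subset_right inter_subset_right
    have dABC : Disjoint (b ∩ A ∪ b ∩ B) (b ∩ C) := by
      rw [Finset.disjoint_union_left]; exact ⟨dAC, dBC⟩
    have hu : (b ∩ A ∪ b ∩ B ∪ b ∩ C) ⊆ b := by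
      intro x hx
      simp only [Finset.mem_union, Finset.mem_inter] at hx
      tauto
    have hcardu : (b ∩ A ∪ b ∩ B ∪ b ∩ C).card = (b ∩ A).card + (b ∩ B).card + (b ∩ C).card := by
      rw [Finset.card_union_of_disjoint dABC, Finset.card_union_of_disjoint dAB]
    have hle : (b ∩ A).card + (b ∩ B).card + (b ∩ C).card ≤ 3 := by
      rw [← hcardu, ← hcard]; exact Finset.card_le_card hu
    have h1 : 1 ≤ (b ∩ A).card := Finset.card_pos.mpr nA
    have h2 : 1 ≤ (b ∩ B).card := Finset.card_pos.mpr nB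
    have h3 : 1 ≤ (b ∩ C).card := Finset.card_pos.mpr nC
    refine ⟨?_, by omega, by omega, by omega⟩
    have hbeq : (b ∩ A ∪ b ∩ B ∪ b ∩ C) = b :=
      Finset.eq_of_subset_of_card_le hu (by rw [hcardu]; omega)
    intro x hxb
    rw [← hbeq] at hxb
    simp only [Finset.mem_union, Finset.mem_inter] at hxb ⊢
    tauto
  · have key : ∀ (X Y Z : Finset α), STSInside Bl X D → STSInside Bl Y D →
        Disjoint X Y → Disjoint X D → Disjoint Y D →
        (∀ b ∈ Bl, ∀ x ∈ b, x ∈ X ∨ x ∈ Y ∨ x ∈ Z ∨ x ∈ D) →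
        ∀ p q : α, p ∈ S → q ∈ S → p ∈ X → q ∈ Y →
        ∃ b, b ∈ Bl ∧ p ∈ b ∧ q ∈ b ∧ (b ∩ X).Nonempty ∧ (b ∩ Y).Nonempty ∧
          (b ∩ Z).Nonempty ∧ ∀ b' ∈ Bl, p ∈ b' → q ∈ b' → b' = b := by
      intro X Y Z iX iY hXY hXD hYD hmem' p q hpS hqS hpX hqY
      have hpq : p ≠ q := by rintro rfl; exact disjoint_left.mp hXY hpX hqY
      obtain ⟨b, ⟨hbBl, hpb, hqb⟩, huniq⟩ := hSTS.2 p hpS q hqS hpq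
      exact ⟨b, hbBl, hpb, hqb, ⟨p, mem_inter.mpr ⟨hpb, hpX⟩⟩, ⟨q, mem_inter.mpr ⟨hqb, hqY⟩⟩,
        third_nonempty hbBl (hSTS.1 b hbBl).2 (hmem' b hbBl) iX iY hXY hXD hYD hpb hpX hqb hqY,
        fun b' hb' hp' hq' => huniq b' ⟨hb', hp', hq'⟩⟩
    rintro p q (⟨hp, hq⟩ | ⟨hp, hq⟩ | ⟨hp, hq⟩)
    · obtain ⟨b, hbBl, hpb, hqb, nA, nB, nC, huniq⟩ :=
        key A B C iA iB hAB hAD hBD hmem p q (hAS hp) (hBS hq) hp hq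
      exact ⟨b, ⟨Finset.mem_filter.mpr ⟨hbBl, nA, nB, nC⟩, hpb, hqb⟩,
        fun b' hb' => huniq b' (Finset.mem_filter.mp hb'.1).1 hb'.2.1 hb'.2.2⟩
    · obtain ⟨b, hbBl, hpb, hqb, nA, nC, nB, huniq⟩ :=
        key A C B iA iC hAC hAD hCD (by intro b hb x hx; have := hmem b hb x hx; tauto)
          p q (hAS hp) (hCS hq) hp hq
      exact ⟨b, ⟨Finset.mem_filter.mpr ⟨hbBl, nA, nB, nC⟩, hpb, hqb⟩,
        fun b' hb' => huniq b' (Finset.mem_filter.mp hb'.1).1 hb'.2.1 hb'.2.2⟩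
    · obtain ⟨b, hbBl, hpb, hqb, nB, nC, nA, huniq⟩ :=
        key B C A iB iC hBC hBD hCD (by intro b hb x hx; have := hmem b hb x hx; tauto)
          p q (hBS hp) (hCS hq) hp hq
      exact ⟨b, ⟨Finset.mem_filter.mpr ⟨hbBl, nA, nB, nC⟩, hpb, hqb⟩,
        fun b' hb' => huniq b' (Finset.mem_filter.mp hb'.1).1 hb'.2.1 hb'.2.2⟩

lemma inside_of_TD {S : Finset α} {Bl T : Finset (Finset α)} {X Y Z D : Finset α}
    (hSTS : IsSTS S Bl) (hTsub : T ⊆ Bl)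
    (hTstruct : ∀ b ∈ T, (∀ x ∈ b, x ∈ X ∨ x ∈ Y ∨ x ∈ Z) ∧ (b ∩ X).card = 1)
    (hTpairs : ∀ p r : α, p ∈ X → r ∈ Y ∪ Z → ∃ b ∈ T, p ∈ b ∧ r ∈ b)
    (hmem : ∀ b ∈ Bl, ∀ x ∈ b, x ∈ X ∨ x ∈ Y ∨ x ∈ Z ∨ x ∈ D)
    (hXS : X ⊆ S) (hYZS : Y ∪ Z ⊆ S)
    (hXY : Disjoint X Y) (hXZ : Disjoint X Z)
    (hXD : Disjoint X D) (hYD : Disjoint Y D) (hZD : Disjoint Z D) :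
    STSInside Bl X D := by
  intro b hb p q hpb hqb hpq hpX hqXD
  intro x hxb
  rw [Finset.mem_union]
  by_contra hcon
  push_neg at hcon
  have hxYZ : x ∈ Y ∪ Z := by
    rcases hmem b hb x hxb with h | h | h | h
    exacts [absurd h hcon.1, mem_union_left _ h, mem_union_right _ h, absurd h hcon.2]
  obtain ⟨b0, hb0T, hpb0, hxb0⟩ := hTpairs p x hpX hxYZ
  have hpx : p ≠ x := by
    rintro rfl
    rcases mem_union.mp hxYZ with h | h
    exacts [disjoint_left.mp hXY hpX h, disjoint_left.mp hXZ hpX h]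
  have heq : b = b0 :=
    (hSTS.2 p (hXS hpX) x (hYZS hxYZ) hpx).unique ⟨hb, hpb, hxb⟩ ⟨hTsub hb0T, hpb0, hxb0⟩
  obtain ⟨hb0sub, hb0X⟩ := hTstruct b0 hb0T
  have hqb0 : q ∈ b0 := heq ▸ hqb
  have hqX : q ∈ X := by
    rcases mem_union.mp hqXD with h | h
    · exact h
    · rcases hb0sub q hqb0 with h' | h' | h'
      exacts [absurd h (disjoint_left.mp hXD h'), absurd h (disjoint_left.mp hYD h'),
        absurd h (disjoint_left.mp hZD h')]
  have : 1 < (b0 ∩ X).card := Finset.one_lt_card.mpr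
    ⟨p, mem_inter.mpr ⟨heq ▸ hpb, hpX⟩, q, mem_inter.mpr ⟨hqb0, hqX⟩, hpq⟩
  omega

lemma full_sub {S : Finset α} {Bl : Finset (Finset α)} {X D : Finset α}
    (hSTS : IsSTS S Bl) (hXDS : X ∪ D ⊆ S) (iX : STSInside Bl X D)
    (dcov : ∀ p q : α, p ∈ D → q ∈ D → p ≠ q → ∃ b ∈ Bl, p ∈ b ∧ q ∈ b ∧ b ⊆ X ∪ D) :
    ∃ C0, C0 ⊆ Bl ∧ IsSTS (X ∪ D) C0 := by
  classical
  refine ⟨Bl.filter (· ⊆ X ∪ D), Finset.filter_subset _ _, ?_, ?_⟩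
  · intro b hb
    rw [Finset.mem_filter] at hb
    exact ⟨hb.2, (hSTS.1 b hb.1).2⟩
  · intro p hp q hq hpq
    have exB : ∃ b ∈ Bl, p ∈ b ∧ q ∈ b ∧ b ⊆ X ∪ D := by
      by_cases hpD : p ∈ D
      · by_cases hqD : q ∈ D
        · obtain ⟨b, hb, h1, h2, h3⟩ := dcov p q hpD hqD hpq
          exact ⟨b, hb, h1, h2, h3⟩
        · have hqX : q ∈ X := (mem_union.mp hq).resolve_right hqD
          obtain ⟨b, ⟨hb, hpb, hqb⟩, -⟩ := hSTS.2 p (hXDS hp) q (hXDS hq) hpq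
          exact ⟨b, hb, hpb, hqb, iX b hb q p hqb hpb hpq.symm hqX hp⟩
      · have hpX : p ∈ X := (mem_union.mp hp).resolve_right hpD
        obtain ⟨b, ⟨hb, hpb, hqb⟩, -⟩ := hSTS.2 p (hXDS hp) q (hXDS hq) hpq
        exact ⟨b, hb, hpb, hqb, iX b hb p q hpb hqb hpq hpX hq⟩
    obtain ⟨b, hb, hpb, hqb, hbsub⟩ := exB
    refine ⟨b, ⟨Finset.mem_filter.mpr ⟨hb, hbsub⟩, hpb, hqb⟩, ?_⟩
    rintro b' ⟨hb', hpb', hqb'⟩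
    exact (hSTS.2 p (hXDS hp) q (hXDS hq) hpq).unique
      ⟨(Finset.mem_filter.mp hb').1, hpb', hqb'⟩ ⟨hb, hpb, hqb⟩

lemma almost_sub {S : Finset α} {Bl : Finset (Finset α)} {Y D : Finset α}
    (hSTS : IsSTS S Bl) (hYDS : Y ∪ D ⊆ S) (hYD : Disjoint Y D) (hD3 : D.card = 3)
    (iY : STSInside Bl Y D)
    (nod : ∀ b ∈ Bl, b ⊆ Y ∪ D → ∀ p q : α, p ∈ b → q ∈ b → p ≠ q → p ∈ D → q ∈ D → b = D) :
    ∃ C1, IsAlmostSubSTS Bl (Y ∪ D) C1 D := by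
  classical
  refine ⟨Bl.filter (fun b => b ⊆ Y ∪ D ∧ b ≠ D), Finset.filter_subset _ _, ?_, ?_, ?_⟩
  · intro h
    exact (Finset.mem_filter.mp h).2.2 rfl
  · intro b hb
    rcases Finset.mem_insert.mp hb with rfl | hb
    · exact ⟨Finset.subset_union_right, hD3⟩
    · rw [Finset.mem_filter] at hb
      exact ⟨hb.2.1, (hSTS.1 b hb.1).2⟩
  · intro p hp q hq hpq
    by_cases hPD : p ∈ D ∧ q ∈ D
    · refine ⟨D, ⟨Finset.mem_insert_self _ _, hPD.1, hPD.2⟩, ?_⟩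
      rintro b' ⟨hb', hpb', hqb'⟩
      rcases Finset.mem_insert.mp hb' with h | h
      · exact h
      · rw [Finset.mem_filter] at h
        exact nod b' h.1 h.2.1 p q hpb' hqb' hpq hPD.1 hPD.2
    · have exB : ∃ b ∈ Bl, p ∈ b ∧ q ∈ b ∧ b ⊆ Y ∪ D := by
        rcases not_and_or.mp hPD with h | h
        · have hpY : p ∈ Y := (mem_union.mp hp).resolve_right h
          obtain ⟨b, ⟨hb, hpb, hqb⟩, -⟩ := hSTS.2 p (hYDS hp) q (hYDS hq) hpq
          exact ⟨b, hb, hpb, hqb, iY b hb p q hpb hqb hpq hpY hq⟩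
        · have hqY : q ∈ Y := (mem_union.mp hq).resolve_right h
          obtain ⟨b, ⟨hb, hpb, hqb⟩, -⟩ := hSTS.2 p (hYDS hp) q (hYDS hq) hpq
          exact ⟨b, hb, hpb, hqb, iY b hb q p hqb hpb hpq.symm hqY hp⟩
      obtain ⟨b, hb, hpb, hqb, hsub⟩ := exB
      have hbne : b ≠ D := by
        rintro rfl
        rcases not_and_or.mp hPD with h | h
        exacts [h hpb, h hqb]
      refine ⟨b, ⟨Finset.mem_insert_of_mem (Finset.mem_filter.mpr ⟨hb, hsub, hbne⟩), hpb, hqb⟩, ?_⟩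
      rintro b' ⟨hb', hpb', hqb'⟩
      rcases Finset.mem_insert.mp hb' with rfl | h
      · exfalso
        rcases not_and_or.mp hPD with h | h
        exacts [h hpb', h hqb']
      · exact (hSTS.2 p (hYDS hp) q (hYDS hq) hpq).unique
          ⟨(Finset.mem_filter.mp h).1, hpb', hqb'⟩ ⟨hb, hpb, hqb⟩

lemma parity_even {S : Finset α} {Bl : Finset (Finset α)} {X D : Finset α} {d : α}
    (hSTS : IsSTS S Bl) (iX : STSInside Bl X D) (hd : d ∈ D) (hDS : D ⊆ S)
    (hXS : X ⊆ S) (hXD : Disjoint X D) (hX6 : X.card = 6) :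
    Even ((Bl.filter (fun b => d ∈ b ∧ b ⊆ X ∪ D ∧ (b ∩ X).card = 1)).card) := by
  classical
  have hdX : d ∉ X := disjoint_right.mp hXD hd
  set F := Bl.filter (fun b => d ∈ b ∧ (b ∩ X).Nonempty) with hF
  have hFmem : ∀ b, b ∈ F ↔ b ∈ Bl ∧ d ∈ b ∧ (b ∩ X).Nonempty := by
    intro b; rw [hF, Finset.mem_filter]
  have hFsub : ∀ b ∈ F, b ⊆ X ∪ D := by
    intro b hb
    obtain ⟨hbBl, hdb, a, ha⟩ := (hFmem b).mp hb
    have haX := (mem_inter.mp ha).2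
    have hab := (mem_inter.mp ha).1
    have hne' : a ≠ d := fun h => hdX (h ▸ haX)
    exact iX b hbBl a d hab hdb hne' haX (mem_union_right _ hd)
  have hcover : X = F.biUnion (· ∩ X) := by
    ext a
    simp only [Finset.mem_biUnion]
    constructor
    · intro haX
      have hne : d ≠ a := fun h => hdX (h ▸ haX)
      obtain ⟨b, ⟨hb, hdb, hab⟩, -⟩ := hSTS.2 d (hDS hd) a (hXS haX) hne
      exact ⟨b, (hFmem b).mpr ⟨hb, hdb, a, mem_inter.mpr ⟨hab, haX⟩⟩, mem_inter.mpr ⟨hab, haX⟩⟩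
    · rintro ⟨b, -, hab⟩
      exact (mem_inter.mp hab).2
  have hdisj : ∀ x ∈ F, ∀ y ∈ F, x ≠ y → Disjoint (x ∩ X) (y ∩ X) := by
    intro x hx y hy hxy
    obtain ⟨hx1, hx2, -⟩ := (hFmem x).mp hx
    obtain ⟨hy1, hy2, -⟩ := (hFmem y).mp hy
    refine Finset.disjoint_left.mpr fun a hax hay => hxy ?_
    have haX := (mem_inter.mp hax).2
    have hne : d ≠ a := fun h => hdX (h ▸ haX)
    exact (hSTS.2 d (hDS hd) a (hXS haX) hne).unique ⟨hx1, hx2, (mem_inter.mp hax).1⟩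
      ⟨hy1, hy2, (mem_inter.mp hay).1⟩
  have hsum : ∑ b ∈ F, (b ∩ X).card = 6 := by
    rw [← Finset.card_biUnion hdisj, ← hcover, hX6]
  have hbound : ∀ b ∈ F, (b ∩ X).card = 1 ∨ (b ∩ X).card = 2 := by
    intro b hb
    obtain ⟨hbBl, hdb, hne⟩ := (hFmem b).mp hb
    have hsub' : b ∩ X ⊆ b.erase d := by
      intro a ha
      rw [Finset.mem_erase]
      exact ⟨fun h => hdX (h ▸ (mem_inter.mp ha).2), (mem_inter.mp ha).1⟩
    have h2 : (b ∩ X).card ≤ 2 := by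
      have hc := Finset.card_le_card hsub'
      rw [Finset.card_erase_of_mem hdb, (hSTS.1 b hbBl).2] at hc
      omega
    have h1 : 1 ≤ (b ∩ X).card := Finset.card_pos.mpr hne
    omega
  have hsplit := Finset.sum_filter_add_sum_filter_not F (fun b => (b ∩ X).card = 1)
    (fun b => (b ∩ X).card)
  have h1sum : ∑ b ∈ F.filter (fun b => (b ∩ X).card = 1), (b ∩ X).card
      = (F.filter (fun b => (b ∩ X).card = 1)).card := by
    rw [Finset.card_eq_sum_ones]
    exact Finset.sum_congr rfl fun b hb => (Finset.mem_filter.mp hb).2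
  have h2sum : ∑ b ∈ F.filter (fun b => ¬(b ∩ X).card = 1), (b ∩ X).card
      = 2 * (F.filter (fun b => ¬(b ∩ X).card = 1)).card := by
    have hall : ∀ b ∈ F.filter (fun b => ¬(b ∩ X).card = 1), (b ∩ X).card = 2 := by
      intro b hb
      have hb' := Finset.mem_filter.mp hb
      have := hbound b hb'.1
      omega
    rw [Finset.sum_congr rfl hall, Finset.sum_const, smul_eq_mul, Nat.mul_comm]
  have hset : Bl.filter (fun b => d ∈ b ∧ b ⊆ X ∪ D ∧ (b ∩ X).card = 1)
      = F.filter (fun b => (b ∩ X).card = 1) := by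
    ext b
    simp only [Finset.mem_filter, hFmem]
    constructor
    · rintro ⟨hb, hdb, hsub, hc1⟩
      exact ⟨⟨hb, hdb, Finset.card_pos.mp (by omega)⟩, hc1⟩
    · rintro ⟨⟨hb, hdb, hne⟩, hc1⟩
      exact ⟨hb, hdb, hFsub b ((hFmem b).mpr ⟨hb, hdb, hne⟩), hc1⟩
  rw [hset, Nat.even_iff]
  omega

lemma no_split {S : Finset α} {Bl : Finset (Finset α)} {X Y D : Finset α}
    {d e f r s : α} {bde bdf : Finset α}
    (hSTS : IsSTS S Bl)
    (iX : STSInside Bl X D) (hX6 : X.card = 6) (hDS : D ⊆ S) (hXS : X ⊆ S)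
    (hXY : Disjoint X Y) (hXD : Disjoint X D) (hYD : Disjoint Y D)
    (hd : d ∈ D) (he : e ∈ D) (hf : f ∈ D) (hde : d ≠ e) (hdf : d ≠ f)
    (hDelems : ∀ x ∈ D, x = d ∨ x = e ∨ x = f)
    (hbde : bde ∈ Bl) (hdbde : d ∈ bde) (hebde : e ∈ bde) (hrbde : r ∈ bde) (hrX : r ∈ X)
    (hbdf : bdf ∈ Bl) (hdbdf : d ∈ bdf) (hfbdf : f ∈ bdf) (hsbdf : s ∈ bdf) (hsY : s ∈ Y) :
    False := by
  classical
  have hpar := parity_even hSTS iX hd hDS hXS hXD hX6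
  have hrd : r ≠ d := fun h => disjoint_left.mp hXD hrX (by rw [h]; exact hd)
  have hre : r ≠ e := fun h => disjoint_left.mp hXD hrX (by rw [h]; exact he)
  have hcard := (hSTS.1 bde hbde).2
  have hbdeq : bde = {d, e, r} := by
    have hsub : ({d, e, r} : Finset α) ⊆ bde := by
      intro x hx
      simp only [Finset.mem_insert, Finset.mem_singleton] at hx
      rcases hx with rfl | rfl | rfl <;> assumption
    have hc : ({d, e, r} : Finset α).card = 3 := by
      rw [Finset.card_insert_of_notMem (by simp [hde, hrd.symm]),
        Finset.card_insert_of_notMem (by simp [hre.symm]),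
        Finset.card_singleton]
    exact (Finset.eq_of_subset_of_card_le hsub (by omega)).symm
  have hmemf : bde ∈ Bl.filter (fun b => d ∈ b ∧ b ⊆ X ∪ D ∧ (b ∩ X).card = 1) := by
    rw [Finset.mem_filter]
    refine ⟨hbde, hdbde, ?_, ?_⟩
    · rw [hbdeq]
      intro x hx
      simp only [Finset.mem_insert, Finset.mem_singleton] at hx
      rcases hx with rfl | rfl | rfl
      exacts [mem_union_right _ hd, mem_union_right _ he, mem_union_left _ hrX]
    · have hiX : bde ∩ X = {r} := by
        ext x
        simp only [Finset.mem_inter, Finset.mem_singleton]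
        constructor
        · rintro ⟨hxb, hxX⟩
          rw [hbdeq] at hxb
          simp only [Finset.mem_insert, Finset.mem_singleton] at hxb
          rcases hxb with rfl | rfl | rfl
          exacts [absurd hd (disjoint_left.mp hXD hxX), absurd he (disjoint_left.mp hXD hxX),
            rfl]
        · rintro rfl
          exact ⟨hrbde, hrX⟩
      rw [hiX, Finset.card_singleton]
  have hsingle : Bl.filter (fun b => d ∈ b ∧ b ⊆ X ∪ D ∧ (b ∩ X).card = 1) = {bde} := by
    ext b
    rw [Finset.mem_singleton]
    constructor
    · intro hbf
      rw [Finset.mem_filter] at hbf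
      obtain ⟨hb, hdb, hbsub, h1⟩ := hbf
      have hbeq : b = (b ∩ X) ∪ (b ∩ D) := by
        ext x
        simp only [Finset.mem_union, Finset.mem_inter]
        constructor
        · intro hx
          rcases mem_union.mp (hbsub hx) with h | h
          exacts [Or.inl ⟨hx, h⟩, Or.inr ⟨hx, h⟩]
        · rintro (⟨h, -⟩ | ⟨h, -⟩) <;> exact h
      have hdisj' : Disjoint (b ∩ X) (b ∩ D) := hXD.mono inter_subset_right inter_subset_right
      have hcb := (hSTS.1 b hb).2
      have hcD : (b ∩ D).card = 2 := by
        have hu := Finset.card_union_of_disjoint hdisj'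
        rw [← hbeq] at hu
        omega
      obtain ⟨d', hd'bD, hd'ne⟩ :=
        Finset.exists_mem_ne (show 1 < (b ∩ D).card by omega) d
      have hd'b := (mem_inter.mp hd'bD).1
      have hd'D := (mem_inter.mp hd'bD).2
      rcases hDelems d' hd'D with rfl | rfl | rfl
      · exact absurd rfl hd'ne
      · exact (hSTS.2 d (hDS hd) d' (hDS hd'D) hde).unique ⟨hb, hdb, hd'b⟩ ⟨hbde, hdbde, hebde⟩
      · exfalso
        have hbbdf : b = bdf :=
          (hSTS.2 d (hDS hd) d' (hDS hd'D) hdf).unique ⟨hb, hdb, hd'b⟩ ⟨hbdf, hdbdf, hfbdf⟩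
        have hsXD : s ∈ X ∪ D := hbsub (hbbdf ▸ hsbdf)
        rcases mem_union.mp hsXD with h | h
        exacts [disjoint_left.mp hXY h hsY, disjoint_left.mp hYD hsY h]
    · rintro rfl
      exact hmemf
  rw [hsingle, Finset.card_singleton] at hpar
  exact (Nat.not_even_iff_odd.mpr odd_one) hpar

lemma triple_subset {b : Finset α} {d e r : α} (hc : b.card = 3)
    (hd : d ∈ b) (he : e ∈ b) (hr : r ∈ b) (hde : d ≠ e) (hdr : d ≠ r) (her : e ≠ r)
    {U : Finset α} (h1 : d ∈ U) (h2 : e ∈ U) (h3 : r ∈ U) : b ⊆ U := by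
  have hsub : ({d, e, r} : Finset α) ⊆ b := by
    intro x hx
    simp only [Finset.mem_insert, Finset.mem_singleton] at hx
    rcases hx with rfl | rfl | rfl <;> assumption
  have hc' : ({d, e, r} : Finset α).card = 3 := by
    rw [Finset.card_insert_of_notMem (by simp [hde, hdr]),
      Finset.card_insert_of_notMem (by simp [her]), Finset.card_singleton]
  have hbeq : b = {d, e, r} := (Finset.eq_of_subset_of_card_le hsub (by omega)).symm
  rw [hbeq]
  intro x hx
  simp only [Finset.mem_insert, Finset.mem_singleton] at hx
  rcases hx with rfl | rfl | rfl <;> assumption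

lemma build_petals {S : Finset α} {Bl : Finset (Finset α)} {X Y Z D : Finset α}
    (hSTS : IsSTS S Bl)
    (hXDS : X ∪ D ⊆ S) (hYDS : Y ∪ D ⊆ S) (hZDS : Z ∪ D ⊆ S) (hDS : D ⊆ S) (hD3 : D.card = 3)
    (hXY : Disjoint X Y) (hXZ : Disjoint X Z) (hXD : Disjoint X D)
    (hYD : Disjoint Y D) (hZD : Disjoint Z D)
    (iX : STSInside Bl X D) (iY : STSInside Bl Y D) (iZ : STSInside Bl Z D)
    {d1 d2 d3 r12 r13 r23 : α} {b12 b13 b23 : Finset α}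
    (hd1 : d1 ∈ D) (hd2 : d2 ∈ D) (hd3 : d3 ∈ D)
    (h12 : d1 ≠ d2) (h13 : d1 ≠ d3) (h23 : d2 ≠ d3)
    (hDelems : ∀ x ∈ D, x = d1 ∨ x = d2 ∨ x = d3)
    (hb12 : b12 ∈ Bl) (h1b12 : d1 ∈ b12) (h2b12 : d2 ∈ b12) (hr12 : r12 ∈ b12) (hr12X : r12 ∈ X)
    (hb13 : b13 ∈ Bl) (h1b13 : d1 ∈ b13) (h3b13 : d3 ∈ b13) (hr13 : r13 ∈ b13) (hr13X : r13 ∈ X)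
    (hb23 : b23 ∈ Bl) (h2b23 : d2 ∈ b23) (h3b23 : d3 ∈ b23) (hr23 : r23 ∈ b23) (hr23X : r23 ∈ X) :
    FlowerPetals Bl D X Y Z := by
  have hdr : ∀ {d r : α}, d ∈ D → r ∈ X → d ≠ r := by
    rintro d r hd hr rfl
    exact disjoint_left.mp hXD hr hd
  have hs12 : b12 ⊆ X ∪ D :=
    triple_subset (hSTS.1 b12 hb12).2 h1b12 h2b12 hr12 h12 (hdr hd1 hr12X) (hdr hd2 hr12X)
      (mem_union_right _ hd1) (mem_union_right _ hd2) (mem_union_left _ hr12X)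
  have hs13 : b13 ⊆ X ∪ D :=
    triple_subset (hSTS.1 b13 hb13).2 h1b13 h3b13 hr13 h13 (hdr hd1 hr13X) (hdr hd3 hr13X)
      (mem_union_right _ hd1) (mem_union_right _ hd3) (mem_union_left _ hr13X)
  have hs23 : b23 ⊆ X ∪ D :=
    triple_subset (hSTS.1 b23 hb23).2 h2b23 h3b23 hr23 h23 (hdr hd2 hr23X) (hdr hd3 hr23X)
      (mem_union_right _ hd2) (mem_union_right _ hd3) (mem_union_left _ hr23X)
  have hpair : ∀ b ∈ Bl, ∀ p q : α, p ∈ D → q ∈ D → p ≠ q → p ∈ b → q ∈ b →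
      b = b12 ∨ b = b13 ∨ b = b23 := by
    intro b hb p q hpD hqD hpq hpb hqb
    rcases hDelems p hpD with rfl | rfl | rfl <;> rcases hDelems q hqD with rfl | rfl | rfl
    · exact absurd rfl hpq
    · exact Or.inl ((hSTS.2 p (hDS hpD) q (hDS hqD) hpq).unique ⟨hb, hpb, hqb⟩
        ⟨hb12, h1b12, h2b12⟩)
    · exact Or.inr (Or.inl ((hSTS.2 p (hDS hpD) q (hDS hqD) hpq).unique ⟨hb, hpb, hqb⟩
        ⟨hb13, h1b13, h3b13⟩))
    · exact Or.inl ((hSTS.2 q (hDS hqD) p (hDS hpD) hpq.symm).unique ⟨hb, hqb, hpb⟩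
        ⟨hb12, h1b12, h2b12⟩)
    · exact absurd rfl hpq
    · exact Or.inr (Or.inr ((hSTS.2 p (hDS hpD) q (hDS hqD) hpq).unique ⟨hb, hpb, hqb⟩
        ⟨hb23, h2b23, h3b23⟩))
    · exact Or.inr (Or.inl ((hSTS.2 q (hDS hqD) p (hDS hpD) hpq.symm).unique ⟨hb, hqb, hpb⟩
        ⟨hb13, h1b13, h3b13⟩))
    · exact Or.inr (Or.inr ((hSTS.2 q (hDS hqD) p (hDS hpD) hpq.symm).unique ⟨hb, hqb, hpb⟩
        ⟨hb23, h2b23, h3b23⟩))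
    · exact absurd rfl hpq
  have dcov : ∀ p q : α, p ∈ D → q ∈ D → p ≠ q → ∃ b ∈ Bl, p ∈ b ∧ q ∈ b ∧ b ⊆ X ∪ D := by
    intro p q hp hq hpq
    obtain ⟨b, ⟨hb, hpb, hqb⟩, -⟩ := hSTS.2 p (hDS hp) q (hDS hq) hpq
    refine ⟨b, hb, hpb, hqb, ?_⟩
    rcases hpair b hb p q hp hq hpq hpb hqb with rfl | rfl | rfl
    exacts [hs12, hs13, hs23]
  have nod : ∀ (W : Finset α), Disjoint X W → ∀ b ∈ Bl, b ⊆ W ∪ D → ∀ p q : α,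
      p ∈ b → q ∈ b → p ≠ q → p ∈ D → q ∈ D → b = D := by
    intro W hXW b hb hbsub p q hpb hqb hpq hpD hqD
    exfalso
    have hrbW : ∀ {r : α}, r ∈ X → r ∈ b → False := by
      intro r hrX hrb
      rcases mem_union.mp (hbsub hrb) with h | h
      exacts [disjoint_left.mp hXW hrX h, disjoint_left.mp hXD hrX h]
    rcases hpair b hb p q hpD hqD hpq hpb hqb with rfl | rfl | rfl
    exacts [hrbW hr12X hr12, hrbW hr13X hr13, hrbW hr23X hr23]
  exact ⟨full_sub hSTS hXDS iX dcov,
    almost_sub hSTS hYDS hYD hD3 iY (nod Y hXY),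
    almost_sub hSTS hZDS hZD hD3 iZ (nod Z hXZ)⟩

theorem flower_iff_subTD (S : Finset α) (Bl : Finset (Finset α)) (A B C D : Finset α)
    (hSTS : IsSTS S Bl) (hS21 : S.card = 21)
    (hS : A ∪ B ∪ C ∪ D = S)
    (hA : A.card = 6) (hB : B.card = 6) (hC : C.card = 6) (hD : D.card = 3)
    (hAB : Disjoint A B) (hAC : Disjoint A C) (hAD : Disjoint A D)
    (hBC : Disjoint B C) (hBD : Disjoint B D) (hCD : Disjoint C D) :
    IsFlower S Bl A B C D ↔ ∃ T, T ⊆ Bl ∧ IsTD3 A B C T := by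
  have hAS : A ⊆ S := by rw [← hS]; intro x hx; simp [hx]
  have hBS : B ⊆ S := by rw [← hS]; intro x hx; simp [hx]
  have hCS : C ⊆ S := by rw [← hS]; intro x hx; simp [hx]
  have hDS' : D ⊆ S := by rw [← hS]; intro x hx; simp [hx]
  have hADS : A ∪ D ⊆ S := by
    intro x hx; rcases mem_union.mp hx with h | h; exacts [hAS h, hDS' h]
  have hBDS : B ∪ D ⊆ S := by
    intro x hx; rcases mem_union.mp hx with h | h; exacts [hBS h, hDS' h]
  have hCDS : C ∪ D ⊆ S := by
    intro x hx; rcases mem_union.mp hx with h | h; exacts [hCS h, hDS' h]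
  have hmem : ∀ b ∈ Bl, ∀ x ∈ b, x ∈ A ∨ x ∈ B ∨ x ∈ C ∨ x ∈ D := by
    intro b hb x hx
    have hxS : x ∈ S := (hSTS.1 b hb).1 hx
    rw [← hS] at hxS
    simpa [Finset.mem_union, or_assoc] using hxS
  constructor
  · rintro ⟨-, -, -, -, -, -, -, -, -, -, -, hPet⟩
    rcases hPet with h | h | h
    · obtain ⟨⟨C0, hC0s, hC0⟩, ⟨C1, h1⟩, ⟨C2, h2⟩⟩ := h
      exact exists_TD hSTS hS hAB hAC hAD hBC hBD hCD
        (inside_of_full hSTS hADS hC0s hC0)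
        (inside_of_almost hSTS hBDS hBD h1)
        (inside_of_almost hSTS hCDS hCD h2)
    · obtain ⟨⟨C0, hC0s, hC0⟩, ⟨C1, h1⟩, ⟨C2, h2⟩⟩ := h
      exact exists_TD hSTS hS hAB hAC hAD hBC hBD hCD
        (inside_of_almost hSTS hADS hAD h1)
        (inside_of_full hSTS hBDS hC0s hC0)
        (inside_of_almost hSTS hCDS hCD h2)
    · obtain ⟨⟨C0, hC0s, hC0⟩, ⟨C1, h1⟩, ⟨C2, h2⟩⟩ := h
      exact exists_TD hSTS hS hAB hAC hAD hBC hBD hCD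
        (inside_of_almost hSTS hADS hAD h1)
        (inside_of_almost hSTS hBDS hBD h2)
        (inside_of_full hSTS hCDS hC0s hC0)
  · rintro ⟨T, hTsub, hTD⟩
    refine ⟨hS, hA, hB, hC, hD, hAB, hAC, hAD, hBC, hBD, hCD, ?_⟩
    have hBCS : B ∪ C ⊆ S := by
      intro x hx; rcases mem_union.mp hx with h | h; exacts [hBS h, hCS h]
    have hACS : A ∪ C ⊆ S := by
      intro x hx; rcases mem_union.mp hx with h | h; exacts [hAS h, hCS h]
    have hABS : A ∪ B ⊆ S := by
      intro x hx; rcases mem_union.mp hx with h | h; exacts [hAS h, hBS h]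
    have iA : STSInside Bl A D := by
      refine inside_of_TD hSTS hTsub (fun b hb => ⟨?_, (hTD.1 b hb).2.1⟩) ?_ hmem hAS hBCS
        hAB hAC hAD hBD hCD
      · intro x hx
        have := (hTD.1 b hb).1 hx
        simp only [Finset.mem_union] at this
        tauto
      · intro p r hp hr
        rcases mem_union.mp hr with h | h
        · obtain ⟨b, ⟨hbT, hpb, hrb⟩, -⟩ := hTD.2 p r (Or.inl ⟨hp, h⟩)
          exact ⟨b, hbT, hpb, hrb⟩
        · obtain ⟨b, ⟨hbT, hpb, hrb⟩, -⟩ := hTD.2 p r (Or.inr (Or.inl ⟨hp, h⟩))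
          exact ⟨b, hbT, hpb, hrb⟩
    have iB : STSInside Bl B D := by
      refine inside_of_TD hSTS hTsub (fun b hb => ⟨?_, (hTD.1 b hb).2.2.1⟩) ?_
        (fun b hb x hx => by have := hmem b hb x hx; tauto) hBS hACS
        hAB.symm hBC hBD hAD hCD
      · intro x hx
        have := (hTD.1 b hb).1 hx
        simp only [Finset.mem_union] at this
        tauto
      · intro p r hp hr
        rcases mem_union.mp hr with h | h
        · obtain ⟨b, ⟨hbT, hrb, hpb⟩, -⟩ := hTD.2 r p (Or.inl ⟨h, hp⟩)
          exact ⟨b, hbT, hpb, hrb⟩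
        · obtain ⟨b, ⟨hbT, hpb, hrb⟩, -⟩ := hTD.2 p r (Or.inr (Or.inr ⟨hp, h⟩))
          exact ⟨b, hbT, hpb, hrb⟩
    have iC : STSInside Bl C D := by
      refine inside_of_TD hSTS hTsub (fun b hb => ⟨?_, (hTD.1 b hb).2.2.2⟩) ?_
        (fun b hb x hx => by have := hmem b hb x hx; tauto) hCS hABS
        hAC.symm hBC.symm hCD hAD hBD
      · intro x hx
        have := (hTD.1 b hb).1 hx
        simp only [Finset.mem_union] at this
        tauto
      · intro p r hp hr
        rcases mem_union.mp hr with h | h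
        · obtain ⟨b, ⟨hbT, hrb, hpb⟩, -⟩ := hTD.2 r p (Or.inr (Or.inl ⟨h, hp⟩))
          exact ⟨b, hbT, hpb, hrb⟩
        · obtain ⟨b, ⟨hbT, hrb, hpb⟩, -⟩ := hTD.2 r p (Or.inr (Or.inr ⟨h, hp⟩))
          exact ⟨b, hbT, hpb, hrb⟩
    by_cases hDBl : D ∈ Bl
    · have nodD : ∀ b ∈ Bl, ∀ p q : α, p ∈ b → q ∈ b → p ≠ q → p ∈ D → q ∈ D → b = D :=
        fun b hb p q hpb hqb hpq hpD hqD =>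
          (hSTS.2 p (hDS' hpD) q (hDS' hqD) hpq).unique ⟨hb, hpb, hqb⟩ ⟨hDBl, hpD, hqD⟩
      exact Or.inl ⟨full_sub hSTS hADS iA
          (fun p q hp hq hpq => ⟨D, hDBl, hp, hq, Finset.subset_union_right⟩),
        almost_sub hSTS hBDS hBD hD iB (fun b hb _ => nodD b hb),
        almost_sub hSTS hCDS hCD hD iC (fun b hb _ => nodD b hb)⟩
    · obtain ⟨d1, d2, d3, h12, h13, h23, hDeq⟩ := Finset.card_eq_three.mp hD
      have hd1 : d1 ∈ D := by rw [hDeq]; simp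
      have hd2 : d2 ∈ D := by rw [hDeq]; simp
      have hd3 : d3 ∈ D := by rw [hDeq]; simp
      have hDelems : ∀ x ∈ D, x = d1 ∨ x = d2 ∨ x = d3 := by
        intro x hx; rw [hDeq] at hx; simpa using hx
      have hDelems21 : ∀ x ∈ D, x = d2 ∨ x = d1 ∨ x = d3 := by
        intro x hx; rcases hDelems x hx with h | h | h <;> tauto
      obtain ⟨b12, ⟨hb12, h1b12, h2b12⟩, -⟩ := hSTS.2 d1 (hDS' hd1) d2 (hDS' hd2) h12
      obtain ⟨b13, ⟨hb13, h1b13, h3b13⟩, -⟩ := hSTS.2 d1 (hDS' hd1) d3 (hDS' hd3) h13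
      obtain ⟨b23, ⟨hb23, h2b23, h3b23⟩, -⟩ := hSTS.2 d2 (hDS' hd2) d3 (hDS' hd3) h23
      have hthird : ∀ b ∈ Bl, ∃ r ∈ b, r ∉ D := by
        intro b hb
        by_contra hcon
        push_neg at hcon
        have hsub : b ⊆ D := hcon
        have hbD : b = D :=
          Finset.eq_of_subset_of_card_le hsub (by rw [(hSTS.1 b hb).2, hD])
        exact hDBl (hbD ▸ hb)
      obtain ⟨r12, hr12b, hr12D⟩ := hthird b12 hb12
      obtain ⟨r13, hr13b, hr13D⟩ := hthird b13 hb13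
      obtain ⟨r23, hr23b, hr23D⟩ := hthird b23 hb23
      have hpet : ∀ {b : Finset α} {x : α}, b ∈ Bl → x ∈ b → x ∉ D →
          x ∈ A ∨ x ∈ B ∨ x ∈ C := by
        intro b x hb hx hxD
        rcases hmem b hb x hx with h | h | h | h <;> tauto
      have hr12P := hpet hb12 hr12b hr12D
      have hr13P := hpet hb13 hr13b hr13D
      have hr23P := hpet hb23 hr23b hr23D
      have ns : ∀ (X Y : Finset α), STSInside Bl X D → X.card = 6 → X ⊆ S → Disjoint X Y →
          Disjoint X D → Disjoint Y D → ∀ (d e f : α), d ∈ D → e ∈ D → f ∈ D → d ≠ e → d ≠ f →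
          (∀ x ∈ D, x = d ∨ x = e ∨ x = f) → ∀ (bde bdf : Finset α) (r s : α),
          bde ∈ Bl → d ∈ bde → e ∈ bde → r ∈ bde → r ∈ X →
          bdf ∈ Bl → d ∈ bdf → f ∈ bdf → s ∈ bdf → s ∈ Y → False :=
        fun X Y iX h6 hXS' hXY' hXD' hYD' d e f hd he hf hde hdf hDe bde bdf r s a1 a2 a3 a4
            a5 a6 a7 a8 a9 a10 =>
          no_split hSTS iX h6 hDS' hXS' hXY' hXD' hYD' hd he hf hde hdf hDe
            a1 a2 a3 a4 a5 a6 a7 a8 a9 a10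
      rcases hr12P with h12P | h12P | h12P
      · -- petal A
        have h13A : r13 ∈ A := by
          rcases hr13P with h | h | h
          · exact h
          · exact (ns A B iA hA hAS hAB hAD hBD d1 d2 d3 hd1 hd2 hd3 h12 h13 hDelems
              b12 b13 r12 r13 hb12 h1b12 h2b12 hr12b h12P hb13 h1b13 h3b13 hr13b h).elim
          · exact (ns A C iA hA hAS hAC hAD hCD d1 d2 d3 hd1 hd2 hd3 h12 h13 hDelems
              b12 b13 r12 r13 hb12 h1b12 h2b12 hr12b h12P hb13 h1b13 h3b13 hr13b h).elim
        have h23A : r23 ∈ A := by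
          rcases hr23P with h | h | h
          · exact h
          · exact (ns A B iA hA hAS hAB hAD hBD d2 d1 d3 hd2 hd1 hd3 h12.symm h23 hDelems21
              b12 b23 r12 r23 hb12 h2b12 h1b12 hr12b h12P hb23 h2b23 h3b23 hr23b h).elim
          · exact (ns A C iA hA hAS hAC hAD hCD d2 d1 d3 hd2 hd1 hd3 h12.symm h23 hDelems21
              b12 b23 r12 r23 hb12 h2b12 h1b12 hr12b h12P hb23 h2b23 h3b23 hr23b h).elim
        exact Or.inl (build_petals hSTS hADS hBDS hCDS hDS' hD hAB hAC hAD hBD hCD iA iB iC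
          hd1 hd2 hd3 h12 h13 h23 hDelems hb12 h1b12 h2b12 hr12b h12P
          hb13 h1b13 h3b13 hr13b h13A hb23 h2b23 h3b23 hr23b h23A)
      · -- petal B
        have h13B : r13 ∈ B := by
          rcases hr13P with h | h | h
          · exact (ns B A iB hB hBS hAB.symm hBD hAD d1 d2 d3 hd1 hd2 hd3 h12 h13 hDelems
              b12 b13 r12 r13 hb12 h1b12 h2b12 hr12b h12P hb13 h1b13 h3b13 hr13b h).elim
          · exact h
          · exact (ns B C iB hB hBS hBC hBD hCD d1 d2 d3 hd1 hd2 hd3 h12 h13 hDelems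
              b12 b13 r12 r13 hb12 h1b12 h2b12 hr12b h12P hb13 h1b13 h3b13 hr13b h).elim
        have h23B : r23 ∈ B := by
          rcases hr23P with h | h | h
          · exact (ns B A iB hB hBS hAB.symm hBD hAD d2 d1 d3 hd2 hd1 hd3 h12.symm h23 hDelems21
              b12 b23 r12 r23 hb12 h2b12 h1b12 hr12b h12P hb23 h2b23 h3b23 hr23b h).elim
          · exact h
          · exact (ns B C iB hB hBS hBC hBD hCD d2 d1 d3 hd2 hd1 hd3 h12.symm h23 hDelems21
              b12 b23 r12 r23 hb12 h2b12 h1b12 hr12b h12P hb23 h2b23 h3b23 hr23b h).elim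
        exact Or.inr (Or.inl (build_petals hSTS hBDS hADS hCDS hDS' hD hAB.symm hBC hBD hAD hCD
          iB iA iC hd1 hd2 hd3 h12 h13 h23 hDelems hb12 h1b12 h2b12 hr12b h12P
          hb13 h1b13 h3b13 hr13b h13B hb23 h2b23 h3b23 hr23b h23B))
      · -- petal C
        have h13C : r13 ∈ C := by
          rcases hr13P with h | h | h
          · exact (ns C A iC hC hCS hAC.symm hCD hAD d1 d2 d3 hd1 hd2 hd3 h12 h13 hDelems
              b12 b13 r12 r13 hb12 h1b12 h2b12 hr12b h12P hb13 h1b13 h3b13 hr13b h).elim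
          · exact (ns C B iC hC hCS hBC.symm hCD hBD d1 d2 d3 hd1 hd2 hd3 h12 h13 hDelems
              b12 b13 r12 r13 hb12 h1b12 h2b12 hr12b h12P hb13 h1b13 h3b13 hr13b h).elim
          · exact h
        have h23C : r23 ∈ C := by
          rcases hr23P with h | h | h
          · exact (ns C A iC hC hCS hAC.symm hCD hAD d2 d1 d3 hd2 hd1 hd3 h12.symm h23 hDelems21
              b12 b23 r12 r23 hb12 h2b12 h1b12 hr12b h12P hb23 h2b23 h3b23 hr23b h).elim
          · exact (ns C B iC hC hCS hBC.symm hCD hBD d2 d1 d3 hd2 hd1 hd3 h12.symm h23 hDelems21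
              b12 b23 r12 r23 hb12 h2b12 h1b12 hr12b h12P hb23 h2b23 h3b23 hr23b h).elim
          · exact h
        exact Or.inr (Or.inr (build_petals hSTS hCDS hADS hBDS hDS' hD hAC.symm hBC.symm hCD
          hAD hBD iC iA iB hd1 hd2 hd3 h12 h13 h23 hDelems hb12 h1b12 h2b12 hr12b h12P
          hb13 h1b13 h3b13 hr13b h13C hb23 h2b23 h3b23 hr23b h23C))
end
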